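/- arXiv:1701.01280 — 6 statements merged into one kernel-verified Lean document; each statement's English description precedes it below -/
import Mathlib

section
/- For every real p ≥ 2 and all real numbers a, b, the inequality |a−b|^p ≥ |a|^p − p|a|^{p−2}ab + c_p|b|^p holds, where c_p = min_{0<t≤1/2} ((1−t)^p − t^p + p t^{p−1}) > 0. -/
/-!
By homogeneity it suffices to take `b = 1`, i.e. to bound the defect
`|x - 1| ^ p - |x| ^ p + p * sign x * |x| ^ (p - 1)` from below by `c_p` for every real `x`.
On `(0, 1)` the defect is `cpFun p x`, and `cpFun p t ≤ cpFun p (1 - t)` for `t ≤ 1 / 2`, so its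
infimum over `(0, 1)` is attained on `(0, 1 / 2]`. Outside `(0, 1)` the defect is at least
`1 ≥ cpFun p (1 / 2) ≥ c_p`: these are two Taylor-type bounds for `u ^ p` obtained by integrating
the superadditivity of `u ↦ u ^ (p - 1)` over a unit interval.
-/

open Real Set intervalIntegral

namespace Real

theorem sign_mul (x y : ℝ) : Real.sign (x * y) = Real.sign x * Real.sign y := by
  rcases lt_trichotomy x 0 with hx | hx | hx <;> rcases lt_trichotomy y 0 with hy | hy | hy <;>
    simp [sign_of_neg, sign_of_pos, hx, hy, mul_pos_of_neg_of_neg, mul_neg_of_neg_of_pos,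
      mul_neg_of_pos_of_neg]

theorem sign_mul_self (x : ℝ) : Real.sign x * x = |x| := by
  rcases lt_trichotomy x 0 with hx | rfl | hx
  · rw [sign_of_neg hx, abs_of_neg hx, neg_one_mul]
  · simp
  · rw [sign_of_pos hx, abs_of_pos hx, one_mul]

theorem rpow_eq_rpow_sub_one_mul {x : ℝ} (hx : x ≠ 0) (p : ℝ) : x ^ p = x ^ (p - 1) * x := by
  rw [← rpow_add_one hx, sub_add_cancel]

end Real

theorem integral_rpow_sub_one {p : ℝ} (hp : 0 < p) (a b : ℝ) :
    ∫ u in a..b, u ^ (p - 1) = (b ^ p - a ^ p) / p := by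
  rw [integral_rpow (Or.inl (by linarith)), sub_add_cancel]

theorem integral_zero_one_rpow_sub_one {p : ℝ} (hp : 0 < p) :
    ∫ u in (0 : ℝ)..1, u ^ (p - 1) = 1 / p := by
  rw [integral_rpow_sub_one hp, one_rpow, zero_rpow hp.ne', sub_zero]

theorem le_add_one_rpow {p w : ℝ} (hp : 2 ≤ p) (hw : 0 ≤ w) :
    w ^ p + p * w ^ (p - 1) + 1 ≤ (w + 1) ^ p := by
  have hp0 : 0 < p := by linarith
  have hcont : Continuous fun u : ℝ => u ^ (p - 1) := continuous_rpow_const (by linarith)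
  have hshift : Continuous fun u : ℝ => (u - w) ^ (p - 1) := hcont.comp (continuous_sub_right w)
  have hmono : ∫ u in w..w + 1, (w ^ (p - 1) + (u - w) ^ (p - 1)) ≤ ∫ u in w..w + 1, u ^ (p - 1) :=
    integral_mono_on (by linarith) ((continuous_const.add hshift :
      Continuous fun u => w ^ (p - 1) + (u - w) ^ (p - 1)).intervalIntegrable _ _)
      (hcont.intervalIntegrable _ _) fun u hu => by
        simpa using add_rpow_le_rpow_add hw (sub_nonneg.2 hu.1) (by linarith : 1 ≤ p - 1)
  rw [integral_add intervalIntegrable_const (hshift.intervalIntegrable _ _), integral_const,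
    integral_comp_sub_right (· ^ (p - 1)), sub_self, add_sub_cancel_left,
    integral_zero_one_rpow_sub_one hp0, integral_rpow_sub_one hp0, one_smul, ← sub_nonneg] at hmono
  have := mul_nonneg hp0.le hmono
  field_simp at this
  linarith

theorem add_one_rpow_sub_rpow_add_one_le {p w : ℝ} (hp : 2 ≤ p) (hw : 0 ≤ w) :
    (w + 1) ^ p - w ^ p + 1 ≤ p * (w + 1) ^ (p - 1) := by
  have hp0 : 0 < p := by linarith
  have hcont : Continuous fun u : ℝ => u ^ (p - 1) := continuous_rpow_const (by linarith)
  have hrefl : Continuous fun u : ℝ => (w + 1 - u) ^ (p - 1) :=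
    hcont.comp (continuous_sub_left (w + 1))
  have hmono : ∫ u in w..w + 1, (u ^ (p - 1) + (w + 1 - u) ^ (p - 1)) ≤
      ∫ _ in w..w + 1, (w + 1) ^ (p - 1) :=
    integral_mono_on (by linarith) ((hcont.add hrefl :
      Continuous fun u => u ^ (p - 1) + (w + 1 - u) ^ (p - 1)).intervalIntegrable _ _)
      intervalIntegrable_const fun u hu => by
        simpa using
          add_rpow_le_rpow_add (hw.trans hu.1) (sub_nonneg.2 hu.2) (by linarith : 1 ≤ p - 1)
  rw [integral_add (hcont.intervalIntegrable _ _) (hrefl.intervalIntegrable _ _),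
    integral_comp_sub_left (· ^ (p - 1)), sub_self, add_sub_cancel_left,
    integral_zero_one_rpow_sub_one hp0, integral_rpow_sub_one hp0, integral_const,
    add_sub_cancel_left, one_smul, ← sub_nonneg] at hmono
  have := mul_nonneg hp0.le hmono
  field_simp at this
  linarith

noncomputable def cpFun (p t : ℝ) : ℝ := (1 - t) ^ p - t ^ p + p * t ^ (p - 1)

theorem rpow_sub_one_mul_sub_two_mul_le {p t a : ℝ} (hp : 2 ≤ p) (ht : 0 < t) (hta : t ≤ a)
    (hsum : t + a ≤ 1) : t ^ (p - 1) * (p - 2 * t) ≤ a ^ (p - 1) * (p - 2 * a) := by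
  have ha : 0 < a := ht.trans_le hta
  have hratio : (t / a) ^ (p - 1) ≤ t / a := by
    simpa using rpow_le_rpow_of_exponent_ge (div_pos ht ha) (div_le_one_of_le₀ hta ha.le)
      (by linarith : (1 : ℝ) ≤ p - 1)
  calc t ^ (p - 1) * (p - 2 * t) = a ^ (p - 1) * ((t / a) ^ (p - 1) * (p - 2 * t)) := by
        rw [div_rpow ht.le ha.le]
        field_simp
    _ ≤ a ^ (p - 1) * (t / a * (p - 2 * t)) := by gcongr; linarith
    _ ≤ a ^ (p - 1) * (p - 2 * a) := by
        gcongr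
        rw [div_mul_eq_mul_div, div_le_iff₀ ha]
        nlinarith

theorem cpFun_le_cpFun_one_sub {p t : ℝ} (hp : 2 ≤ p) (ht : t ∈ Ioc (0 : ℝ) (1 / 2)) :
    cpFun p t ≤ cpFun p (1 - t) := by
  obtain ⟨ht0, ht2⟩ := ht
  have h1t : 0 < 1 - t := by linarith
  have key := rpow_sub_one_mul_sub_two_mul_le hp ht0 (by linarith : t ≤ 1 - t) (by linarith)
  rw [cpFun, cpFun, sub_sub_cancel, rpow_eq_rpow_sub_one_mul ht0.ne' p,
    rpow_eq_rpow_sub_one_mul h1t.ne' p]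
  nlinarith

theorem half_rpow_le_cpFun {p t : ℝ} (hp : 1 / 2 ≤ p) (ht : t ∈ Ioc (0 : ℝ) (1 / 2)) :
    (1 / 2 : ℝ) ^ p ≤ cpFun p t := by
  obtain ⟨ht0, ht2⟩ := ht
  have hhalf : (1 / 2 : ℝ) ^ p ≤ (1 - t) ^ p := by gcongr; linarith
  have hpow : t ^ p ≤ p * t ^ (p - 1) := by
    rw [rpow_eq_rpow_sub_one_mul ht0.ne', mul_comm p]
    gcongr
    linarith
  rw [cpFun]
  linarith

theorem cpFun_half_le_one {p : ℝ} (hp : 2 ≤ p) : cpFun p (1 / 2) ≤ 1 := by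
  have hbernoulli : p ≤ 2 ^ (p - 1) := by
    have := one_add_mul_self_le_rpow_one_add (by norm_num : (-1 : ℝ) ≤ 1) (by linarith : 1 ≤ p - 1)
    norm_num at this
    linarith
  rw [cpFun, show (1 : ℝ) - 1 / 2 = 1 / 2 by norm_num, sub_self, zero_add, one_div,
    inv_rpow (by norm_num), ← div_eq_mul_inv, div_le_one (by positivity)]
  exact hbernoulli

theorem le_cpFun_of_mem_Ioo {p c x : ℝ} (hp : 2 ≤ p)
    (hc : ∀ t ∈ Ioc (0 : ℝ) (1 / 2), c ≤ cpFun p t) (hx : x ∈ Ioo (0 : ℝ) 1) : c ≤ cpFun p x := by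
  obtain ⟨hx0, hx1⟩ := hx
  rcases le_or_gt x (1 / 2) with hx2 | hx2
  · exact hc x ⟨hx0, hx2⟩
  · have h1x : 1 - x ∈ Ioc (0 : ℝ) (1 / 2) := ⟨by linarith, by linarith⟩
    simpa using (hc _ h1x).trans (cpFun_le_cpFun_one_sub hp h1x)

theorem le_abs_sub_one_rpow {p c : ℝ} (hp : 2 ≤ p)
    (hc : ∀ t ∈ Ioc (0 : ℝ) (1 / 2), c ≤ cpFun p t) (hc1 : c ≤ 1) (x : ℝ) :
    |x| ^ p - p * (Real.sign x * |x| ^ (p - 1)) + c ≤ |x - 1| ^ p := by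
  rcases lt_trichotomy x 0 with hx | rfl | hx
  · have := le_add_one_rpow hp (neg_nonneg.2 hx.le)
    rw [abs_of_neg hx, abs_of_neg (by linarith : x - 1 < 0), sign_of_neg hx, neg_sub',
      sub_neg_eq_add]
    linarith
  · simp [zero_rpow (by linarith : p ≠ 0), hc1]
  rcases lt_or_ge x 1 with hx1 | hx1
  · have := le_cpFun_of_mem_Ioo hp hc ⟨hx, hx1⟩
    rw [cpFun] at this
    rw [abs_of_pos hx, abs_of_neg (by linarith : x - 1 < 0), sign_of_pos hx, neg_sub]
    linarith
  · have := add_one_rpow_sub_rpow_add_one_le hp (sub_nonneg.2 hx1)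
    rw [sub_add_cancel] at this
    rw [abs_of_pos hx, abs_of_nonneg (sub_nonneg.2 hx1), sign_of_pos hx]
    linarith

theorem le_abs_sub_rpow_of_le_abs_sub_one_rpow {p c : ℝ} (hp : 0 < p)
    (h : ∀ x : ℝ, |x| ^ p - p * (Real.sign x * |x| ^ (p - 1)) + c ≤ |x - 1| ^ p) (a b : ℝ) :
    |a| ^ p - p * (Real.sign a * |a| ^ (p - 1)) * b + c * |b| ^ p ≤ |a - b| ^ p := by
  rcases eq_or_ne b 0 with rfl | hb
  · simp [zero_rpow hp.ne']
  obtain ⟨x, rfl⟩ : ∃ x, a = x * b := ⟨a / b, (div_mul_cancel₀ a hb).symm⟩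
  have hb' : |b| ≠ 0 := abs_ne_zero.2 hb
  have hsign :
      Real.sign (x * b) * |x * b| ^ (p - 1) * b = Real.sign x * |x| ^ (p - 1) * |b| ^ p := by
    rw [Real.sign_mul, abs_mul, mul_rpow (abs_nonneg _) (abs_nonneg _),
      rpow_eq_rpow_sub_one_mul hb' p, ← Real.sign_mul_self b]
    ring
  calc |x * b| ^ p - p * (Real.sign (x * b) * |x * b| ^ (p - 1)) * b + c * |b| ^ p
      = (|x| ^ p - p * (Real.sign x * |x| ^ (p - 1)) + c) * |b| ^ p := by
        rw [mul_assoc p _ b, hsign, abs_mul, mul_rpow (abs_nonneg _) (abs_nonneg _)]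
        ring
    _ ≤ |x - 1| ^ p * |b| ^ p := by gcongr; exact h x
    _ = |x * b - b| ^ p := by
        rw [← mul_rpow (abs_nonneg _) (abs_nonneg _), ← abs_mul, sub_one_mul]

theorem stmt_0 (p a b : ℝ) (hp : 2 ≤ p) :
    0 < sInf ((fun t : ℝ => (1 - t) ^ p - t ^ p + p * t ^ (p - 1)) '' Ioc (0 : ℝ) (1 / 2)) ∧
    |a - b| ^ p ≥ |a| ^ p - p * (Real.sign a * |a| ^ (p - 1)) * b +
      sInf ((fun t : ℝ => (1 - t) ^ p - t ^ p + p * t ^ (p - 1)) '' Ioc (0 : ℝ) (1 / 2)) *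
        |b| ^ p := by
  change 0 < sInf (cpFun p '' _) ∧ _ ≥ _ - _ + sInf (cpFun p '' _) * _
  have hhalf : (1 / 2 : ℝ) ∈ Ioc 0 (1 / 2) := ⟨by norm_num, le_rfl⟩
  have hlower : ∀ y ∈ cpFun p '' Ioc 0 (1 / 2), (1 / 2 : ℝ) ^ p ≤ y := by
    rintro _ ⟨t, ht, rfl⟩
    exact half_rpow_le_cpFun (by linarith) ht
  have hc : ∀ t ∈ Ioc (0 : ℝ) (1 / 2), sInf (cpFun p '' Ioc 0 (1 / 2)) ≤ cpFun p t :=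
    fun t ht => csInf_le ⟨_, hlower⟩ (mem_image_of_mem _ ht)
  have hpos : 0 < sInf (cpFun p '' Ioc 0 (1 / 2)) :=
    (rpow_pos_of_pos (by norm_num) p).trans_le (le_csInf ⟨_, mem_image_of_mem _ hhalf⟩ hlower)
  have hc1 : sInf (cpFun p '' Ioc 0 (1 / 2)) ≤ 1 := (hc _ hhalf).trans (cpFun_half_le_one hp)
  exact ⟨hpos, le_abs_sub_rpow_of_le_abs_sub_one_rpow (by linarith)
    (le_abs_sub_one_rpow hp hc hc1) a b⟩
end

section
/- Let n ≥ 1, 1 < p < ∞, and α ∈ ℝ with αp ≠ n. Then for every f ∈ C_0^∞(ℝ^n \ {0}), the inequality ‖f/|x|^α‖_{L^p(ℝ^n)} ≤ |p/(n − αp)| · ‖(x·∇f)/|x|^α‖_{L^p(ℝ^n)} holds, where x·∇f denotes the Euler operator ∑_i x_i ∂_i f. -/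
open Real MeasureTheory

theorem hardy_w_deriv {E : Type*} [NormedAddCommGroup E] [InnerProductSpace ℝ E]
    (r : ℝ) (x : E) (hx : x ≠ 0) :
    HasFDerivAt (fun y : E => ‖y‖ ^ r) ((r * ‖x‖ ^ (r - 2)) • innerSL ℝ x) x := by
  have h2 : HasFDerivAt (fun y : E => ‖y‖ ^ (2:ℝ)) (((2:ℝ) * ‖x‖ ^ ((2:ℝ) - 2)) • innerSL ℝ x) x :=
    hasFDerivAt_norm_rpow x one_lt_two
  have hx2 : (‖x‖ ^ (2:ℝ)) ≠ 0 := (Real.rpow_pos_of_pos (norm_pos_iff.mpr hx) 2).ne'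
  have h3 := h2.rpow_const (p := r / 2) (Or.inl hx2)
  have hfun : (fun y : E => (‖y‖ ^ (2:ℝ)) ^ (r / 2)) = fun y : E => ‖y‖ ^ r := by
    funext y
    rw [← Real.rpow_mul (norm_nonneg y), show (2:ℝ) * (r / 2) = r by ring]
  rw [hfun] at h3
  convert h3 using 1
  rw [smul_smul]
  congr 1
  rw [show ((2:ℝ) - 2) = 0 by norm_num, Real.rpow_zero,
    ← Real.rpow_mul (norm_nonneg x), show (2:ℝ) * (r / 2 - 1) = r - 2 by ring]
  ring

theorem hardy_w_euler {E : Type*} [NormedAddCommGroup E] [InnerProductSpace ℝ E]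
    (r : ℝ) (x : E) (hx : x ≠ 0) :
    ((r * ‖x‖ ^ (r - 2)) • innerSL ℝ x) x = r * ‖x‖ ^ r := by
  simp only [ContinuousLinearMap.smul_apply, innerSL_apply_apply, smul_eq_mul]
  rw [real_inner_self_eq_norm_sq, ← Real.rpow_natCast ‖x‖ 2,
    mul_assoc, ← Real.rpow_add (norm_pos_iff.mpr hx)]
  norm_num

theorem hardy_sum_smulRight (m : ℕ) (L : EuclideanSpace ℝ (Fin (m+1)) →L[ℝ] ℝ)
    (x : EuclideanSpace ℝ (Fin (m+1))) :
    ∑ i, (L.smulRight x) (EuclideanSpace.single i (1:ℝ)) i = L x := by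
  have hx : ∑ i, x i • EuclideanSpace.single i (1:ℝ) = x := by
    have := (EuclideanSpace.basisFun (Fin (m+1)) ℝ).sum_repr x
    simpa [EuclideanSpace.basisFun_apply, EuclideanSpace.basisFun_repr] using this
  calc ∑ i, (L.smulRight x) (EuclideanSpace.single i (1:ℝ)) i
      = ∑ i, x i * L (EuclideanSpace.single i 1) := by
        refine Finset.sum_congr rfl fun i _ => ?_
        simp [ContinuousLinearMap.smulRight_apply, mul_comm]
    _ = L x := by
        conv_rhs => rw [← hx]
        rw [map_sum]
        simp [smul_eq_mul, mul_comm]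

theorem hardy_sum_id (m : ℕ) (c : ℝ) :
    ∑ i : Fin (m+1), ((c • ContinuousLinearMap.id ℝ (EuclideanSpace ℝ (Fin (m+1))))
      (EuclideanSpace.single i (1:ℝ))) i = ((m:ℝ)+1) * c := by
  have : ∀ i : Fin (m+1), ((c • ContinuousLinearMap.id ℝ (EuclideanSpace ℝ (Fin (m+1))))
      (EuclideanSpace.single i (1:ℝ))) i = c := by
    intro i
    simp [EuclideanSpace.single_apply]
  rw [Finset.sum_congr rfl fun i _ => this i]
  simp [Finset.sum_const]

theorem hardy_div_zero (m : ℕ) (V : EuclideanSpace ℝ (Fin (m+1)) → EuclideanSpace ℝ (Fin (m+1)))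
    (hV : Continuous V)
    (V' : EuclideanSpace ℝ (Fin (m+1)) → (EuclideanSpace ℝ (Fin (m+1)) →L[ℝ] EuclideanSpace ℝ (Fin (m+1))))
    (hV' : ∀ x, HasFDerivAt V (V' x) x)
    (divv : EuclideanSpace ℝ (Fin (m+1)) → ℝ)
    (hdiv : ∀ x, ∑ i, (V' x) (EuclideanSpace.single i (1:ℝ)) i = divv x)
    (hdivc : Continuous divv)
    (R : ℝ) (hR : 0 < R)
    (hVout : ∀ x : EuclideanSpace ℝ (Fin (m+1)), R < ‖x‖ → V x = 0)
    (hdivout : ∀ x : EuclideanSpace ℝ (Fin (m+1)), R < ‖x‖ → divv x = 0) :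
    ∫ x : EuclideanSpace ℝ (Fin (m+1)), divv x = 0 := by
  classical
  have hcoord : ∀ (x : EuclideanSpace ℝ (Fin (m+1))) (i : Fin (m+1)), |x i| ≤ ‖x‖ := by
    intro x i
    have h1 : |x i|^2 ≤ ∑ j, ‖x j‖^2 := by
      have := Finset.single_le_sum (f := fun j => ‖x j‖^2) (fun j _ => sq_nonneg _) (Finset.mem_univ i)
      simpa [Real.norm_eq_abs] using this
    calc |x i| = Real.sqrt (|x i|^2) := (Real.sqrt_sq (abs_nonneg _)).symm
    _ ≤ Real.sqrt (∑ j, ‖x j‖^2) := Real.sqrt_le_sqrt h1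
    _ = ‖x‖ := (EuclideanSpace.norm_eq x).symm
  set ψ := EuclideanSpace.equiv (Fin (m+1)) ℝ with hψ
  set a : Fin (m+1) → ℝ := fun _ => -(R+1) with ha
  set b : Fin (m+1) → ℝ := fun _ => (R+1) with hb
  have hab : a ≤ b := fun i => by show -(R+1) ≤ R+1; linarith
  set VP : (Fin (m+1) → ℝ) → (Fin (m+1) → ℝ) := ⇑ψ ∘ V ∘ ⇑ψ.symm with hVP
  set VP' : (Fin (m+1) → ℝ) → (Fin (m+1) → ℝ) →L[ℝ] (Fin (m+1) → ℝ) :=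
    fun y => ((ψ : EuclideanSpace ℝ (Fin (m+1)) →L[ℝ] (Fin (m+1) → ℝ)).comp
      ((V' (ψ.symm y)).comp (ψ.symm : (Fin (m+1) → ℝ) →L[ℝ] EuclideanSpace ℝ (Fin (m+1))))) with hVP'
  have hnorm_ge : ∀ (y : Fin (m+1) → ℝ) (i : Fin (m+1)), |y i| ≤ ‖ψ.symm y‖ := by
    intro y i
    have := hcoord (ψ.symm y) i
    exact this
  have Hd : ∀ y, HasFDerivAt VP (VP' y) y := by
    intro y
    exact ((ψ : EuclideanSpace ℝ (Fin (m+1)) →L[ℝ] (Fin (m+1) → ℝ)).hasFDerivAt).comp _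
      ((hV' (ψ.symm y)).comp y ((ψ.symm : (Fin (m+1) → ℝ) →L[ℝ] EuclideanSpace ℝ (Fin (m+1))).hasFDerivAt))
  have hdivP : ∀ y, (∑ i, VP' y (Pi.single i 1) i) = divv (ψ.symm y) := by
    intro y
    rw [← hdiv (ψ.symm y)]
    congr 1
  have key := MeasureTheory.integral_divergence_of_hasFDerivAt_off_countable a b hab VP VP'
    ∅ Set.countable_empty
    (((ψ.continuous.comp hV).comp ψ.symm.continuous).continuousOn)
    (fun y _ => Hd y)
    (by
      rw [funext hdivP]
      exact ((hdivc.comp ψ.symm.continuous)).integrableOn_Icc)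
  have hface : ∀ (i : Fin (m+1)) (c : ℝ), R < |c| → ∀ y : Fin m → ℝ, VP (i.insertNth c y) i = 0 := by
    intro i c hc y
    have h1 : R < ‖ψ.symm (i.insertNth c y)‖ := by
      refine lt_of_lt_of_le ?_ (hnorm_ge (i.insertNth c y) i)
      simpa [Fin.insertNth_apply_same] using hc
    simp only [hVP, Function.comp_apply, hVout _ h1]
    simp
  have hfaces0 : ∑ i : Fin (m+1),
      ((∫ x in Set.Icc (a ∘ i.succAbove) (b ∘ i.succAbove), VP (i.insertNth (b i) x) i) -
        ∫ x in Set.Icc (a ∘ i.succAbove) (b ∘ i.succAbove), VP (i.insertNth (a i) x) i) = 0 := by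
    refine Finset.sum_eq_zero fun i _ => ?_
    have hbi : b i = R + 1 := rfl
    have hai : a i = -(R + 1) := rfl
    have h1 : ∀ y : Fin m → ℝ, VP (i.insertNth (b i) y) i = 0 :=
      hface i (b i) (by rw [hbi, abs_of_pos (by linarith)]; linarith)
    have h2 : ∀ y : Fin m → ℝ, VP (i.insertNth (a i) y) i = 0 :=
      hface i (a i) (by rw [hai, abs_of_neg (by linarith)]; linarith)
    simp [h1, h2]
  rw [funext hdivP, hfaces0] at key
  have hout : ∀ y, y ∉ Set.Icc a b → divv (ψ.symm y) = 0 := by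
    intro y hy
    rw [Set.mem_Icc] at hy
    have : ∃ i, y i < a i ∨ b i < y i := by
      by_contra hcon
      push_neg at hcon
      exact hy ⟨fun i => (hcon i).1, fun i => (hcon i).2⟩
    obtain ⟨i, hi⟩ := this
    apply hdivout
    refine lt_of_lt_of_le ?_ (hnorm_ge y i)
    rcases hi with h | h
    · have hai : a i = -(R + 1) := rfl
      rw [hai] at h
      rw [abs_of_neg (by linarith)]; linarith
    · have hbi : b i = R + 1 := rfl
      rw [hbi] at h
      rw [abs_of_pos (by linarith)]; linarith
  rw [setIntegral_eq_integral_of_forall_compl_eq_zero hout] at key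
  have hmp := (EuclideanSpace.volume_preserving_symm_measurableEquiv_toLp (Fin (m+1))).symm
  have htrans : (∫ x : Fin (m+1) → ℝ, divv (ψ.symm x)) = ∫ x, divv x :=
    hmp.integral_comp (MeasurableEquiv.measurableEmbedding _) divv
  rw [htrans] at key
  exact key

set_option maxHeartbeats 1000000 in
theorem stmt_1 (n : ℕ) (hn : 1 ≤ n) (p α : ℝ) (hp : 1 < p) (hcrit : α * p ≠ (n : ℝ))
    (f : EuclideanSpace ℝ (Fin n) → ℂ) (hf : ContDiff ℝ (⊤ : ℕ∞) f) (hsupp : HasCompactSupport f)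
    (h0 : ∃ ε > (0 : ℝ), ∀ x : EuclideanSpace ℝ (Fin n), ‖x‖ < ε → f x = 0) :
    (∫ x : EuclideanSpace ℝ (Fin n), (‖f x‖ / ‖x‖ ^ α) ^ p) ^ (1 / p) ≤
      |p / ((n : ℝ) - α * p)| *
        (∫ x : EuclideanSpace ℝ (Fin n), (‖fderiv ℝ f x x‖ / ‖x‖ ^ α) ^ p) ^ (1 / p) := by
  classical
  obtain ⟨ε, hε, hf0⟩ := h0
  obtain ⟨m, rfl⟩ : ∃ m, n = m + 1 := ⟨n - 1, (Nat.succ_pred_eq_of_pos hn).symm⟩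
  have hp0 : (0:ℝ) < p := lt_trans one_pos hp
  have hp0' : p ≠ 0 := ne_of_gt hp0
  have hp1pos : (0:ℝ) < p - 1 := by linarith
  have hp1 : p - 1 ≠ 0 := ne_of_gt hp1pos
  set q : ℝ := p / (p - 1) with hq_def
  have hq0 : (0:ℝ) < q := div_pos hp0 hp1pos
  have hpq : p.HolderConjugate q := (Real.holderConjugate_iff_eq_conjExponent hp).mpr hq_def
  set β : ℝ := ((m+1 : ℕ) : ℝ) - α * p with hβ_def
  have hβ : β ≠ 0 := sub_ne_zero.mpr (Ne.symm hcrit)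
  have hβpos : 0 < |β| := abs_pos.mpr hβ
  set r : ℝ := -(α * p) with hr_def
  -- the basic functions
  set w : EuclideanSpace ℝ (Fin (m+1)) → ℝ := fun x => ‖x‖ ^ r with hw_def
  set u : EuclideanSpace ℝ (Fin (m+1)) → ℝ := fun x => ‖f x‖ ^ p with hu_def
  set Ef : EuclideanSpace ℝ (Fin (m+1)) → ℂ := fun x => fderiv ℝ f x x with hEf_def
  set g : EuclideanSpace ℝ (Fin (m+1)) → ℝ := fun x => u x * w x with hg_def
  set G : EuclideanSpace ℝ (Fin (m+1)) → ℝ := fun x => ‖Ef x‖ ^ p * w x with hG_def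
  set DU : EuclideanSpace ℝ (Fin (m+1)) → EuclideanSpace ℝ (Fin (m+1)) →L[ℝ] ℝ :=
    fun x => fderiv ℝ u x with hDU_def
  set D : EuclideanSpace ℝ (Fin (m+1)) → ℝ := fun x => DU x x * w x with hD_def
  -- basic regularity facts
  have hf1 : ContDiff ℝ 1 f := hf.of_le (by simp)
  have hfd : Differentiable ℝ f := hf1.differentiable one_ne_zero
  have hu1 : ContDiff ℝ 1 u := by rw [hu_def]; exact hf1.norm_rpow hp
  have hud : Differentiable ℝ u := hu1.differentiable one_ne_zero
  have hu_cont : Continuous u := hud.continuous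
  have hDU_cont : Continuous DU := by rw [hDU_def]; exact (contDiff_one_iff_fderiv.mp hu1).2
  have hDf_cont : Continuous (fderiv ℝ f) := (contDiff_one_iff_fderiv.mp hf1).2
  have hEf_cont : Continuous Ef := by rw [hEf_def]; exact hDf_cont.clm_apply continuous_id
  have hw_nonneg : ∀ x, 0 ≤ w x := fun x => Real.rpow_nonneg (norm_nonneg x) r
  have hu_nonneg : ∀ x, 0 ≤ u x := fun x => Real.rpow_nonneg (norm_nonneg (f x)) p
  have hopen : IsOpen {y : EuclideanSpace ℝ (Fin (m+1)) | ‖y‖ < ε} :=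
    isOpen_lt continuous_norm continuous_const
  have hf00 : f 0 = 0 := hf0 0 (by rw [norm_zero]; exact hε)
  -- vanishing near zero
  have hu0 : ∀ x, ‖x‖ < ε → u x = 0 := by
    intro x hx
    simp [hu_def, hf0 x hx, Real.zero_rpow hp0']
  have hDU0 : ∀ x, ‖x‖ < ε → DU x = 0 := by
    intro x hx
    have hue : u =ᶠ[nhds x] fun _ => 0 := by
      filter_upwards [hopen.mem_nhds hx] with y hy using hu0 y hy
    rw [hDU_def]
    show fderiv ℝ u x = 0
    rw [hue.fderiv_eq]
    simp
  have hEf0 : ∀ x, ‖x‖ < ε → Ef x = 0 := by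
    intro x hx
    have hfe : f =ᶠ[nhds x] fun _ => 0 := by
      filter_upwards [hopen.mem_nhds hx] with y hy using hf0 y hy
    rw [hEf_def]
    simp only []
    rw [hfe.fderiv_eq]
    simp
  -- vanishing off the support of f
  have hfe_out : ∀ x, x ∉ tsupport f → f =ᶠ[nhds x] 0 := fun x hx =>
    notMem_tsupport_iff_eventuallyEq.mp hx
  have hu_out : ∀ x, x ∉ tsupport f → u x = 0 := by
    intro x hx
    simp [hu_def, image_eq_zero_of_notMem_tsupport hx, Real.zero_rpow hp0']
  have hDU_out : ∀ x, x ∉ tsupport f → DU x = 0 := by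
    intro x hx
    have hue : u =ᶠ[nhds x] fun _ => 0 := by
      filter_upwards [hfe_out x hx] with y hy
      simp [hu_def, hy, Real.zero_rpow hp0']
    rw [hDU_def]
    show fderiv ℝ u x = 0
    rw [hue.fderiv_eq]
    simp
  have hDf_out : ∀ x, x ∉ tsupport f → fderiv ℝ f x = 0 := by
    intro x hx
    have hfe : f =ᶠ[nhds x] fun _ => 0 := hfe_out x hx
    rw [hfe.fderiv_eq]
    exact fderiv_const_apply 0
  -- generic continuity principle
  have cont_of : ∀ h : EuclideanSpace ℝ (Fin (m+1)) → ℝ,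
      (∀ x, x ≠ 0 → ContinuousAt h x) → (∀ x, ‖x‖ < ε → h x = 0) → Continuous h := by
    intro h h1 h2
    rw [continuous_iff_continuousAt]
    intro x
    by_cases hx : ‖x‖ < ε
    · have he : h =ᶠ[nhds x] fun _ => 0 := by
        filter_upwards [hopen.mem_nhds hx] with y hy using h2 y hy
      exact (continuousAt_congr he).mpr continuousAt_const
    · refine h1 x ?_
      intro h00
      apply hx
      rw [h00, norm_zero]
      exact hε
  have hw_contAt : ∀ x : EuclideanSpace ℝ (Fin (m+1)), x ≠ 0 → ContinuousAt w x := by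
    intro x hx
    rw [hw_def]
    exact continuous_norm.continuousAt.rpow_const (Or.inl (norm_ne_zero_iff.mpr hx))
  have hg_cont : Continuous g := by
    refine cont_of g (fun x hx => ?_) (fun x hx => ?_)
    · rw [hg_def]
      exact hu_cont.continuousAt.mul (hw_contAt x hx)
    · simp [hg_def, hu0 x hx]
  have hD_cont : Continuous D := by
    refine cont_of D (fun x hx => ?_) (fun x hx => ?_)
    · rw [hD_def]
      exact ((hDU_cont.clm_apply continuous_id).continuousAt).mul (hw_contAt x hx)
    · simp [hD_def, hDU0 x hx]
  have hg_supp : HasCompactSupport g :=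
    HasCompactSupport.intro hsupp (fun x hx => by simp [hg_def, hu_out x hx])
  have hg_int : Integrable g := hg_cont.integrable_of_hasCompactSupport hg_supp
  have hD_supp : HasCompactSupport D :=
    HasCompactSupport.intro hsupp (fun x hx => by simp [hD_def, hDU_out x hx])
  have hD_int : Integrable D := hD_cont.integrable_of_hasCompactSupport hD_supp
  -- Step A : the divergence identity
  obtain ⟨R, hR0, hRsub⟩ := hsupp.isCompact.isBounded.subset_closedBall_lt 0 0
  have hfR : ∀ x : EuclideanSpace ℝ (Fin (m+1)), R < ‖x‖ → x ∉ tsupport f := by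
    intro x hx hmem
    have := hRsub hmem
    rw [Metric.mem_closedBall, dist_zero_right] at this
    linarith
  set V : EuclideanSpace ℝ (Fin (m+1)) → EuclideanSpace ℝ (Fin (m+1)) :=
    fun x => g x • x with hV_def
  set Wd : EuclideanSpace ℝ (Fin (m+1)) → EuclideanSpace ℝ (Fin (m+1)) →L[ℝ] ℝ :=
    fun x => (r * ‖x‖ ^ (r - 2)) • innerSL ℝ x with hWd_def
  set V' : EuclideanSpace ℝ (Fin (m+1)) → EuclideanSpace ℝ (Fin (m+1)) →L[ℝ] EuclideanSpace ℝ (Fin (m+1)) :=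
    fun x => if ‖x‖ < ε then 0 else
      g x • ContinuousLinearMap.id ℝ (EuclideanSpace ℝ (Fin (m+1)))
        + (u x • Wd x + w x • DU x).smulRight x with hV'_def
  have hV_cont : Continuous V := by rw [hV_def]; exact hg_cont.smul continuous_id
  have hV' : ∀ x, HasFDerivAt V (V' x) x := by
    intro x
    by_cases hx : ‖x‖ < ε
    · rw [hV'_def]
      simp only [if_pos hx]
      have he : V =ᶠ[nhds x] fun _ => 0 := by
        filter_upwards [hopen.mem_nhds hx] with y hy
        simp [hV_def, hg_def, hu0 y hy]
      exact (hasFDerivAt_const (0 : EuclideanSpace ℝ (Fin (m+1))) x).congr_of_eventuallyEq he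
    · have hx0 : x ≠ 0 := fun h => hx (by rw [h, norm_zero]; exact hε)
      rw [hV'_def]
      simp only [if_neg hx]
      have hw' : HasFDerivAt w (Wd x) x := by
        rw [hw_def, hWd_def]
        exact hardy_w_deriv r x hx0
      have hg' : HasFDerivAt g (u x • Wd x + w x • DU x) x := by
        rw [hg_def, hDU_def]
        exact (hud x).hasFDerivAt.mul hw'
      exact hg'.smul (hasFDerivAt_id x)
  set divv : EuclideanSpace ℝ (Fin (m+1)) → ℝ := fun x => β * g x + D x with hdivv_def
  have hdiv_eq : ∀ x, ∑ i, (V' x) (EuclideanSpace.single i (1:ℝ)) i = divv x := by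
    intro x
    by_cases hx : ‖x‖ < ε
    · simp only [hV'_def, if_pos hx]
      simp [hdivv_def, hg_def, hD_def, hu0 x hx, hDU0 x hx]
    · have hx0 : x ≠ 0 := fun h => hx (by rw [h, norm_zero]; exact hε)
      simp only [hV'_def, if_neg hx]
      have expand : ∀ i : Fin (m+1),
          ((g x • ContinuousLinearMap.id ℝ (EuclideanSpace ℝ (Fin (m+1)))
            + (u x • Wd x + w x • DU x).smulRight x) (EuclideanSpace.single i (1:ℝ))) i
          = ((g x • ContinuousLinearMap.id ℝ (EuclideanSpace ℝ (Fin (m+1))))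
              (EuclideanSpace.single i (1:ℝ))) i
            + (((u x • Wd x + w x • DU x).smulRight x) (EuclideanSpace.single i (1:ℝ))) i := by
        intro i
        rw [ContinuousLinearMap.add_apply]
        rfl
      rw [Finset.sum_congr rfl fun i _ => expand i, Finset.sum_add_distrib,
        hardy_sum_id m (g x), hardy_sum_smulRight m (u x • Wd x + w x • DU x) x]
      have hWdx : Wd x x = r * w x := by
        rw [hWd_def, hw_def]
        exact hardy_w_euler r x hx0
      have happ : (u x • Wd x + w x • DU x) x = u x * (r * w x) + w x * (DU x x) := by
        rw [ContinuousLinearMap.add_apply, ContinuousLinearMap.smul_apply, hWdx,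
          ContinuousLinearMap.smul_apply, smul_eq_mul, smul_eq_mul]
      rw [happ]
      simp only [hdivv_def, hg_def, hD_def, hβ_def, hr_def]
      push_cast
      ring
  have hdivv_cont : Continuous divv := by
    rw [hdivv_def]
    exact (continuous_const.mul hg_cont).add hD_cont
  have hVout : ∀ x, R < ‖x‖ → V x = 0 := by
    intro x hx
    simp [hV_def, hg_def, hu_out x (hfR x hx)]
  have hdivout : ∀ x, R < ‖x‖ → divv x = 0 := by
    intro x hx
    simp [hdivv_def, hg_def, hD_def, hu_out x (hfR x hx), hDU_out x (hfR x hx)]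
  have stepA : ∫ x, divv x = 0 :=
    hardy_div_zero m V hV_cont V' hV' divv hdiv_eq hdivv_cont R hR0 hVout hdivout
  -- split the integral
  set I : ℝ := ∫ x, g x with hI_def
  set J : ℝ := ∫ x, G x with hJ_def
  have hI0 : 0 ≤ I := by
    rw [hI_def]
    exact integral_nonneg fun x => mul_nonneg (hu_nonneg x) (hw_nonneg x)
  have hJ0 : 0 ≤ J := by
    rw [hJ_def]
    exact integral_nonneg fun x =>
      mul_nonneg (Real.rpow_nonneg (norm_nonneg _) _) (hw_nonneg x)
  have hβI : β * I = - ∫ x, D x := by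
    have h1 : ∫ x, divv x = β * I + ∫ x, D x := by
      simp only [hdivv_def]
      rw [integral_add (hg_int.const_mul β) hD_int, integral_const_mul, hI_def]
    have := h1.symm.trans stepA
    linarith
  -- Hölder setup
  set A : EuclideanSpace ℝ (Fin (m+1)) → ℝ := fun x => ‖f x‖ ^ (p-1) * ‖x‖ ^ (r / q) with hA_def
  set B : EuclideanSpace ℝ (Fin (m+1)) → ℝ := fun x => ‖Ef x‖ * ‖x‖ ^ (r / p) with hB_def
  have hA0 : ∀ x, ‖x‖ < ε → A x = 0 := by
    intro x hx
    simp [hA_def, hf0 x hx, Real.zero_rpow hp1]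
  have hB0 : ∀ x, ‖x‖ < ε → B x = 0 := by
    intro x hx
    simp [hB_def, hEf0 x hx]
  have hA_cont : Continuous A := by
    refine cont_of A (fun x hx => ?_) hA0
    rw [hA_def]
    exact ((hfd.continuous.norm.continuousAt).rpow_const (Or.inr hp1pos.le)).mul
      (continuous_norm.continuousAt.rpow_const (Or.inl (norm_ne_zero_iff.mpr hx)))
  have hB_cont : Continuous B := by
    refine cont_of B (fun x hx => ?_) hB0
    rw [hB_def]
    exact (hEf_cont.norm.continuousAt).mul
      (continuous_norm.continuousAt.rpow_const (Or.inl (norm_ne_zero_iff.mpr hx)))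
  have hA_supp : HasCompactSupport A := by
    refine HasCompactSupport.intro hsupp (fun x hx => ?_)
    simp [hA_def, image_eq_zero_of_notMem_tsupport hx, Real.zero_rpow hp1]
  have hB_supp : HasCompactSupport B := by
    refine HasCompactSupport.intro hsupp (fun x hx => ?_)
    simp [hB_def, hEf_def, hDf_out x hx]
  have hA_mem : MemLp A (ENNReal.ofReal q) volume :=
    hA_cont.memLp_of_hasCompactSupport hA_supp
  have hB_mem : MemLp B (ENNReal.ofReal p) volume :=
    hB_cont.memLp_of_hasCompactSupport hB_supp
  have hEf00 : Ef 0 = 0 := hEf0 0 (by rw [norm_zero]; exact hε)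
  -- pointwise identities
  have hrexp : r / q + r / p = r := by
    rw [hq_def]
    field_simp
    ring
  have hABeq : ∀ x, A x * B x = ‖f x‖ ^ (p-1) * (‖Ef x‖ * w x) := by
    intro x
    by_cases hx : x = (0 : EuclideanSpace ℝ (Fin (m+1)))
    · subst hx
      simp [hA_def, hB_def, hf00, Real.zero_rpow hp1]
    · have hxpos : 0 < ‖x‖ := norm_pos_iff.mpr hx
      have hxr : ‖x‖ ^ (r/q) * ‖x‖ ^ (r/p) = w x := by
        rw [hw_def, ← Real.rpow_add hxpos, hrexp]
      simp only [hA_def, hB_def]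
      calc (‖f x‖ ^ (p-1) * ‖x‖ ^ (r/q)) * (‖Ef x‖ * ‖x‖ ^ (r/p))
          = ‖f x‖ ^ (p-1) * (‖Ef x‖ * (‖x‖ ^ (r/q) * ‖x‖ ^ (r/p))) := by ring
        _ = ‖f x‖ ^ (p-1) * (‖Ef x‖ * w x) := by rw [hxr]
  have haq : ∀ x, A x ^ q = g x := by
    intro x
    by_cases hx : x = (0 : EuclideanSpace ℝ (Fin (m+1)))
    · subst hx
      simp [hA_def, hg_def, hu_def, hf00, Real.zero_rpow hp1, Real.zero_rpow hp0',
        Real.zero_rpow (ne_of_gt hq0)]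
    · have hxpos : 0 < ‖x‖ := norm_pos_iff.mpr hx
      rw [hA_def, hg_def, hu_def, hw_def,
        Real.mul_rpow (Real.rpow_nonneg (norm_nonneg _) _) (Real.rpow_nonneg (norm_nonneg _) _),
        ← Real.rpow_mul (norm_nonneg _), ← Real.rpow_mul (norm_nonneg _),
        show (p-1) * q = p by rw [hq_def]; field_simp,
        show (r/q) * q = r by field_simp]
  have hbp : ∀ x, B x ^ p = G x := by
    intro x
    by_cases hx : x = (0 : EuclideanSpace ℝ (Fin (m+1)))
    · subst hx
      simp [hB_def, hG_def, hEf00, Real.zero_rpow hp0']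
    · have hxpos : 0 < ‖x‖ := norm_pos_iff.mpr hx
      rw [hB_def, hG_def, hw_def,
        Real.mul_rpow (norm_nonneg _) (Real.rpow_nonneg (norm_nonneg _) _),
        ← Real.rpow_mul (norm_nonneg _),
        show (r/p) * p = r by field_simp]
  -- pointwise bound |D| ≤ p * (A * B)
  have hDbound : ∀ x, |D x| ≤ p * (A x * B x) := by
    intro x
    rw [hABeq x, hD_def, abs_mul, abs_of_nonneg (hw_nonneg x)]
    have hDUx : DU x x = (p * ‖f x‖ ^ (p-2)) * (inner ℝ (f x) (Ef x) : ℝ) := by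
      have h1 : DU x = (p * ‖f x‖ ^ (p - 2)) • (innerSL ℝ (f x)).comp (fderiv ℝ f x) := by
        rw [hDU_def, hu_def]
        exact hfd.fderiv_norm_rpow hp
      rw [h1, hEf_def]
      simp
    rw [hDUx]
    have hinner : |(inner ℝ (f x) (Ef x) : ℝ)| ≤ ‖f x‖ * ‖Ef x‖ := abs_real_inner_le_norm _ _
    have h2 : |(p * ‖f x‖ ^ (p-2)) * (inner ℝ (f x) (Ef x) : ℝ)|
        ≤ p * ‖f x‖ ^ (p-2) * (‖f x‖ * ‖Ef x‖) := by
      rw [abs_mul, abs_of_nonneg (by positivity)]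
      exact mul_le_mul_of_nonneg_left hinner (by positivity)
    refine le_trans (mul_le_mul_of_nonneg_right h2 (hw_nonneg x)) ?_
    have h3 : ‖f x‖ ^ (p-2) * ‖f x‖ ≤ ‖f x‖ ^ (p-1) := by
      rcases eq_or_lt_of_le (norm_nonneg (f x)) with h | h
      · rw [← h, Real.zero_rpow hp1]
        simp
      · rw [show p - 1 = (p-2) + 1 by ring, Real.rpow_add h, Real.rpow_one]
    calc p * ‖f x‖ ^ (p-2) * (‖f x‖ * ‖Ef x‖) * w x
        = p * ((‖f x‖ ^ (p-2) * ‖f x‖) * (‖Ef x‖ * w x)) := by ring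
      _ ≤ p * (‖f x‖ ^ (p-1) * (‖Ef x‖ * w x)) := by
          refine mul_le_mul_of_nonneg_left ?_ hp0.le
          exact mul_le_mul_of_nonneg_right h3 (mul_nonneg (norm_nonneg _) (hw_nonneg x))
  -- Hölder
  have hAnn : (0 : EuclideanSpace ℝ (Fin (m+1)) → ℝ) ≤ᵐ[volume] A :=
    Filter.Eventually.of_forall (fun x => by
      rw [hA_def]
      positivity)
  have hBnn : (0 : EuclideanSpace ℝ (Fin (m+1)) → ℝ) ≤ᵐ[volume] B :=
    Filter.Eventually.of_forall (fun x => by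
      rw [hB_def]
      positivity)
  have hHold := MeasureTheory.integral_mul_le_Lp_mul_Lq_of_nonneg hpq.symm hAnn hBnn hA_mem hB_mem
  have hIq : (∫ x, A x ^ q) = I := by
    rw [hI_def]
    simp only [haq]
  have hJp : (∫ x, B x ^ p) = J := by
    rw [hJ_def]
    simp only [hbp]
  rw [hIq, hJp] at hHold
  have hAB_int : Integrable (fun x => p * (A x * B x)) :=
    (continuous_const.mul (hA_cont.mul hB_cont)).integrable_of_hasCompactSupport
      (HasCompactSupport.intro hsupp (fun x hx => by
        simp [hA_def, image_eq_zero_of_notMem_tsupport hx, Real.zero_rpow hp1]))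
  have habs1 : |∫ x, D x| ≤ ∫ x, |D x| := by
    simpa [Real.norm_eq_abs] using norm_integral_le_integral_norm (μ := volume) D
  have hchain : |β| * I ≤ p * (I ^ (1/q) * J ^ (1/p)) := by
    have e1 : |β| * I = |β * I| := by rw [abs_mul, abs_of_nonneg hI0]
    rw [e1, hβI, abs_neg]
    refine le_trans habs1 (le_trans (integral_mono hD_int.abs hAB_int hDbound) ?_)
    rw [integral_const_mul]
    exact mul_le_mul_of_nonneg_left hHold hp0.le
  -- rewrite the goal
  have hΦ : ∀ x : EuclideanSpace ℝ (Fin (m+1)), (‖f x‖ / ‖x‖ ^ α) ^ p = g x := by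
    intro x
    by_cases hx : x = (0 : EuclideanSpace ℝ (Fin (m+1)))
    · subst hx
      simp [hf00, hg_def, hu_def, Real.zero_rpow hp0']
    · have hxpos : 0 < ‖x‖ := norm_pos_iff.mpr hx
      rw [hg_def, hu_def, hw_def,
        Real.div_rpow (norm_nonneg _) (Real.rpow_nonneg (norm_nonneg _) _),
        ← Real.rpow_mul (norm_nonneg x), div_eq_mul_inv, ← Real.rpow_neg (norm_nonneg x),
        ← hr_def]
  have hΨ : ∀ x : EuclideanSpace ℝ (Fin (m+1)), (‖fderiv ℝ f x x‖ / ‖x‖ ^ α) ^ p = G x := by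
    intro x
    by_cases hx : x = (0 : EuclideanSpace ℝ (Fin (m+1)))
    · subst hx
      have : ‖fderiv ℝ f (0 : EuclideanSpace ℝ (Fin (m+1)))
          (0 : EuclideanSpace ℝ (Fin (m+1)))‖ = 0 := by simp
      rw [this]
      have hEf00' : G 0 = 0 := by
        simp [hG_def, hEf00, Real.zero_rpow hp0']
      rw [hEf00', zero_div, Real.zero_rpow hp0']
    · have hxpos : 0 < ‖x‖ := norm_pos_iff.mpr hx
      rw [hG_def, hEf_def, hw_def,
        Real.div_rpow (norm_nonneg _) (Real.rpow_nonneg (norm_nonneg _) _),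
        ← Real.rpow_mul (norm_nonneg x), div_eq_mul_inv, ← Real.rpow_neg (norm_nonneg x),
        ← hr_def]
  simp only [hΦ, hΨ]
  rw [← hI_def, ← hJ_def]
  have habs : |p / β| = p / |β| := by rw [abs_div, abs_of_pos hp0]
  rw [habs]
  rcases eq_or_lt_of_le hI0 with h | h
  · rw [← h, Real.zero_rpow (by positivity : (1:ℝ)/p ≠ 0)]
    exact mul_nonneg (div_nonneg hp0.le (abs_nonneg _)) (Real.rpow_nonneg hJ0 _)
  · have hIqpos : 0 < I ^ (1/q) := Real.rpow_pos_of_pos h _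
    have hsum : 1/p + 1/q = 1 := by
      rw [hq_def]
      field_simp
      ring
    have hIsplit : I = I ^ (1/p) * I ^ (1/q) := by
      rw [← Real.rpow_add h, hsum, Real.rpow_one]
    have h2 : (|β| * I ^ (1/p)) * I ^ (1/q) ≤ (p * J ^ (1/p)) * I ^ (1/q) := by
      calc (|β| * I ^ (1/p)) * I ^ (1/q) = |β| * (I ^ (1/p) * I ^ (1/q)) := by ring
        _ = |β| * I := by rw [← hIsplit]
        _ ≤ p * (I ^ (1/q) * J ^ (1/p)) := hchain
        _ = (p * J ^ (1/p)) * I ^ (1/q) := by ring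
    have h3 : |β| * I ^ (1/p) ≤ p * J ^ (1/p) := le_of_mul_le_mul_right h2 hIqpos
    rw [div_mul_eq_mul_div, le_div_iff₀ hβpos, mul_comm]
    exact h3
end

section
/- Let n ∈ ℕ, 1 < p < ∞, 0 ≤ δ ≤ 1. Then for every f ∈ C_0^∞(ℝ^n \ {0}), the inequality ‖f/|x|^{(n−δp)/p}‖_{L^p(ℝ^n)} ≤ ‖∇f/|x|^{(n−2p)/p}‖_{L^p(ℝ^n)}^δ · ‖f/|x|^{n/p}‖_{L^p(ℝ^n)}^{1−δ} holds. -/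
open Real MeasureTheory Set
open scoped ENNReal

section Lemmas
variable {E : Type*} [NormedAddCommGroup E] [NormedSpace ℝ E]


-- continuity + compact support of weighted integrand
lemma aux_cont {p e ε : ℝ} (hp : 0 < p) (hε : 0 < ε) (g : E → ℝ) (hg : Continuous g)
    (h0 : ∀ x : E, ‖x‖ < ε → g x = 0) :
    Continuous (fun x : E => (|g x| / ‖x‖ ^ e) ^ p) := by
  rw [continuous_iff_continuousAt]
  intro x
  rcases lt_or_ge ‖x‖ ε with hx | hx
  · have hev : (fun y : E => (|g y| / ‖y‖ ^ e) ^ p) =ᶠ[nhds x] (fun _ => (0:ℝ)) := by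
      have : ∀ᶠ y in nhds x, ‖y‖ < ε := by
        have : Continuous fun y : E => ‖y‖ := continuous_norm
        exact this.continuousAt.eventually_lt continuousAt_const hx
      filter_upwards [this] with y hy
      simp [h0 y hy, Real.zero_rpow hp.ne']
    exact ContinuousAt.congr (continuousAt_const) hev.symm
  · have hxpos : 0 < ‖x‖ := lt_of_lt_of_le hε hx
    have h1 : ContinuousAt (fun y : E => |g y| / ‖y‖ ^ e) x := by
      apply ContinuousAt.div
      · exact (hg.abs).continuousAt
      · exact (Real.continuousAt_rpow_const _ _ (Or.inl hxpos.ne')).comp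
          continuous_norm.continuousAt
      · exact (Real.rpow_pos_of_pos hxpos e).ne'
    exact (Real.continuousAt_rpow_const _ _ (Or.inr hp.le)).comp h1

lemma aux_supp {p e : ℝ} (hp : 0 < p) (g : E → ℝ) (hsupp : HasCompactSupport g) :
    HasCompactSupport (fun x : E => (|g x| / ‖x‖ ^ e) ^ p) := by
  apply hsupp.mono'
  intro x hx
  simp only [Function.mem_support, ne_eq] at hx
  by_contra hgx
  apply hx
  rw [image_eq_zero_of_notMem_tsupport hgx]
  simp [Real.zero_rpow hp.ne']

lemma exp_lint : ∫⁻ s in Ioi (0:ℝ), ENNReal.ofReal (Real.exp (-s)) = 1 := by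
  have hi : IntegrableOn (fun s : ℝ => Real.exp (-s)) (Ioi 0) := by
    simpa using exp_neg_integrableOn_Ioi 0 one_pos
  rw [← ofReal_integral_eq_lintegral_ofReal hi
    (Filter.Eventually.of_forall fun s => (Real.exp_pos _).le)]
  rw [integral_exp_neg_Ioi_zero, ENNReal.ofReal_one]

lemma key2 {p : ℝ} (hp : 1 < p) (φ : ℝ → ℝ≥0∞) (hφ : AEMeasurable φ (volume.restrict (Ioi 0))) :
    (∫⁻ s in Ioi (0:ℝ), φ s * ENNReal.ofReal (Real.exp (-s))) ^ p ≤
      ∫⁻ s in Ioi (0:ℝ), (φ s) ^ p * ENNReal.ofReal (Real.exp (-s)) := by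
  have hp0 : (0:ℝ) < p := lt_trans one_pos hp
  set q := Real.conjExponent p with hq
  have hpq : p.HolderConjugate q := Real.HolderConjugate.conjExponent hp
  set Ex : ℝ → ℝ≥0∞ := fun s => ENNReal.ofReal (Real.exp (-s)) with hEx
  have hE0 : ∀ s, Ex s ≠ 0 := fun s => (ENNReal.ofReal_pos.2 (Real.exp_pos _)).ne'
  have hEt : ∀ s, Ex s ≠ ⊤ := fun s => ENNReal.ofReal_ne_top
  have hEmeas : AEMeasurable Ex (volume.restrict (Ioi 0)) :=
    (ENNReal.measurable_ofReal.comp (Real.continuous_exp.comp continuous_neg).measurable).aemeasurable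
  have hsplit : ∀ s, φ s * Ex s = (φ s * Ex s ^ (1/p)) * (Ex s ^ (1/q)) := by
    intro s
    rw [mul_assoc, ← ENNReal.rpow_add _ _ (hE0 s) (hEt s)]
    rw [show 1/p + 1/q = 1 by simpa [one_div] using hpq.inv_add_inv_eq_one, ENNReal.rpow_one]
  have hH := ENNReal.lintegral_mul_le_Lp_mul_Lq (volume.restrict (Ioi 0)) hpq
    (hφ.mul (hEmeas.pow_const (1/p))) (hEmeas.pow_const (1/q))
  simp only [Pi.mul_apply] at hH
  simp only [← hsplit] at hH
  have h1 : ∀ s, (φ s * Ex s ^ (1/p)) ^ p = (φ s) ^ p * Ex s := by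
    intro s
    rw [ENNReal.mul_rpow_of_nonneg _ _ hp0.le, ← ENNReal.rpow_mul,
      one_div_mul_cancel hp0.ne', ENNReal.rpow_one]
  have h2 : ∀ s, (Ex s ^ (1/q)) ^ q = Ex s := by
    intro s
    rw [← ENNReal.rpow_mul, one_div_mul_cancel hpq.symm.ne_zero, ENNReal.rpow_one]
  simp only [h1, h2] at hH
  rw [exp_lint, ENNReal.one_rpow, mul_one] at hH
  calc (∫⁻ s in Ioi (0:ℝ), φ s * Ex s) ^ p
      ≤ ((∫⁻ s in Ioi (0:ℝ), (φ s)^p * Ex s) ^ (1/p)) ^ p := ENNReal.rpow_le_rpow hH hp0.le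
    _ = ∫⁻ s in Ioi (0:ℝ), (φ s)^p * Ex s := by
        rw [← ENNReal.rpow_mul, one_div_mul_cancel hp0.ne', ENNReal.rpow_one]


lemma key1 (f : E → ℝ) (hf : ContDiff ℝ (⊤ : ℕ∞) f) (hsupp : HasCompactSupport f)
    (x : E) (hx : x ≠ 0) :
    ENNReal.ofReal (|f x| * ‖x‖) ≤
      ∫⁻ s in Ioi (0:ℝ),
        ENNReal.ofReal (‖fderiv ℝ f (Real.exp s • x)‖ * ‖Real.exp s • x‖ ^ 2) *
          ENNReal.ofReal (Real.exp (-s)) := by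
  have hxn : 0 < ‖x‖ := norm_pos_iff.2 hx
  obtain ⟨R, hR⟩ := hsupp.isCompact.isBounded.subset_closedBall 0
  set T : ℝ := max 1 (Real.log ((|R| + 1) / ‖x‖) + 1) with hT
  have hT0 : (0:ℝ) < T := lt_of_lt_of_le one_pos (le_max_left _ _)
  have hTg : |R| + 1 < Real.exp T * ‖x‖ := by
    have h1 : (|R| + 1) / ‖x‖ < Real.exp T := by
      have hy : (0:ℝ) < (|R| + 1) / ‖x‖ := div_pos (by positivity) hxn
      calc (|R| + 1) / ‖x‖ = Real.exp (Real.log ((|R| + 1) / ‖x‖)) := (Real.exp_log hy).symm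
        _ < Real.exp T := by
            apply Real.exp_lt_exp.2
            calc Real.log ((|R| + 1) / ‖x‖) < Real.log ((|R| + 1) / ‖x‖) + 1 := by linarith
              _ ≤ T := le_max_right _ _
    calc |R| + 1 = ((|R| + 1) / ‖x‖) * ‖x‖ := by field_simp
      _ < Real.exp T * ‖x‖ := by exact mul_lt_mul_of_pos_right h1 hxn
  set g' : ℝ → ℝ := fun s => (fderiv ℝ f (Real.exp s • x)) (Real.exp s • x) with hg'
  have hderiv : ∀ s : ℝ, HasDerivAt (fun s => f (Real.exp s • x)) (g' s) s := by
    intro s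
    have h1 : HasDerivAt (fun s : ℝ => Real.exp s • x) (Real.exp s • x) s :=
      (Real.hasDerivAt_exp s).smul_const x
    have h2 : HasFDerivAt f (fderiv ℝ f (Real.exp s • x)) (Real.exp s • x) :=
      (hf.differentiable (by simp) (Real.exp s • x)).hasFDerivAt
    exact h2.comp_hasDerivAt s h1
  have hg'cont : Continuous g' := by
    apply Continuous.clm_apply
    · exact (hf.continuous_fderiv (by simp)).comp
        ((Real.continuous_exp).smul continuous_const)
    · exact (Real.continuous_exp).smul continuous_const
  have hftc : ∫ s in (0:ℝ)..T, g' s = f (Real.exp T • x) - f (Real.exp 0 • x) :=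
    intervalIntegral.integral_eq_sub_of_hasDerivAt (fun s _ => hderiv s)
      (hg'cont.intervalIntegrable 0 T)
  have hfT : f (Real.exp T • x) = 0 := by
    apply image_eq_zero_of_notMem_tsupport
    intro hmem
    have := hR hmem
    rw [Metric.mem_closedBall, dist_zero_right, norm_smul, Real.norm_eq_abs,
      abs_of_pos (Real.exp_pos T)] at this
    linarith [le_abs_self R, this, hTg]
  rw [Real.exp_zero, one_smul, hfT, zero_sub] at hftc
  have hfx : |f x| ≤ ∫ s in (0:ℝ)..T, |g' s| := by
    calc |f x| = |∫ s in (0:ℝ)..T, g' s| := by rw [hftc, abs_neg]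
      _ ≤ ∫ s in (0:ℝ)..T, |g' s| :=
        intervalIntegral.abs_integral_le_integral_abs hT0.le
  -- pointwise bound : |g' s| * ‖x‖ ≤ ‖Df(e^s x)‖ * ‖e^s x‖^2 * e^{-s}
  have hpt : ∀ s : ℝ, |g' s| * ‖x‖ ≤
      ‖fderiv ℝ f (Real.exp s • x)‖ * ‖Real.exp s • x‖ ^ 2 * Real.exp (-s) := by
    intro s
    have h1 : |g' s| ≤ ‖fderiv ℝ f (Real.exp s • x)‖ * ‖Real.exp s • x‖ := by
      have h := (fderiv ℝ f (Real.exp s • x)).le_opNorm (Real.exp s • x)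
      rw [← Real.norm_eq_abs]
      exact h
    have hn : ‖Real.exp s • x‖ = Real.exp s * ‖x‖ := by
      rw [norm_smul, Real.norm_eq_abs, abs_of_pos (Real.exp_pos s)]
    have h2 : ‖fderiv ℝ f (Real.exp s • x)‖ * ‖Real.exp s • x‖ ^ 2 * Real.exp (-s)
        = (‖fderiv ℝ f (Real.exp s • x)‖ * ‖Real.exp s • x‖) * ‖x‖ := by
      rw [hn, Real.exp_neg]
      have := (Real.exp_pos s).ne'
      field_simp
    rw [h2]
    exact mul_le_mul_of_nonneg_right h1 (norm_nonneg x)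
  -- now convert
  have habs : ∫ s in (0:ℝ)..T, |g' s| = ∫ s in Ioc (0:ℝ) T, |g' s| := by
    rw [intervalIntegral.integral_of_le hT0.le]
  have hint : IntegrableOn (fun s => |g' s| * ‖x‖) (Ioc (0:ℝ) T) :=
    (((hg'cont.abs).mul continuous_const).intervalIntegrable 0 T).1
  calc ENNReal.ofReal (|f x| * ‖x‖)
      ≤ ENNReal.ofReal ((∫ s in Ioc (0:ℝ) T, |g' s|) * ‖x‖) := by
        apply ENNReal.ofReal_le_ofReal
        apply mul_le_mul_of_nonneg_right _ (norm_nonneg x)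
        rw [← habs]; exact hfx
    _ = ENNReal.ofReal (∫ s in Ioc (0:ℝ) T, |g' s| * ‖x‖) := by
        rw [← integral_mul_const]
    _ = ∫⁻ s in Ioc (0:ℝ) T, ENNReal.ofReal (|g' s| * ‖x‖) := by
        rw [ofReal_integral_eq_lintegral_ofReal hint
          (Filter.Eventually.of_forall fun s => by positivity)]
    _ ≤ ∫⁻ s in Ioc (0:ℝ) T, ENNReal.ofReal
          (‖fderiv ℝ f (Real.exp s • x)‖ * ‖Real.exp s • x‖ ^ 2 * Real.exp (-s)) := by
        apply lintegral_mono
        intro s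
        exact ENNReal.ofReal_le_ofReal (hpt s)
    _ ≤ ∫⁻ s in Ioi (0:ℝ), ENNReal.ofReal
          (‖fderiv ℝ f (Real.exp s • x)‖ * ‖Real.exp s • x‖ ^ 2 * Real.exp (-s)) :=
        lintegral_mono_set Ioc_subset_Ioi_self
    _ = ∫⁻ s in Ioi (0:ℝ),
          ENNReal.ofReal (‖fderiv ℝ f (Real.exp s • x)‖ * ‖Real.exp s • x‖ ^ 2) *
            ENNReal.ofReal (Real.exp (-s)) := by
        congr 1
        funext s
        rw [ENNReal.ofReal_mul (by positivity)]

lemma weight_eq (n k : ℕ) {p t a : ℝ} (hp : 0 < p) (ht : 0 < t) (ha : 0 ≤ a) :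
    ENNReal.ofReal ((a / t ^ (((n:ℝ) - k*p)/p)) ^ p)
      = (ENNReal.ofReal (a * t^k))^p * ((ENNReal.ofReal t)⁻¹)^n := by
  have hreal : (a / t ^ (((n:ℝ) - k*p)/p)) ^ p = (a * t^k)^p * ((t^n)⁻¹ : ℝ) := by
    rw [Real.div_rpow ha (Real.rpow_nonneg ht.le _), ← Real.rpow_mul ht.le,
      div_mul_cancel₀ _ hp.ne', Real.mul_rpow ha (pow_nonneg ht.le k),
      ← Real.rpow_natCast t k, ← Real.rpow_mul ht.le, ← Real.rpow_natCast t n,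
      div_eq_mul_inv, ← Real.rpow_neg ht.le, ← Real.rpow_neg ht.le, mul_assoc,
      ← Real.rpow_add ht]
    congr 1
    ring
  rw [hreal, ENNReal.ofReal_mul (by positivity),
    ENNReal.ofReal_rpow_of_nonneg (by positivity) hp.le,
    ENNReal.ofReal_inv_of_pos (by positivity), ENNReal.ofReal_pow ht.le, ENNReal.inv_pow]

end Lemmas

section Hardy
variable {n : ℕ}

local notation "E'" => EuclideanSpace ℝ (Fin n)

lemma hardy (hn : 0 < n) {p : ℝ} (hp : 1 < p) (f : EuclideanSpace ℝ (Fin n) → ℝ)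
    (hf : ContDiff ℝ (⊤ : ℕ∞) f) (hsupp : HasCompactSupport f)
    {ε : ℝ} (hε : 0 < ε) (hf0 : ∀ x : EuclideanSpace ℝ (Fin n), ‖x‖ < ε → f x = 0) :
    ∫⁻ x : E', ENNReal.ofReal ((|f x| / ‖x‖ ^ (((n:ℝ) - 1*p)/p)) ^ p) ≤
      ∫⁻ x : E', ENNReal.ofReal ((‖fderiv ℝ f x‖ / ‖x‖ ^ (((n:ℝ) - 2*p)/p)) ^ p) := by
  have hp0 : (0:ℝ) < p := lt_trans one_pos hp
  haveI : Nontrivial (EuclideanSpace ℝ (Fin n)) := by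
    have h : 0 < Module.finrank ℝ (EuclideanSpace ℝ (Fin n)) := by
      rw [finrank_euclideanSpace_fin]; exact hn
    exact Module.nontrivial_of_finrank_pos h
  -- derivative vanishes near 0
  have hDf0 : ∀ x : E', ‖x‖ < ε → fderiv ℝ f x = 0 := by
    intro x hx
    have hev : f =ᶠ[nhds x] (fun _ => (0:ℝ)) := by
      have hb : ∀ᶠ y : E' in nhds x, ‖y‖ < ε :=
        continuous_norm.continuousAt.eventually_lt continuousAt_const hx
      filter_upwards [hb] with y hy using hf0 y hy
    rw [hev.fderiv_eq, fderiv_const_apply]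
  set W : E' → ℝ≥0∞ := fun x => ((ENNReal.ofReal ‖x‖)⁻¹)^n with hW
  set Φ : E' → ℝ≥0∞ := fun y => ENNReal.ofReal (‖fderiv ℝ f y‖ * ‖y‖^2) with hΦ
  set V : E' → ℝ≥0∞ := fun y => (Φ y)^p * W y with hV
  have hWmeas : Measurable W :=
    ((ENNReal.measurable_ofReal.comp measurable_norm).inv).pow_const n
  have hΦmeas : Continuous Φ := by
    apply ENNReal.continuous_ofReal.comp
    exact ((hf.continuous_fderiv (by simp)).norm).mul ((continuous_norm).pow 2)
  have hVmeas : Measurable V :=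
    ((ENNReal.continuous_rpow_const.comp hΦmeas).measurable).mul hWmeas
  have hae : ∀ᵐ x : E' ∂volume, x ≠ 0 := by
    rw [ae_iff]
    simpa using measure_singleton (0 : E')
  -- rewrite RHS
  have hRHS : ∫⁻ x : E', ENNReal.ofReal ((‖fderiv ℝ f x‖ / ‖x‖ ^ (((n:ℝ) - 2*p)/p)) ^ p)
      = ∫⁻ x : E', V x := by
    apply lintegral_congr_ae
    filter_upwards [hae] with x hx
    have hxn : 0 < ‖x‖ := norm_pos_iff.2 hx
    have := weight_eq n 2 hp0 hxn (norm_nonneg (fderiv ℝ f x))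
    rw [hV, hΦ]
    push_cast at this ⊢
    rw [this]
  -- rewrite LHS
  have hLHS : ∫⁻ x : E', ENNReal.ofReal ((|f x| / ‖x‖ ^ (((n:ℝ) - 1*p)/p)) ^ p)
      = ∫⁻ x : E', (ENNReal.ofReal (|f x| * ‖x‖))^p * W x := by
    apply lintegral_congr_ae
    filter_upwards [hae] with x hx
    have hxn : 0 < ‖x‖ := norm_pos_iff.2 hx
    have := weight_eq n 1 hp0 hxn (abs_nonneg (f x))
    push_cast at this ⊢
    rw [this, pow_one]
  rw [hLHS, hRHS]
  set Ex : ℝ → ℝ≥0∞ := fun s => ENNReal.ofReal (Real.exp (-s)) with hEx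
  have hExmeas : Measurable Ex :=
    (ENNReal.continuous_ofReal.comp (Real.continuous_exp.comp continuous_neg)).measurable
  -- the pointwise key bound
  have hkey : ∀ x : E', x ≠ 0 → (ENNReal.ofReal (|f x| * ‖x‖))^p ≤
      ∫⁻ s in Ioi (0:ℝ), (Φ (Real.exp s • x))^p * Ex s := by
    intro x hx
    have hφm : AEMeasurable (fun s : ℝ => Φ (Real.exp s • x)) (volume.restrict (Ioi 0)) :=
      (hΦmeas.comp ((Real.continuous_exp).smul continuous_const)).measurable.aemeasurable
    calc (ENNReal.ofReal (|f x| * ‖x‖))^p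
        ≤ (∫⁻ s in Ioi (0:ℝ), Φ (Real.exp s • x) * Ex s)^p :=
          ENNReal.rpow_le_rpow (key1 f hf hsupp x hx) hp0.le
      _ ≤ _ := key2 hp (fun s => Φ (Real.exp s • x)) hφm
  -- scaling identity for each s
  have hscale : ∀ s : ℝ, ∫⁻ x : E', (Φ (Real.exp s • x))^p * W x = ∫⁻ x : E', V x := by
    intro s
    set c : ℝ≥0∞ := ENNReal.ofReal (Real.exp s) with hc
    have hc0 : c ≠ 0 := (ENNReal.ofReal_pos.2 (Real.exp_pos s)).ne'
    have hct : c ≠ ⊤ := ENNReal.ofReal_ne_top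
    have hWsmul : ∀ x : E', W x = c^n * W (Real.exp s • x) := by
      intro x
      have hns : ‖Real.exp s • x‖ = Real.exp s * ‖x‖ := by
        rw [norm_smul, Real.norm_eq_abs, abs_of_pos (Real.exp_pos s)]
      rw [hW]
      simp only []
      rw [hns, ENNReal.ofReal_mul (Real.exp_pos s).le, ENNReal.mul_inv (Or.inl hc0) (Or.inl hct),
        mul_pow, ← mul_assoc, ← mul_pow, ENNReal.mul_inv_cancel hc0 hct, one_pow, one_mul]
    have step1 : ∫⁻ x : E', (Φ (Real.exp s • x))^p * W x
        = ∫⁻ x : E', c^n * V (Real.exp s • x) := by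
      apply lintegral_congr
      intro x
      rw [hWsmul x, hV]
      simp only []
      ring
    have hsm : Measurable fun x : E' => Real.exp s • x := measurable_const_smul _
    have step3 : ∫⁻ x : E', V (Real.exp s • x)
        = ENNReal.ofReal (((Real.exp s)^n)⁻¹) * ∫⁻ x : E', V x := by
      rw [← lintegral_map hVmeas hsm, Measure.map_addHaar_smul volume (Real.exp_pos s).ne',
        lintegral_smul_measure, finrank_euclideanSpace_fin,
        abs_of_pos (by positivity : (0:ℝ) < ((Real.exp s)^n)⁻¹), smul_eq_mul]
    rw [step1, lintegral_const_mul (c^n) (show Measurable fun x : E' => V (Real.exp s • x) from hVmeas.comp hsm), step3, ← mul_assoc,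
      hc, ← ENNReal.ofReal_pow (Real.exp_pos s).le,
      ← ENNReal.ofReal_mul (by positivity), mul_inv_cancel₀ (by positivity), ENNReal.ofReal_one,
      one_mul]
  -- measurability on the product space
  have hprod : Measurable fun q : E' × ℝ => (Φ (Real.exp q.2 • q.1))^p * Ex q.2 * W q.1 := by
    have h1 : Continuous fun q : E' × ℝ => Real.exp q.2 • q.1 :=
      (Real.continuous_exp.comp continuous_snd).smul continuous_fst
    exact (((ENNReal.continuous_rpow_const.comp (hΦmeas.comp h1)).measurable).mul
      (hExmeas.comp measurable_snd)).mul (hWmeas.comp measurable_fst)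
  calc ∫⁻ x : E', (ENNReal.ofReal (|f x| * ‖x‖))^p * W x
      ≤ ∫⁻ x : E', (∫⁻ s in Ioi (0:ℝ), (Φ (Real.exp s • x))^p * Ex s) * W x := by
        apply lintegral_mono_ae
        filter_upwards [hae] with x hx
        exact mul_le_mul_left (hkey x hx) (W x)
    _ = ∫⁻ x : E', ∫⁻ s in Ioi (0:ℝ), (Φ (Real.exp s • x))^p * Ex s * W x := by
        apply lintegral_congr
        intro x
        rw [lintegral_mul_const _ (by fun_prop : Measurable fun s : ℝ => (Φ (Real.exp s • x))^p * Ex s)]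
    _ = ∫⁻ s in Ioi (0:ℝ), ∫⁻ x : E', (Φ (Real.exp s • x))^p * Ex s * W x := by
        exact lintegral_lintegral_swap hprod.aemeasurable
    _ = ∫⁻ s in Ioi (0:ℝ), Ex s * ∫⁻ x : E', (Φ (Real.exp s • x))^p * W x := by
        apply lintegral_congr
        intro s
        rw [← lintegral_const_mul _ (by fun_prop : Measurable fun x : E' => (Φ (Real.exp s • x))^p * W x)]
        apply lintegral_congr
        intro x
        ring
    _ = ∫⁻ s in Ioi (0:ℝ), Ex s * ∫⁻ x : E', V x := by
        apply lintegral_congr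
        intro s
        rw [hscale s]
    _ = (∫⁻ s in Ioi (0:ℝ), Ex s) * ∫⁻ x : E', V x := by
        rw [lintegral_mul_const _ hExmeas]
    _ = ∫⁻ x : E', V x := by rw [hEx, exp_lint, one_mul]

lemma interp_pt {p δ t a : ℝ} (hp : 0 < p) (hδ0 : 0 ≤ δ) (hδ1 : δ ≤ 1)
    (ht : 0 < t) (ha : 0 ≤ a) (n : ℝ) :
    ENNReal.ofReal ((a / t ^ ((n - δ*p)/p)) ^ p)
      = (ENNReal.ofReal ((a / t ^ ((n - 1*p)/p)) ^ p))^δ *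
        (ENNReal.ofReal ((a / t ^ (n/p)) ^ p))^(1-δ) := by
  rcases eq_or_lt_of_le ha with rfl | hapos
  · simp only [zero_div, Real.zero_rpow hp.ne', ENNReal.ofReal_zero]
    rcases eq_or_lt_of_le hδ0 with rfl | hδpos
    · rw [ENNReal.rpow_zero, sub_zero, ENNReal.rpow_one, one_mul]
    · rw [ENNReal.zero_rpow_of_pos hδpos, zero_mul]
  · have key : ∀ c : ℝ, (a / t ^ ((n - c*p)/p)) ^ p = a ^ p * t ^ (c*p - n) := by
      intro c
      rw [Real.div_rpow ha (Real.rpow_nonneg ht.le _), ← Real.rpow_mul ht.le,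
        div_mul_cancel₀ _ hp.ne', div_eq_mul_inv, ← Real.rpow_neg ht.le]
      congr 1
      ring
    have h0 : n / p = (n - 0*p)/p := by ring
    rw [h0, key δ, key 1, key 0,
      ENNReal.ofReal_rpow_of_nonneg (by positivity) hδ0,
      ENNReal.ofReal_rpow_of_nonneg (by positivity) (by linarith : (0:ℝ) ≤ 1 - δ),
      ← ENNReal.ofReal_mul (by positivity)]
    congr 1
    rw [Real.mul_rpow (by positivity) (by positivity),
      Real.mul_rpow (by positivity) (by positivity),
      ← Real.rpow_mul ha, ← Real.rpow_mul ht.le,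
      ← Real.rpow_mul ha, ← Real.rpow_mul ht.le,
      mul_mul_mul_comm, ← Real.rpow_add hapos, ← Real.rpow_add ht]
    congr 1 <;> ring


theorem stmt_5 (n : ℕ) (p δ : ℝ) (hp : 1 < p) (hδ0 : 0 ≤ δ) (hδ1 : δ ≤ 1)
    (f : EuclideanSpace ℝ (Fin n) → ℝ) (hf : ContDiff ℝ (⊤ : ℕ∞) f) (hsupp : HasCompactSupport f)
    (h0 : ∃ ε > (0 : ℝ), ∀ x : EuclideanSpace ℝ (Fin n), ‖x‖ < ε → f x = 0) :
    (∫ x : EuclideanSpace ℝ (Fin n), (|f x| / ‖x‖ ^ (((n : ℝ) - δ * p) / p)) ^ p) ^ (1 / p) ≤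
      ((∫ x : EuclideanSpace ℝ (Fin n),
          (‖fderiv ℝ f x‖ / ‖x‖ ^ (((n : ℝ) - 2 * p) / p)) ^ p) ^ (1 / p)) ^ δ *
      ((∫ x : EuclideanSpace ℝ (Fin n),
          (|f x| / ‖x‖ ^ ((n : ℝ) / p)) ^ p) ^ (1 / p)) ^ (1 - δ) := by
  obtain ⟨ε, hε, hf0⟩ := h0
  have hp0 : (0:ℝ) < p := lt_trans one_pos hp
  rcases Nat.eq_zero_or_pos n with hn | hn
  · -- degenerate case n = 0
    subst hn
    have hx0 : ∀ x : EuclideanSpace ℝ (Fin 0), f x = 0 := fun x => hf0 x (by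
      rw [Subsingleton.elim x 0, norm_zero]; exact hε)
    have hfz : f = fun _ => (0:ℝ) := funext hx0
    have h1 : (∫ x : EuclideanSpace ℝ (Fin 0),
        (|f x| / ‖x‖ ^ ((((0:ℕ):ℝ) - δ * p) / p)) ^ p) = 0 := by
      have : (fun x : EuclideanSpace ℝ (Fin 0) =>
          (|f x| / ‖x‖ ^ ((((0:ℕ):ℝ) - δ * p) / p)) ^ p) = fun _ => 0 := by
        funext x; rw [hx0 x]; simp [Real.zero_rpow hp0.ne']
      rw [this, integral_zero]
    have h2 : (∫ x : EuclideanSpace ℝ (Fin 0),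
        (‖fderiv ℝ f x‖ / ‖x‖ ^ ((((0:ℕ):ℝ) - 2 * p) / p)) ^ p) = 0 := by
      have : (fun x : EuclideanSpace ℝ (Fin 0) =>
          (‖fderiv ℝ f x‖ / ‖x‖ ^ ((((0:ℕ):ℝ) - 2 * p) / p)) ^ p) = fun _ => 0 := by
        funext x; rw [hfz, fderiv_const_apply]; simp [Real.zero_rpow hp0.ne']
      rw [this, integral_zero]
    have h3 : (∫ x : EuclideanSpace ℝ (Fin 0),
        (|f x| / ‖x‖ ^ (((0:ℕ):ℝ) / p)) ^ p) = 0 := by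
      have : (fun x : EuclideanSpace ℝ (Fin 0) =>
          (|f x| / ‖x‖ ^ (((0:ℕ):ℝ) / p)) ^ p) = fun _ => 0 := by
        funext x; rw [hx0 x]; simp [Real.zero_rpow hp0.ne']
      rw [this, integral_zero]
    rw [h1, h2, h3, Real.zero_rpow (one_div_pos.2 hp0).ne']
    exact mul_nonneg (Real.rpow_nonneg le_rfl _) (Real.rpow_nonneg le_rfl _)
  · -- main case
    haveI : Nontrivial (EuclideanSpace ℝ (Fin n)) := by
      have h : 0 < Module.finrank ℝ (EuclideanSpace ℝ (Fin n)) := by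
        rw [finrank_euclideanSpace_fin]; exact hn
      exact Module.nontrivial_of_finrank_pos h
    have hae : ∀ᵐ x : EuclideanSpace ℝ (Fin n) ∂volume, x ≠ 0 := by
      rw [ae_iff]; simpa using measure_singleton (0 : EuclideanSpace ℝ (Fin n))
    have hDf0 : ∀ x : EuclideanSpace ℝ (Fin n), ‖x‖ < ε → fderiv ℝ f x = 0 := by
      intro x hx
      have hev : f =ᶠ[nhds x] (fun _ => (0:ℝ)) := by
        have hb : ∀ᶠ y : EuclideanSpace ℝ (Fin n) in nhds x, ‖y‖ < ε :=
          continuous_norm.continuousAt.eventually_lt continuousAt_const hx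
        filter_upwards [hb] with y hy using hf0 y hy
      rw [hev.fderiv_eq, fderiv_const_apply]
    set gL : EuclideanSpace ℝ (Fin n) → ℝ :=
      fun x => (|f x| / ‖x‖ ^ (((n : ℝ) - δ * p) / p)) ^ p with hgL
    set gA : EuclideanSpace ℝ (Fin n) → ℝ :=
      fun x => (‖fderiv ℝ f x‖ / ‖x‖ ^ (((n : ℝ) - 2 * p) / p)) ^ p with hgA
    set gB : EuclideanSpace ℝ (Fin n) → ℝ :=
      fun x => (|f x| / ‖x‖ ^ ((n : ℝ) / p)) ^ p with hgB
    set gH : EuclideanSpace ℝ (Fin n) → ℝ :=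
      fun x => (|f x| / ‖x‖ ^ (((n : ℝ) - 1 * p) / p)) ^ p with hgH
    have hfc : Continuous f := hf.continuous
    have hDc : Continuous fun x : EuclideanSpace ℝ (Fin n) => ‖fderiv ℝ f x‖ :=
      (hf.continuous_fderiv (by simp)).norm
    have hDsupp : HasCompactSupport fun x : EuclideanSpace ℝ (Fin n) => ‖fderiv ℝ f x‖ :=
      (hsupp.fderiv ℝ).norm
    have hD0 : ∀ x : EuclideanSpace ℝ (Fin n), ‖x‖ < ε → ‖fderiv ℝ f x‖ = 0 := by
      intro x hx; rw [hDf0 x hx, norm_zero]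
    -- integrability
    have intL : Integrable gL :=
      (aux_cont hp0 hε f hfc hf0).integrable_of_hasCompactSupport (aux_supp hp0 f hsupp)
    have intB : Integrable gB :=
      (aux_cont hp0 hε f hfc hf0).integrable_of_hasCompactSupport (aux_supp hp0 f hsupp)
    have intH : Integrable gH :=
      (aux_cont hp0 hε f hfc hf0).integrable_of_hasCompactSupport (aux_supp hp0 f hsupp)
    have habsA : gA = fun x => (|‖fderiv ℝ f x‖| / ‖x‖ ^ (((n : ℝ) - 2 * p) / p)) ^ p := by
      funext x; rw [hgA]; simp only []; rw [abs_norm]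
    have intA : Integrable gA := by
      rw [habsA]
      exact (aux_cont hp0 hε _ hDc hD0).integrable_of_hasCompactSupport (aux_supp hp0 _ hDsupp)
    -- nonnegativity
    have hnnaux : ∀ (a t e : ℝ), 0 ≤ t → 0 ≤ a → 0 ≤ (a / t ^ e) ^ p := fun a t e ht ha =>
      Real.rpow_nonneg (div_nonneg ha (Real.rpow_nonneg ht _)) _
    have hLnn : ∀ x, 0 ≤ gL x := fun x => hnnaux _ _ _ (norm_nonneg x) (abs_nonneg _)
    have hBnn : ∀ x, 0 ≤ gB x := fun x => hnnaux _ _ _ (norm_nonneg x) (abs_nonneg _)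
    have hHnn : ∀ x, 0 ≤ gH x := fun x => hnnaux _ _ _ (norm_nonneg x) (abs_nonneg _)
    have hAnn : ∀ x, 0 ≤ gA x := fun x => hnnaux _ _ _ (norm_nonneg x) (norm_nonneg _)
    -- lintegral versions
    set Ll := ∫⁻ x : EuclideanSpace ℝ (Fin n), ENNReal.ofReal (gL x) with hLl
    set Al := ∫⁻ x : EuclideanSpace ℝ (Fin n), ENNReal.ofReal (gA x) with hAl
    set Bl := ∫⁻ x : EuclideanSpace ℝ (Fin n), ENNReal.ofReal (gB x) with hBl
    set Hl := ∫⁻ x : EuclideanSpace ℝ (Fin n), ENNReal.ofReal (gH x) with hHl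
    have hLeq : ∫ x, gL x = Ll.toReal :=
      integral_eq_lintegral_of_nonneg_ae (Filter.Eventually.of_forall hLnn)
        intL.aestronglyMeasurable
    have hAeq : ∫ x, gA x = Al.toReal :=
      integral_eq_lintegral_of_nonneg_ae (Filter.Eventually.of_forall hAnn)
        intA.aestronglyMeasurable
    have hBeq : ∫ x, gB x = Bl.toReal :=
      integral_eq_lintegral_of_nonneg_ae (Filter.Eventually.of_forall hBnn)
        intB.aestronglyMeasurable
    have hAfin : Al ≠ ⊤ := by
      rw [hAl, ← ofReal_integral_eq_lintegral_ofReal intA (Filter.Eventually.of_forall hAnn)]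
      exact ENNReal.ofReal_ne_top
    have hBfin : Bl ≠ ⊤ := by
      rw [hBl, ← ofReal_integral_eq_lintegral_ofReal intB (Filter.Eventually.of_forall hBnn)]
      exact ENNReal.ofReal_ne_top
    -- interpolation
    have hinterp : Ll ≤ Hl ^ δ * Bl ^ (1 - δ) := by
      have heq : Ll = ∫⁻ x : EuclideanSpace ℝ (Fin n),
          (ENNReal.ofReal (gH x)) ^ δ * (ENNReal.ofReal (gB x)) ^ (1 - δ) := by
        rw [hLl]
        apply lintegral_congr_ae
        filter_upwards [hae] with x hx
        exact interp_pt hp0 hδ0 hδ1 (norm_pos_iff.2 hx) (abs_nonneg (f x)) (n : ℝ)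
      rw [heq, hHl, hBl]
      exact ENNReal.lintegral_mul_norm_pow_le
        (intH.aestronglyMeasurable.aemeasurable.ennreal_ofReal)
        (intB.aestronglyMeasurable.aemeasurable.ennreal_ofReal)
        hδ0 (by linarith) (by ring)
    -- Hardy
    have hHA : Hl ≤ Al := hardy hn hp f hf hsupp hε hf0
    have hchain : Ll ≤ Al ^ δ * Bl ^ (1 - δ) :=
      le_trans hinterp (mul_le_mul_left (ENNReal.rpow_le_rpow hHA hδ0) _)
    -- back to real
    have hABfin : Al ^ δ * Bl ^ (1 - δ) ≠ ⊤ :=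
      ENNReal.mul_ne_top (ENNReal.rpow_ne_top_of_nonneg hδ0 hAfin)
        (ENNReal.rpow_ne_top_of_nonneg (by linarith) hBfin)
    have hmain : ∫ x, gL x ≤ (∫ x, gA x) ^ δ * (∫ x, gB x) ^ (1 - δ) := by
      rw [hLeq, hAeq, hBeq, ENNReal.toReal_rpow, ENNReal.toReal_rpow, ← ENNReal.toReal_mul]
      exact ENNReal.toReal_mono hABfin hchain
    have hL0 : 0 ≤ ∫ x, gL x := integral_nonneg hLnn
    have hA0 : 0 ≤ ∫ x, gA x := integral_nonneg hAnn
    have hB0 : 0 ≤ ∫ x, gB x := integral_nonneg hBnn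
    calc (∫ x, gL x) ^ (1/p)
        ≤ ((∫ x, gA x) ^ δ * (∫ x, gB x) ^ (1 - δ)) ^ (1/p) :=
          Real.rpow_le_rpow hL0 hmain (by positivity)
      _ = ((∫ x, gA x) ^ (1/p)) ^ δ * ((∫ x, gB x) ^ (1/p)) ^ (1 - δ) := by
          rw [Real.mul_rpow (Real.rpow_nonneg hA0 _) (Real.rpow_nonneg hB0 _),
            ← Real.rpow_mul hA0, ← Real.rpow_mul hB0,
            ← Real.rpow_mul hA0, ← Real.rpow_mul hB0,
            mul_comm δ (1/p), mul_comm (1-δ) (1/p)]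

end Hardy
end

section
/- Let n ∈ ℕ, a, b ∈ ℝ, 1 < p < ∞. Then for every f ∈ C_0^∞(ℝ^n \ {0}), |(n − (a+b+1))/p| · ∫_{ℝ^n} |f|^p / |x|^{a+b+1} dx ≤ (∫_{ℝ^n} |∇f|^p / |x|^{ap} dx)^{1/p} · (∫_{ℝ^n} |f|^p / |x|^{bp/(p−1)} dx)^{(p−1)/p}. -/
open Real MeasureTheory

lemma ckn_hasDerivAt_abs_rpow {p : ℝ} (hp : 1 < p) (t : ℝ) :
    HasDerivAt (fun s : ℝ => |s| ^ p) (p * t * |t| ^ (p - 2)) t := by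
  rcases lt_trichotomy t 0 with ht | rfl | ht
  · have h1 : HasDerivAt (fun s : ℝ => (-s) ^ p) (p * (-t) ^ (p - 1) * (-1)) t := by
      have h0 : HasDerivAt (fun s : ℝ => -s) (-1) t := (hasDerivAt_id t).neg
      exact (Real.hasDerivAt_rpow_const (x := -t) (p := p) (Or.inl (by linarith))).comp t h0
    have h2 : (fun s : ℝ => |s| ^ p) =ᶠ[nhds t] fun s : ℝ => (-s) ^ p := by
      filter_upwards [Iio_mem_nhds ht] with s hs
      rw [abs_of_neg hs]
    have h3 : HasDerivAt (fun s : ℝ => |s| ^ p) (p * (-t) ^ (p - 1) * (-1)) t :=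
      h1.congr_of_eventuallyEq h2
    convert h3 using 1
    have hnt : (0:ℝ) < -t := by linarith
    have : (-t : ℝ) ^ (p - 1) = (-t) ^ (p - 2) * (-t) := by
      rw [← Real.rpow_add_one hnt.ne' (p - 2)]; ring_nf
    rw [this, abs_of_neg ht]; ring
  · have hval : p * (0:ℝ) * |(0:ℝ)| ^ (p - 2) = 0 := by ring
    rw [hval, hasDerivAt_iff_tendsto_slope]
    apply squeeze_zero_norm' (a := fun s : ℝ => |s| ^ (p - 1))
    · filter_upwards [self_mem_nhdsWithin] with s hs
      have hs0 : s ≠ 0 := hs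
      have habs : |s| ≠ 0 := abs_ne_zero.mpr hs0
      have h4 : slope (fun s : ℝ => |s| ^ p) 0 s = |s| ^ p / s := by
        simp [slope, Real.zero_rpow (by linarith : p ≠ 0), div_eq_mul_inv, mul_comm]
      rw [h4, Real.norm_eq_abs, abs_div, abs_of_nonneg (Real.rpow_nonneg (abs_nonneg s) p)]
      rw [Real.rpow_sub (abs_pos.mpr hs0), Real.rpow_one]
    · have hc : Filter.Tendsto (fun s : ℝ => |s| ^ (p-1)) (nhds (0:ℝ)) (nhds 0) := by
        have h5 := (Real.continuousAt_rpow_const 0 (p-1) (Or.inr (by linarith))).tendsto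
        rw [Real.zero_rpow (by linarith : p - 1 ≠ 0)] at h5
        have h6 : Filter.Tendsto (fun s : ℝ => |s|) (nhds (0:ℝ)) (nhds 0) := by
          simpa using continuous_abs.tendsto (0:ℝ)
        exact h5.comp h6
      exact hc.mono_left nhdsWithin_le_nhds
  · have h1 : HasDerivAt (fun s : ℝ => s ^ p) (p * t ^ (p - 1)) t :=
      Real.hasDerivAt_rpow_const (Or.inl ht.ne')
    have h2 : (fun s : ℝ => |s| ^ p) =ᶠ[nhds t] fun s : ℝ => s ^ p := by
      filter_upwards [Ioi_mem_nhds ht] with s hs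
      rw [abs_of_pos hs]
    have h3 : HasDerivAt (fun s : ℝ => |s| ^ p) (p * t ^ (p - 1)) t := h1.congr_of_eventuallyEq h2
    convert h3 using 1
    have : t ^ (p - 1) = t ^ (p - 2) * t := by
      rw [← Real.rpow_add_one ht.ne' (p - 2)]; ring_nf
    rw [this, abs_of_pos ht]; ring

lemma ckn_continuous_absDeriv {p : ℝ} (hp : 1 < p) :
    Continuous (fun t : ℝ => p * t * |t| ^ (p - 2)) := by
  rw [continuous_iff_continuousAt]
  intro t
  rcases eq_or_ne t 0 with rfl | ht
  · have hval : p * (0:ℝ) * |(0:ℝ)| ^ (p - 2) = 0 := by ring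
    have hval2 : (fun t : ℝ => p * t * |t| ^ (p - 2)) 0 = 0 := by simp
    unfold ContinuousAt
    rw [hval2]
    apply squeeze_zero_norm' (a := fun s : ℝ => p * |s| ^ (p - 1))
    · filter_upwards with s
      rcases eq_or_ne s 0 with rfl | hs
      · simp [Real.zero_rpow (by linarith : p - 1 ≠ 0)]
      · have habs : |s| ≠ 0 := abs_ne_zero.mpr hs
        rw [Real.norm_eq_abs, abs_mul, abs_mul, abs_of_pos (by linarith : (0:ℝ) < p),
          Real.abs_rpow_of_nonneg (abs_nonneg s), abs_abs,
          mul_assoc, mul_comm (|s|) (|s| ^ (p-2)), ← Real.rpow_add_one habs (p-2)]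
        ring_nf
        exact le_refl _
    · have hc : Filter.Tendsto (fun s : ℝ => |s| ^ (p-1)) (nhds (0:ℝ)) (nhds 0) := by
        have h5 := (Real.continuousAt_rpow_const 0 (p-1) (Or.inr (by linarith))).tendsto
        rw [Real.zero_rpow (by linarith : p - 1 ≠ 0)] at h5
        have h6 : Filter.Tendsto (fun s : ℝ => |s|) (nhds (0:ℝ)) (nhds 0) := by
          simpa using continuous_abs.tendsto (0:ℝ)
        exact h5.comp h6
      simpa using Filter.Tendsto.const_mul p hc
  · exact (continuousAt_const.mul continuousAt_id).mul
      ((Real.continuousAt_rpow_const _ _ (Or.inl (abs_ne_zero.mpr ht))).comp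
        continuous_abs.continuousAt)

lemma ckn_decomp {n : ℕ} (x : EuclideanSpace ℝ (Fin n)) :
    x = ∑ i, x i • EuclideanSpace.single i (1:ℝ) := by
  ext j
  rw [WithLp.ofLp_sum, Finset.sum_apply]
  simp [EuclideanSpace.single_apply]

lemma ckn_clm_eval {n : ℕ} (L : EuclideanSpace ℝ (Fin n) →L[ℝ] ℝ) (x : EuclideanSpace ℝ (Fin n)) :
    L x = ∑ i, x i * L (EuclideanSpace.single i (1:ℝ)) := by
  conv_lhs => rw [ckn_decomp x]
  rw [map_sum]
  simp

theorem stmt_6 (n : ℕ) (a b p : ℝ) (hp : 1 < p)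
    (f : EuclideanSpace ℝ (Fin n) → ℝ) (hf : ContDiff ℝ (⊤ : ℕ∞) f) (hsupp : HasCompactSupport f)
    (h0 : ∃ ε > (0 : ℝ), ∀ x : EuclideanSpace ℝ (Fin n), ‖x‖ < ε → f x = 0) :
    |((n : ℝ) - (a + b + 1)) / p| *
        ∫ x : EuclideanSpace ℝ (Fin n), |f x| ^ p / ‖x‖ ^ (a + b + 1) ≤
      (∫ x : EuclideanSpace ℝ (Fin n), ‖fderiv ℝ f x‖ ^ p / ‖x‖ ^ (a * p)) ^ (1 / p) *
      (∫ x : EuclideanSpace ℝ (Fin n), |f x| ^ p / ‖x‖ ^ (b * p / (p - 1))) ^ ((p - 1) / p) := by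
  classical
  obtain ⟨ε, hε, hf0⟩ := h0
  have hp0 : (0:ℝ) < p := lt_trans one_pos hp
  have hp1 : (0:ℝ) < p - 1 := by linarith
  set c : ℝ := a + b + 1 with hc_def
  set q : ℝ := p / (p - 1) with hq_def
  have hconj : p.HolderConjugate q := (Real.holderConjugate_iff_eq_conjExponent hp).2 hq_def
  -- f and its derivative vanish near 0
  have hf0' : ∀ x : EuclideanSpace ℝ (Fin n), ‖x‖ < ε →
      f =ᶠ[nhds x] (fun _ => (0:ℝ)) := by
    intro x hx
    have hball : Metric.ball (0 : EuclideanSpace ℝ (Fin n)) ε ∈ nhds x :=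
      Metric.isOpen_ball.mem_nhds (by simpa [mem_ball_zero_iff] using hx)
    filter_upwards [hball] with y hy
    exact hf0 y (mem_ball_zero_iff.mp hy)
  have hDf0 : ∀ x : EuclideanSpace ℝ (Fin n), ‖x‖ < ε → fderiv ℝ f x = 0 := by
    intro x hx
    rw [(hf0' x hx).fderiv_eq]
    exact fderiv_const_apply 0
  -- cutoff function
  obtain ⟨χ, hχ_smooth, hχ0, hχ1⟩ :
      ∃ χ : EuclideanSpace ℝ (Fin n) → ℝ, ContDiff ℝ ((⊤:ℕ∞)) χ ∧
        (∀ x, ‖x‖ ≤ ε/2 → χ x = 0) ∧ (∀ x, 3*ε/4 ≤ ‖x‖ → χ x = 1) := by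
    have hb : (0:ℝ) < ε/2 := by positivity
    have hlt : ε/2 < 3*ε/4 := by linarith
    set B : ContDiffBump (0 : EuclideanSpace ℝ (Fin n)) := ⟨ε/2, 3*ε/4, hb, hlt⟩ with hB
    refine ⟨fun x => 1 - B x, contDiff_const.sub B.contDiff, ?_, ?_⟩
    · intro x hx
      have h1 : B x = 1 := B.one_of_mem_closedBall
        (by simpa [Metric.mem_closedBall, dist_zero_right, hB] using hx)
      simp [h1]
    · intro x hx
      have h1 : B x = 0 := B.zero_of_le_dist (by simpa [dist_zero_right, hB] using hx)
      simp [h1]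
  -- main objects
  set e : Fin n → EuclideanSpace ℝ (Fin n) := fun i => EuclideanSpace.single i (1:ℝ) with he_def
  set r : EuclideanSpace ℝ (Fin n) → ℝ := fun x => ‖x‖ ^ (-c) with hr_def
  set u : EuclideanSpace ℝ (Fin n) → ℝ := fun x => |f x| ^ p with hu_def
  set φ : EuclideanSpace ℝ (Fin n) → ℝ := fun x => p * f x * |f x| ^ (p - 2) with hφ_def
  set g : Fin n → EuclideanSpace ℝ (Fin n) → ℝ := fun i x => χ x * (x i * r x) with hg_def
  set G : EuclideanSpace ℝ (Fin n) → ℝ := fun x => ‖fderiv ℝ f x‖ * ‖x‖ ^ (-a) with hG_def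
  set H : EuclideanSpace ℝ (Fin n) → ℝ := fun x => |f x| ^ (p-1) * ‖x‖ ^ (-b) with hH_def
  set W : EuclideanSpace ℝ (Fin n) → ℝ := fun x => φ x * (fderiv ℝ f x x * r x) with hW_def
  set Kv : EuclideanSpace ℝ (Fin n) → ℝ :=
    fun x => |f x| ^ (p-1) * (‖fderiv ℝ f x‖ * ‖x‖ ^ (1 - c)) with hKv_def
  -- basic differentiability facts
  have hfd : Differentiable ℝ f := hf.differentiable (by simp)
  have hu_deriv : ∀ x, HasFDerivAt u (φ x • fderiv ℝ f x) x := by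
    intro x
    exact (ckn_hasDerivAt_abs_rpow hp (f x)).comp_hasFDerivAt x (hfd x).hasFDerivAt
  have hDu : ∀ x, fderiv ℝ u x = φ x • fderiv ℝ f x := fun x => (hu_deriv x).fderiv
  have hu_diff : Differentiable ℝ u := fun x => (hu_deriv x).differentiableAt
  have hu_eps : ∀ x : EuclideanSpace ℝ (Fin n), ‖x‖ < ε → u x = 0 := by
    intro x hx
    simp [hu_def, hf0 x hx, Real.zero_rpow hp0.ne']
  have hφ0 : ∀ x, f x = 0 → φ x = 0 := by
    intro x h
    simp [hφ_def, h]
  have hfK : ∀ x ∉ tsupport f, f x = 0 := fun x hx => image_eq_zero_of_notMem_tsupport hx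
  have hDfK : ∀ x ∉ tsupport f, fderiv ℝ f x = 0 := by
    intro x hx
    rw [(notMem_tsupport_iff_eventuallyEq.1 hx).fderiv_eq]
    exact fderiv_const_apply 0
  have huK : ∀ x ∉ tsupport f, u x = 0 := by
    intro x hx
    simp [hu_def, hfK x hx, Real.zero_rpow hp0.ne']
  -- smoothness of g i
  have hproj : ∀ i, ∀ x : EuclideanSpace ℝ (Fin n),
      HasFDerivAt (fun y : EuclideanSpace ℝ (Fin n) => y i)
        (EuclideanSpace.proj (𝕜 := ℝ) i) x := by
    intro i x
    exact (EuclideanSpace.proj (𝕜 := ℝ) i).hasFDerivAt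
  have hg_smooth : ∀ i, ContDiff ℝ ((⊤:ℕ∞)) (g i) := by
    intro i
    rw [contDiff_iff_contDiffAt]
    intro x
    rcases lt_or_ge ‖x‖ (ε/2) with hx | hx
    · have hev : g i =ᶠ[nhds x] (fun _ => (0:ℝ)) := by
        have hball : Metric.ball (0 : EuclideanSpace ℝ (Fin n)) (ε/2) ∈ nhds x :=
          Metric.isOpen_ball.mem_nhds (by simpa [mem_ball_zero_iff] using hx)
        filter_upwards [hball] with y hy
        simp [hg_def, hχ0 y (le_of_lt (mem_ball_zero_iff.mp hy))]
      exact contDiffAt_const.congr_of_eventuallyEq hev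
    · have hx0 : x ≠ 0 := by
        intro h
        rw [h, norm_zero] at hx
        linarith
      have h2 : ContDiffAt ℝ ((⊤:ℕ∞)) (fun y : EuclideanSpace ℝ (Fin n) => y i) x :=
        (EuclideanSpace.proj (𝕜 := ℝ) i).contDiff.contDiffAt
      have h3 : ContDiffAt ℝ ((⊤:ℕ∞)) r x := by
        have hnorm : ContDiffAt ℝ ((⊤:ℕ∞)) (fun y : EuclideanSpace ℝ (Fin n) => ‖y‖) x :=
          contDiffAt_norm ℝ hx0
        have hr2 : ContDiffAt ℝ ((⊤:ℕ∞)) (fun t : ℝ => t ^ (-c)) (‖x‖) :=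
          Real.contDiffAt_rpow_const_of_ne (norm_ne_zero_iff.mpr hx0)
        exact hr2.comp x hnorm
      exact hχ_smooth.contDiffAt.mul (h2.mul h3)
  have hg_diff : ∀ i, Differentiable ℝ (g i) :=
    fun i => (hg_smooth i).differentiable (by simp)
  have hDg_cont : ∀ i, Continuous (fun x => fderiv ℝ (g i) x) :=
    fun i => (hg_smooth i).continuous_fderiv (by simp)
  have hg_eps : ∀ i, ∀ x : EuclideanSpace ℝ (Fin n), ‖x‖ < ε/2 → g i x = 0 := by
    intro i x hx
    simp [hg_def, hχ0 x hx.le]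
  -- continuity facts
  have hDf_cont : Continuous (fun x => fderiv ℝ f x) := hf.continuous_fderiv (by simp)
  have hu_cont : Continuous u :=
    (continuous_abs.comp hf.continuous).rpow_const (fun x => Or.inr hp0.le)
  have hφ_cont : Continuous φ := (ckn_continuous_absDeriv hp).comp hf.continuous
  have hrpow_contAt : ∀ (d : ℝ) (x : EuclideanSpace ℝ (Fin n)), x ≠ 0 →
      ContinuousAt (fun y : EuclideanSpace ℝ (Fin n) => ‖y‖ ^ d) x := by
    intro d x hx
    exact (Real.continuousAt_rpow_const (‖x‖) d
      (Or.inl (norm_ne_zero_iff.mpr hx))).comp continuous_norm.continuousAt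
  have habs_contAt : ∀ (d : ℝ), 0 ≤ d → Continuous (fun x => |f x| ^ d) := by
    intro d hd
    exact (continuous_abs.comp hf.continuous).rpow_const (fun x => Or.inr hd)
  -- generic integrability helper
  have key_cont : ∀ F : EuclideanSpace ℝ (Fin n) → ℝ,
      (∀ x, ‖x‖ < ε/2 → F x = 0) → (∀ x, x ≠ 0 → ContinuousAt F x) → Continuous F := by
    intro F h1 h2
    rw [continuous_iff_continuousAt]
    intro x
    rcases eq_or_ne x 0 with rfl | hx
    · have hev : F =ᶠ[nhds (0:EuclideanSpace ℝ (Fin n))] (fun _ => (0:ℝ)) := by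
        filter_upwards [Metric.ball_mem_nhds _ (by positivity : (0:ℝ) < ε/2)] with y hy
        exact h1 y (mem_ball_zero_iff.mp hy)
      exact ContinuousAt.congr continuousAt_const hev.symm
    · exact h2 x hx
  have key_int : ∀ F : EuclideanSpace ℝ (Fin n) → ℝ, (∀ x ∉ tsupport f, F x = 0) →
      (∀ x, ‖x‖ < ε/2 → F x = 0) → (∀ x, x ≠ 0 → ContinuousAt F x) →
      Integrable F volume ∧ ∀ s : ENNReal, MemLp F s volume := by
    intro F hK0 h1 h2
    have hcont := key_cont F h1 h2
    have hcs : HasCompactSupport F := HasCompactSupport.intro hsupp hK0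
    exact ⟨hcont.integrable_of_hasCompactSupport hcs,
      fun s => hcont.memLp_of_hasCompactSupport hcs⟩
  -- integrability of the various integrands
  have hintA : ∀ i, Integrable (fun x => u x * fderiv ℝ (g i) x (e i)) volume := by
    intro i
    refine (key_int _ ?_ ?_ ?_).1
    · intro x hx; rw [huK x hx, zero_mul]
    · intro x hx; rw [hu_eps x (by linarith), zero_mul]
    · intro x _
      exact (hu_cont.continuousAt).mul
        (((hDg_cont i).clm_apply continuous_const).continuousAt)
  have hintB : ∀ i, Integrable (fun x => fderiv ℝ u x (e i) * g i x) volume := by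
    intro i
    have heq : (fun x => fderiv ℝ u x (e i) * g i x)
        = fun x => (φ x * fderiv ℝ f x (e i)) * g i x := by
      funext x
      rw [hDu x]
      simp [ContinuousLinearMap.smul_apply]
    rw [heq]
    refine (key_int _ ?_ ?_ ?_).1
    · intro x hx; rw [hDfK x hx]; simp
    · intro x hx; rw [hg_eps i x hx, mul_zero]
    · intro x _
      exact ((hφ_cont.continuousAt).mul
        ((hDf_cont.clm_apply continuous_const).continuousAt)).mul
        ((hg_smooth i).continuous.continuousAt)
  have hintC : ∀ i, Integrable (fun x => u x * g i x) volume := by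
    intro i
    refine (key_int _ ?_ ?_ ?_).1
    · intro x hx; rw [huK x hx, zero_mul]
    · intro x hx; rw [hg_eps i x hx, mul_zero]
    · intro x _
      exact hu_cont.continuousAt.mul ((hg_smooth i).continuous.continuousAt)
  have hintW : Integrable W volume := by
    refine (key_int _ ?_ ?_ ?_).1
    · intro x hx; rw [hW_def]; simp only; rw [hDfK x hx]; simp
    · intro x hx; rw [hW_def]; simp only; rw [hDf0 x (by linarith)]; simp
    · intro x hx
      exact hφ_cont.continuousAt.mul
        (((hDf_cont.clm_apply continuous_id).continuousAt).mul
          ((hrpow_contAt (-c) x hx)))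
  have hintKv : Integrable Kv volume := by
    refine (key_int _ ?_ ?_ ?_).1
    · intro x hx
      rw [hKv_def]; simp only
      rw [hfK x hx]
      simp [Real.zero_rpow hp1.ne']
    · intro x hx
      rw [hKv_def]; simp only
      rw [hf0 x (by linarith)]
      simp [Real.zero_rpow hp1.ne']
    · intro x hx
      exact ((habs_contAt (p-1) hp1.le).continuousAt).mul
        ((hDf_cont.norm.continuousAt).mul (hrpow_contAt (1-c) x hx))
  have hmemG : MemLp G (ENNReal.ofReal p) volume := by
    refine ((key_int _ ?_ ?_ ?_).2 _)
    · intro x hx; rw [hG_def]; simp only; rw [hDfK x hx]; simp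
    · intro x hx; rw [hG_def]; simp only; rw [hDf0 x (by linarith)]; simp
    · intro x hx
      exact (hDf_cont.norm.continuousAt).mul (hrpow_contAt (-a) x hx)
  have hmemH : MemLp H (ENNReal.ofReal q) volume := by
    refine ((key_int _ ?_ ?_ ?_).2 _)
    · intro x hx
      rw [hH_def]; simp only
      rw [hfK x hx]
      simp [Real.zero_rpow hp1.ne']
    · intro x hx
      rw [hH_def]; simp only
      rw [hf0 x (by linarith)]
      simp [Real.zero_rpow hp1.ne']
    · intro x hx
      exact ((habs_contAt (p-1) hp1.le).continuousAt).mul (hrpow_contAt (-b) x hx)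
  have hintGp : Integrable (fun x => G x ^ p) volume := by
    refine (key_int _ ?_ ?_ ?_).1
    · intro x hx
      rw [hG_def]; simp only; rw [hDfK x hx]
      simp [Real.zero_rpow hp0.ne']
    · intro x hx
      rw [hG_def]; simp only; rw [hDf0 x (by linarith)]
      simp [Real.zero_rpow hp0.ne']
    · intro x hx
      exact (Real.continuousAt_rpow_const (G x) p (Or.inr hp0.le)).comp
        ((hDf_cont.norm.continuousAt).mul (hrpow_contAt (-a) x hx))
  -- the divergence identity: pointwise computation for ‖x‖ ≥ ε
  have hdiv : ∀ x : EuclideanSpace ℝ (Fin n), ε ≤ ‖x‖ →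
      (∑ i, fderiv ℝ (g i) x (e i)) = ((n:ℝ) - c) * r x := by
    intro x hx
    have hx0 : x ≠ 0 := by
      intro h
      rw [h, norm_zero] at hx
      linarith
    have hxpos : (0:ℝ) < ‖x‖ := norm_pos_iff.mpr hx0
    set t₀ : ℝ := (inner ℝ x x : ℝ) with ht₀_def
    have ht₀_eq : t₀ = ‖x‖ ^ 2 := real_inner_self_eq_norm_sq x
    have ht₀_pos : (0:ℝ) < t₀ := by
      rw [ht₀_eq]
      positivity
    set N : EuclideanSpace ℝ (Fin n) →L[ℝ] ℝ :=
      (fderivInnerCLM ℝ (x, x)).comp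
        ((ContinuousLinearMap.id ℝ _).prod (ContinuousLinearMap.id ℝ _)) with hN_def
    have hnsq : HasFDerivAt (fun y : EuclideanSpace ℝ (Fin n) => (inner ℝ y y : ℝ)) N x :=
      (hasFDerivAt_id x).inner ℝ (hasFDerivAt_id x)
    have hN_apply : ∀ v : EuclideanSpace ℝ (Fin n), N v = 2 * (inner ℝ x v : ℝ) := by
      intro v
      rw [hN_def]
      simp only [ContinuousLinearMap.coe_comp', Function.comp_apply,
        ContinuousLinearMap.prod_apply, ContinuousLinearMap.coe_id', id_eq,
        fderivInnerCLM_apply]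
      rw [real_inner_comm v x]
      ring
    have hr_fun : r = fun y : EuclideanSpace ℝ (Fin n) => (inner ℝ y y : ℝ) ^ (-c/2) := by
      funext y
      rw [hr_def]
      simp only
      rw [real_inner_self_eq_norm_sq y, ← Real.rpow_natCast ‖y‖ 2,
        ← Real.rpow_mul (norm_nonneg y)]
      norm_num
      congr 1
      ring
    have hrpow_deriv : HasDerivAt (fun t : ℝ => t ^ (-c/2)) ((-c/2) * t₀ ^ (-c/2 - 1)) t₀ :=
      Real.hasDerivAt_rpow_const (Or.inl ht₀_pos.ne')
    have hr_deriv : HasFDerivAt r (((-c/2) * t₀ ^ (-c/2 - 1)) • N) x := by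
      rw [hr_fun]
      exact hrpow_deriv.comp_hasFDerivAt x hnsq
    have hgder : ∀ i, fderiv ℝ (g i) x (e i)
        = x i * (((-c/2) * t₀ ^ (-c/2 - 1)) * (2 * x i)) + r x := by
      intro i
      have hev : g i =ᶠ[nhds x] (fun y => y i * r y) := by
        filter_upwards [(isOpen_lt continuous_const continuous_norm).mem_nhds
          (show (3*ε/4 : ℝ) < ‖x‖ by linarith)] with y hy
        have hy1 : χ y = 1 := hχ1 y (le_of_lt hy)
        simp [hg_def, hy1]
      have hder : HasFDerivAt (fun y : EuclideanSpace ℝ (Fin n) => y i * r y)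
          ((fun y : EuclideanSpace ℝ (Fin n) => y i) x • (((-c/2) * t₀ ^ (-c/2 - 1)) • N)
            + r x • (EuclideanSpace.proj (𝕜 := ℝ) i)) x :=
        (hproj i x).mul hr_deriv
      rw [hev.fderiv_eq, hder.fderiv]
      have hNei : N (e i) = 2 * x i := by
        rw [hN_apply (e i), he_def]
        simp [EuclideanSpace.inner_single_right]
      have hproj_ei : (EuclideanSpace.proj (𝕜 := ℝ) i) (e i) = 1 := by
        rw [he_def]
        simp [EuclideanSpace.single_apply]
      simp only [ContinuousLinearMap.add_apply, ContinuousLinearMap.coe_smul',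
        Pi.smul_apply, smul_eq_mul, hNei, hproj_ei]
      ring
    have hsum_sq : (∑ i, x i * x i) = t₀ := by
      rw [ht₀_def, PiLp.inner_apply]
      simp [RCLike.inner_apply, conj_trivial, sq]
    have hrx : r x = t₀ ^ (-c/2) := by
      rw [hr_fun]
    calc (∑ i, fderiv ℝ (g i) x (e i))
        = ∑ i, (x i * (((-c/2) * t₀ ^ (-c/2 - 1)) * (2 * x i)) + r x) :=
          Finset.sum_congr rfl (fun i _ => hgder i)
      _ = ((-c) * t₀ ^ (-c/2 - 1)) * (∑ i, x i * x i) + (n:ℝ) * r x := by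
          rw [Finset.sum_add_distrib, Finset.sum_const, Finset.card_univ, Fintype.card_fin]
          have hterm : ∀ i, x i * (((-c/2) * t₀ ^ (-c/2 - 1)) * (2 * x i))
              = ((-c) * t₀ ^ (-c/2-1)) * (x i * x i) := fun i => by ring
          rw [Finset.sum_congr rfl (fun i _ => hterm i), ← Finset.mul_sum]
          simp [nsmul_eq_mul]
      _ = (-c) * t₀ ^ (-c/2 - 1) * t₀ + (n:ℝ) * r x := by rw [hsum_sq]
      _ = (-c) * t₀ ^ (-c/2) + (n:ℝ) * r x := by
          rw [mul_assoc, ← Real.rpow_add_one ht₀_pos.ne' (-c/2 - 1)]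
          norm_num
      _ = ((n:ℝ) - c) * r x := by
          rw [hrx]
          ring
  -- pointwise identity 1
  have hsum1 : ∀ x : EuclideanSpace ℝ (Fin n),
      (∑ i, u x * fderiv ℝ (g i) x (e i)) = ((n:ℝ) - c) * (u x * r x) := by
    intro x
    rcases lt_or_ge ‖x‖ ε with hx | hx
    · simp [hu_eps x hx]
    · rw [← Finset.mul_sum, hdiv x hx]
      ring
  -- pointwise identity 2
  have hsum2 : ∀ x : EuclideanSpace ℝ (Fin n),
      (∑ i, fderiv ℝ u x (e i) * g i x) = W x := by
    intro x
    rcases eq_or_ne (f x) 0 with hfx | hfx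
    · have h1 : ∀ i, fderiv ℝ u x (e i) = 0 := by
        intro i
        rw [hDu x, hφ0 x hfx]
        simp
      have h2 : φ x = 0 := hφ0 x hfx
      simp [hW_def, h1, h2]
    · have hx_eps : ε ≤ ‖x‖ := by
        by_contra hlt
        exact hfx (hf0 x (by linarith [not_le.mp hlt]))
      have hχx : ∀ y : EuclideanSpace ℝ (Fin n), y = x → χ y = 1 :=
        fun y hy => hy ▸ hχ1 x (by linarith)
      calc (∑ i, fderiv ℝ u x (e i) * g i x)
          = ∑ i, (φ x * r x) * (x i * fderiv ℝ f x (e i)) := by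
            apply Finset.sum_congr rfl
            intro i _
            rw [hDu x]
            simp only [hg_def, ContinuousLinearMap.coe_smul', Pi.smul_apply, smul_eq_mul]
            rw [hχx x rfl]
            ring
        _ = (φ x * r x) * ∑ i, x i * fderiv ℝ f x (e i) := by rw [Finset.mul_sum]
        _ = (φ x * r x) * fderiv ℝ f x x := by rw [← ckn_clm_eval]
        _ = W x := by rw [hW_def]; ring
  -- Step A : the integral identity
  have stepA : ((n:ℝ) - c) * (∫ x, u x * r x) = - ∫ x, W x := by
    have hIBP : ∀ i, (∫ x, u x * fderiv ℝ (g i) x (e i))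
        = - ∫ x, fderiv ℝ u x (e i) * g i x := by
      intro i
      exact integral_mul_fderiv_eq_neg_fderiv_mul_of_integrable
        (hintB i) (hintA i) (hintC i) (fun x _ => hu_diff x) (fun x _ => hg_diff i x)
    calc ((n:ℝ) - c) * (∫ x, u x * r x)
        = ∫ x, ((n:ℝ) - c) * (u x * r x) := (integral_const_mul _ _).symm
      _ = ∫ x, ∑ i, u x * fderiv ℝ (g i) x (e i) := by
          refine integral_congr_ae (Filter.Eventually.of_forall fun x => ?_)
          exact (hsum1 x).symm
      _ = ∑ i, ∫ x, u x * fderiv ℝ (g i) x (e i) :=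
          integral_finset_sum _ (fun i _ => hintA i)
      _ = ∑ i, - ∫ x, fderiv ℝ u x (e i) * g i x :=
          Finset.sum_congr rfl (fun i _ => hIBP i)
      _ = - ∑ i, ∫ x, fderiv ℝ u x (e i) * g i x := by rw [Finset.sum_neg_distrib]
      _ = - ∫ x, ∑ i, fderiv ℝ u x (e i) * g i x := by
          rw [integral_finset_sum _ (fun i _ => hintB i)]
      _ = - ∫ x, W x := by
          congr 1
          refine integral_congr_ae (Filter.Eventually.of_forall fun x => ?_)
          exact hsum2 x
  -- Step B
  have hInonneg : 0 ≤ ∫ x, u x * r x := by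
    apply integral_nonneg
    intro x
    exact mul_nonneg (Real.rpow_nonneg (abs_nonneg _) _) (Real.rpow_nonneg (norm_nonneg _) _)
  have hptwise : ∀ x : EuclideanSpace ℝ (Fin n), |W x| ≤ p * Kv x := by
    intro x
    rcases eq_or_ne x 0 with rfl | hx0
    · have hW0 : W 0 = 0 := by
        rw [hW_def]; simp
      rw [hW0, abs_zero]
      have hKv0 : 0 ≤ Kv 0 := by
        rw [hKv_def]
        simp only
        have := Real.rpow_nonneg (abs_nonneg (f 0)) (p-1)
        have := Real.rpow_nonneg (norm_nonneg (0:EuclideanSpace ℝ (Fin n))) (1-c)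
        positivity
      exact mul_nonneg hp0.le hKv0
    · have e3 : (0:ℝ) ≤ r x := Real.rpow_nonneg (norm_nonneg _) _
      have e1 : |φ x| ≤ p * |f x| ^ (p-1) := by
        rw [hφ_def]; simp only
        rw [abs_mul, abs_mul, abs_of_pos hp0, Real.abs_rpow_of_nonneg (abs_nonneg _), abs_abs]
        rcases eq_or_ne (f x) 0 with h | h
        · simp [h, Real.zero_rpow hp1.ne']
        · have habs : |f x| ≠ 0 := abs_ne_zero.mpr h
          rw [mul_assoc, mul_comm (|f x|) (|f x| ^ (p-2)), ← Real.rpow_add_one habs (p-2)]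
          ring_nf
          exact le_refl _
      have e2 : |fderiv ℝ f x x| ≤ ‖fderiv ℝ f x‖ * ‖x‖ := by
        have h := (fderiv ℝ f x).le_opNorm x
        rwa [Real.norm_eq_abs] at h
      have e4 : ‖x‖ * r x = ‖x‖ ^ (1 - c) := by
        rw [hr_def]; simp only
        rw [show (1 - c) = 1 + -c by ring, Real.rpow_add (norm_pos_iff.mpr hx0), Real.rpow_one]
      calc |W x| = |φ x| * (|fderiv ℝ f x x| * r x) := by
            have hWx : W x = φ x * (fderiv ℝ f x x * r x) := rfl
            simp only [hWx, abs_mul, abs_of_nonneg e3]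
        _ ≤ (p * |f x| ^ (p-1)) * ((‖fderiv ℝ f x‖ * ‖x‖) * r x) := by
            refine mul_le_mul e1 (mul_le_mul_of_nonneg_right e2 e3) ?_ ?_
            · exact mul_nonneg (abs_nonneg _) e3
            · exact mul_nonneg hp0.le (Real.rpow_nonneg (abs_nonneg _) _)
        _ = p * (|f x| ^ (p-1) * (‖fderiv ℝ f x‖ * (‖x‖ * r x))) := by ring
        _ = p * Kv x := by rw [e4, hKv_def]
  have stepB : |(n:ℝ) - c| * (∫ x, u x * r x) ≤ p * ∫ x, Kv x := by
    have h1 : |(n:ℝ) - c| * (∫ x, u x * r x) = |((n:ℝ) - c) * ∫ x, u x * r x| := by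
      rw [abs_mul, abs_of_nonneg hInonneg]
    rw [h1, stepA, abs_neg]
    calc |∫ x, W x| ≤ ∫ x, |W x| := by
          simpa [Real.norm_eq_abs] using norm_integral_le_integral_norm (μ := volume) W
      _ ≤ ∫ x, p * Kv x := integral_mono hintW.abs (hintKv.const_mul p) hptwise
      _ = p * ∫ x, Kv x := integral_const_mul p _
  -- Step C : Hölder
  have hKvGH : ∀ x : EuclideanSpace ℝ (Fin n), Kv x = G x * H x := by
    intro x
    rcases eq_or_ne x 0 with rfl | hx0
    · have hf00 : f 0 = 0 := hf0 0 (by simpa using hε)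
      simp [hKv_def, hG_def, hH_def, hf00, Real.zero_rpow hp1.ne']
    · have hxpos : (0:ℝ) < ‖x‖ := norm_pos_iff.mpr hx0
      rw [hKv_def, hG_def, hH_def]
      simp only
      rw [show (1 - c) = -a + -b by rw [hc_def]; ring, Real.rpow_add hxpos]
      ring
  have stepC : (∫ x, Kv x) ≤ (∫ x, G x ^ p) ^ (1/p) * (∫ x, H x ^ q) ^ (1/q) := by
    have h1 : (∫ x, Kv x) = ∫ x, G x * H x :=
      integral_congr_ae (Filter.Eventually.of_forall hKvGH)
    rw [h1]
    refine integral_mul_le_Lp_mul_Lq_of_nonneg hconj ?_ ?_ hmemG hmemH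
    · filter_upwards with x
      exact mul_nonneg (norm_nonneg _) (Real.rpow_nonneg (norm_nonneg _) _)
    · filter_upwards with x
      exact mul_nonneg (Real.rpow_nonneg (abs_nonneg _) _) (Real.rpow_nonneg (norm_nonneg _) _)
  -- identification of the integrands in the statement
  have hI : (∫ x : EuclideanSpace ℝ (Fin n), |f x| ^ p / ‖x‖ ^ c) = ∫ x, u x * r x := by
    refine integral_congr_ae (Filter.Eventually.of_forall fun x => ?_)
    rw [hu_def, hr_def]
    simp only
    rw [Real.rpow_neg (norm_nonneg x), div_eq_mul_inv]
  have hJ1 : (∫ x : EuclideanSpace ℝ (Fin n), ‖fderiv ℝ f x‖ ^ p / ‖x‖ ^ (a * p))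
      = ∫ x, G x ^ p := by
    refine integral_congr_ae (Filter.Eventually.of_forall fun x => ?_)
    rw [hG_def]; simp only
    rw [Real.mul_rpow (norm_nonneg _) (Real.rpow_nonneg (norm_nonneg _) _),
      ← Real.rpow_mul (norm_nonneg x), neg_mul, Real.rpow_neg (norm_nonneg x),
      div_eq_mul_inv]
  have hJ2 : (∫ x : EuclideanSpace ℝ (Fin n), |f x| ^ p / ‖x‖ ^ (b * p / (p - 1)))
      = ∫ x, H x ^ q := by
    refine integral_congr_ae (Filter.Eventually.of_forall fun x => ?_)
    rw [hH_def]; simp only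
    rw [Real.mul_rpow (Real.rpow_nonneg (abs_nonneg _) _) (Real.rpow_nonneg (norm_nonneg _) _),
      ← Real.rpow_mul (abs_nonneg (f x)), ← Real.rpow_mul (norm_nonneg x)]
    have h1 : (p-1)*q = p := by
      rw [hq_def]
      field_simp
    have h2 : (-b)*q = -(b*p/(p-1)) := by
      rw [hq_def]
      field_simp
    rw [h1, h2, Real.rpow_neg (norm_nonneg x), div_eq_mul_inv]
  have hq1 : 1/q = (p-1)/p := by
    rw [hq_def, one_div_div]
  -- final assembly
  rw [abs_div, abs_of_pos hp0, hI, hJ1, hJ2, ← hq1]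
  have hfinal : |(n:ℝ) - c| / p * (∫ x, u x * r x) ≤ ∫ x, Kv x := by
    rw [div_mul_eq_mul_div, div_le_iff₀ hp0]
    calc |(n:ℝ) - c| * ∫ x, u x * r x ≤ p * ∫ x, Kv x := stepB
      _ = (∫ x, Kv x) * p := mul_comm _ _
  calc |(n:ℝ) - c| / p * (∫ x, u x * r x) ≤ ∫ x, Kv x := hfinal
    _ ≤ (∫ x, G x ^ p) ^ (1/p) * (∫ x, H x ^ q) ^ (1/q) := stepC
end

section
/- Let n ≥ 3, 2 ≤ p < n, −∞ < α < (n−p)/p, and let f ∈ C_0^∞(ℝ^n \ {0}) be radial, f(x) = f̃(|x|). Define g̃(r) = r^{(n−p−αp)/p} f̃(r) and g(x) = g̃(|x|). Then ∫_{ℝ^n} |∇f|^p |x|^{−αp} dx − ((n−p−αp)/p)^p ∫_{ℝ^n} |f|^p |x|^{−(α+1)p} dx ≥ c_p ∫_{ℝ^n} |(x/|x|)·∇g|^p |x|^{p−n} dx, where c_p = min_{0<t≤1/2}((1−t)^p − t^p + pt^{p−1}). -/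
open Real MeasureTheory Set

lemma L1 {q x y : ℝ} (hq : 1 ≤ q) (hy : 0 ≤ y) (hxy : y ≤ x) :
    x ^ q - y ^ q ≤ q * x ^ (q - 1) * (x - y) := by
  have hx : 0 ≤ x := hy.trans hxy
  rcases eq_or_lt_of_le hx with h | hx0
  · have hy0 : y = 0 := le_antisymm (hxy.trans h.symm.le) hy
    simp [← h, hy0]
  have hs : -1 ≤ (y - x) / x := by
    rw [le_div_iff₀ hx0]; linarith
  have hber := one_add_mul_self_le_rpow_one_add hs hq
  have h1 : (1 + (y - x) / x) = y / x := by field_simp; ring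
  rw [h1, div_rpow hy hx0.le] at hber
  have hxq : (0:ℝ) < x ^ q := rpow_pos_of_pos hx0 q
  rw [le_div_iff₀ hxq] at hber
  have hxq1 : x ^ (q - 1) = x ^ q / x := by
    rw [rpow_sub hx0, rpow_one]
  rw [hxq1]
  have : (1 + q * ((y - x) / x)) * x ^ q = x ^ q + q * (x ^ q / x) * (y - x) := by
    field_simp
  nlinarith [hber, this]

lemma L2 {q x y : ℝ} (hq : 1 ≤ q) (hy : 0 < y) (hxy : y ≤ x) :
    q * y ^ (q - 1) * (x - y) ≤ x ^ q - y ^ q := by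
  have hs : -1 ≤ (x - y) / y := by
    rw [le_div_iff₀ hy]; linarith
  have hber := one_add_mul_self_le_rpow_one_add hs hq
  have h1 : (1 + (x - y) / y) = x / y := by field_simp; ring
  rw [h1, div_rpow (hy.le.trans hxy) hy.le] at hber
  have hyq : (0:ℝ) < y ^ q := rpow_pos_of_pos hy q
  rw [le_div_iff₀ hyq] at hber
  have hyq1 : y ^ (q - 1) = y ^ q / y := by rw [rpow_sub hy, rpow_one]
  have h2 : (1 + q * ((x - y) / y)) * y ^ q = y ^ q + q * (y ^ q / y) * (x - y) := by
    field_simp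
  rw [hyq1]
  nlinarith [hber, h2]

-- case 4 : τ ≥ 0
lemma case4 {p : ℝ} (hp : 2 ≤ p) {τ : ℝ} (hτ : 0 ≤ τ) :
    1 ≤ (1 + τ) ^ p - τ ^ p - p * τ ^ (p - 1) := by
  have hp1 : (1:ℝ) ≤ p := by linarith
  set G : ℝ → ℝ := fun t => (1 + t) ^ p - t ^ p - p * t ^ (p - 1) with hG
  have hder : ∀ t : ℝ, 0 < t →
      HasDerivAt G (1 * p * (1 + t) ^ (p - 1) - 1 * p * t ^ (p - 1) - p * ((p - 1) * t ^ (p - 1 - 1))) t := by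
    intro t ht
    have h1 : HasDerivAt (fun t : ℝ => (1 + t) ^ p) (1 * p * (1 + t) ^ (p - 1)) t :=
      (HasDerivAt.rpow_const ((hasDerivAt_id t).const_add 1) (Or.inl (by positivity)))
    have h2 : HasDerivAt (fun t : ℝ => t ^ p) (1 * p * t ^ (p - 1)) t :=
      (HasDerivAt.rpow_const (hasDerivAt_id t) (Or.inl ht.ne'))
    have h3 : HasDerivAt (fun t : ℝ => t ^ (p - 1)) ((p - 1) * t ^ (p - 1 - 1)) t :=
      Real.hasDerivAt_rpow_const (Or.inl ht.ne')
    exact (h1.sub h2).sub (h3.const_mul p)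
  have hcont : ContinuousOn G (Ici 0) := by
    intro t _
    apply ContinuousAt.continuousWithinAt
    have c1 : ContinuousAt (fun t : ℝ => (1 + t) ^ p) t :=
      (Real.continuousAt_rpow_const (1 + t) p (Or.inr (by linarith))).comp
        (continuousAt_const.add continuousAt_id)
    have c2 : ContinuousAt (fun t : ℝ => t ^ p) t :=
      Real.continuousAt_rpow_const t p (Or.inr (by linarith))
    have c3 : ContinuousAt (fun t : ℝ => t ^ (p - 1)) t :=
      Real.continuousAt_rpow_const t (p - 1) (Or.inr (by linarith))
    exact (c1.sub c2).sub (c3.const_mul p)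
  have hmono : MonotoneOn G (Ici 0) := by
    apply monotoneOn_of_deriv_nonneg (convex_Ici 0) hcont
    · intro t ht
      rw [interior_Ici] at ht
      exact ((hder t ht).differentiableAt).differentiableWithinAt
    · intro t ht
      rw [interior_Ici] at ht
      rw [(hder t ht).deriv]
      have key := L2 (by linarith : (1:ℝ) ≤ p - 1) ht (by linarith : t ≤ 1 + t)
      have : (1 + t) - t = 1 := by ring
      rw [this, mul_one] at key
      have hpe : p - 1 - 1 = p - 2 := by ring
      nlinarith [key]
  have hG0 : G 0 = 1 := by
    have : (0:ℝ) ^ p = 0 := Real.zero_rpow (by positivity)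
    have h2 : (0:ℝ) ^ (p - 1) = 0 := Real.zero_rpow (by intro h; linarith [h]; )
    simp [hG, this, h2]
  have := hmono (self_mem_Ici) hτ hτ
  rw [hG0] at this
  exact this

lemma case3 {p : ℝ} (hp : 2 ≤ p) {u : ℝ} (hu : 1 ≤ u) :
    p - 1 ≤ (u - 1) ^ p - u ^ p + p * u ^ (p - 1) := by
  have hp1 : (1:ℝ) ≤ p := by linarith
  set G : ℝ → ℝ := fun t => (t - 1) ^ p - t ^ p + p * t ^ (p - 1) with hG
  have hder : ∀ t : ℝ, 1 < t →
      HasDerivAt G (1 * p * (t - 1) ^ (p - 1) - 1 * p * t ^ (p - 1) + p * ((p - 1) * t ^ (p - 1 - 1))) t := by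
    intro t ht
    have h1 : HasDerivAt (fun t : ℝ => (t - 1) ^ p) (1 * p * (t - 1) ^ (p - 1)) t :=
      (HasDerivAt.rpow_const ((hasDerivAt_id t).sub_const 1) (Or.inr hp1))
    have h2 : HasDerivAt (fun t : ℝ => t ^ p) (1 * p * t ^ (p - 1)) t :=
      (HasDerivAt.rpow_const (hasDerivAt_id t) (Or.inl (by positivity)))
    have h3 : HasDerivAt (fun t : ℝ => t ^ (p - 1)) ((p - 1) * t ^ (p - 1 - 1)) t :=
      Real.hasDerivAt_rpow_const (Or.inl (by positivity))
    exact (h1.sub h2).add (h3.const_mul p)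
  have hcont : ContinuousOn G (Ici 1) := by
    intro t _
    apply ContinuousAt.continuousWithinAt
    have c1 : ContinuousAt (fun t : ℝ => (t - 1) ^ p) t :=
      ContinuousAt.rpow_const (continuousAt_id.sub continuousAt_const) (Or.inr (by linarith))
    have c2 : ContinuousAt (fun t : ℝ => t ^ p) t :=
      Real.continuousAt_rpow_const t p (Or.inr (by linarith))
    have c3 : ContinuousAt (fun t : ℝ => t ^ (p - 1)) t :=
      Real.continuousAt_rpow_const t (p - 1) (Or.inr (by linarith))
    exact (c1.sub c2).add (c3.const_mul p)
  have hmono : MonotoneOn G (Ici 1) := by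
    apply monotoneOn_of_deriv_nonneg (convex_Ici 1) hcont
    · intro t ht
      rw [interior_Ici] at ht
      exact ((hder t ht).differentiableAt).differentiableWithinAt
    · intro t ht
      rw [interior_Ici] at ht
      have ht' : 1 < t := ht
      rw [(hder t ht').deriv]
      have key := L1 (by linarith : (1:ℝ) ≤ p - 1) (by linarith : (0:ℝ) ≤ t - 1)
        (by linarith : t - 1 ≤ t)
      have h4 : t - (t - 1) = 1 := by ring
      rw [h4, mul_one] at key
      have hpe : p - 1 - 1 = p - 2 := by ring
      nlinarith [key]
  have hG1 : G 1 = p - 1 := by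
    have h1 : (1:ℝ) - 1 = 0 := by ring
    have h2 : (0:ℝ) ^ p = 0 := Real.zero_rpow (by positivity)
    simp [hG, h1, h2]
    ring
  have h5 := hmono (self_mem_Ici) hu hu
  rw [hG1] at h5
  exact h5

lemma case2 {p : ℝ} (hp : 2 ≤ p) {u : ℝ} (hu2 : 1/2 < u) (hu1 : u < 1) :
    (1 - (1-u)) ^ p - (1-u) ^ p + p * (1-u) ^ (p - 1)
      ≤ (1 - u) ^ p - u ^ p + p * u ^ (p - 1) := by
  set v := 1 - u with hv
  have hv0 : 0 < v := by simp [hv]; linarith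
  have hu0 : 0 < u := by linarith
  have hvu : v ≤ u := by simp [hv]; linarith
  have hA : u ^ (p-1) = u ^ (p-2) * u := by
    rw [show p-1 = (p-2)+1 by ring, rpow_add_one hu0.ne']
  have hB : v ^ (p-1) = v ^ (p-2) * v := by
    rw [show p-1 = (p-2)+1 by ring, rpow_add_one hv0.ne']
  have hU : u ^ p = u ^ (p-1) * u := by
    nth_rewrite 1 [show p = (p-1)+1 by ring]
    rw [rpow_add_one hu0.ne']
  have hV : v ^ p = v ^ (p-1) * v := by
    nth_rewrite 1 [show p = (p-1)+1 by ring]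
    rw [rpow_add_one hv0.ne']
  have hAB2 : v ^ (p-2) ≤ u ^ (p-2) := rpow_le_rpow hv0.le hvu (by linarith)
  have hAB : v ^ (p-1) ≤ u ^ (p-1) := rpow_le_rpow hv0.le hvu (by linarith)
  have huv : u + v = 1 := by simp [hv]
  have h1u : 1 - v = u := by simp [hv]
  rw [h1u]
  nlinarith [hA, hB, hU, hV, hAB2, hAB, mul_pos hu0 hv0,
    mul_le_mul_of_nonneg_right hAB2 (mul_pos hu0 hv0).le]

lemma key1_s16 {p c : ℝ} (hp : 2 ≤ p)
    (hc : ∀ t ∈ Ioc (0:ℝ) (1/2:ℝ), c ≤ (1-t)^p - t^p + p*t^(p-1)) (hc1 : c ≤ 1) (τ : ℝ) :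
    c ≤ |1 + τ| ^ p - |τ| ^ p - p * (|τ| ^ (p-2) * τ) := by
  have hp0 : (0:ℝ) < p := by linarith
  rcases le_or_gt 0 τ with hτ | hτ
  · rw [abs_of_nonneg hτ, abs_of_nonneg (by linarith : (0:ℝ) ≤ 1 + τ)]
    have hτ2 : τ ^ (p-2) * τ = τ ^ (p-1) := by
      rcases eq_or_lt_of_le hτ with h | h
      · rw [← h]
        simp [Real.zero_rpow (by intro hh; linarith : p - 1 ≠ 0)]
      · rw [show p-1 = (p-2)+1 by ring, rpow_add_one h.ne']
    rw [hτ2]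
    linarith [case4 hp hτ]
  · set u := -τ with hud
    have hu0 : 0 < u := by simp [hud]; linarith
    have habs : |τ| = u := by rw [abs_of_neg hτ]
    have habs1 : |1 + τ| = |1 - u| := by rw [hud]; ring_nf
    have hτu : τ = -u := by simp [hud]
    have hcr : u ^ (p-2) * τ = -(u ^ (p-1)) := by
      rw [hτu, show p-1 = (p-2)+1 by ring, rpow_add_one hu0.ne']
      ring
    rw [habs1, habs, hcr]
    rcases le_or_gt u (1/2) with h12 | h12
    · rw [abs_of_nonneg (by linarith : (0:ℝ) ≤ 1 - u)]
      have := hc u ⟨hu0, h12⟩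
      linarith
    · rcases lt_or_ge u 1 with h1 | h1
      · rw [abs_of_nonneg (by linarith : (0:ℝ) ≤ 1 - u)]
        have h2 := case2 hp h12 h1
        have h3 := hc (1-u) ⟨by linarith, by linarith⟩
        linarith
      · rw [abs_of_nonpos (by linarith : 1 - u ≤ 0), show -(1-u) = u - 1 by ring]
        have := case3 hp h1
        linarith

-- c ≤ 1
lemma cle1 {p c : ℝ} (hp : 2 ≤ p)
    (hc : ∀ t ∈ Ioc (0:ℝ) (1/2:ℝ), c ≤ (1-t)^p - t^p + p*t^(p-1)) : c ≤ 1 := by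
  have h12 := hc (1/2) ⟨by norm_num, le_refl _⟩
  have he : (1 - 1/2 : ℝ) = 1/2 := by norm_num
  rw [he] at h12
  have hlog : (1:ℝ)/2 < Real.log 2 := by
    have := Real.log_two_gt_d9
    linarith
  have h2p2 : 2 + (p - 2) * (2 * Real.log 2) ≤ (2:ℝ) ^ (p - 1) := by
    have e1 : (2:ℝ) ^ (p - 2) = Real.exp (Real.log 2 * (p - 2)) :=
      Real.rpow_def_of_pos two_pos _
    have e2 : Real.log 2 * (p - 2) + 1 ≤ Real.exp (Real.log 2 * (p - 2)) :=
      Real.add_one_le_exp _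
    have e3 : (2:ℝ) ^ (p - 1) = (2:ℝ) ^ (p - 2) * 2 := by
      rw [show p-1 = (p-2)+1 by ring, rpow_add_one (by norm_num : (2:ℝ) ≠ 0)]
    rw [e3, e1]
    nlinarith [e2]
  have hple : p ≤ (2:ℝ) ^ (p - 1) := by nlinarith [hlog]
  have hhalf : ((1:ℝ)/2) ^ (p - 1) = ((2:ℝ) ^ (p - 1))⁻¹ := by
    rw [one_div, Real.inv_rpow (by norm_num : (0:ℝ) ≤ 2)]
  have h2pos : (0:ℝ) < (2:ℝ) ^ (p - 1) := rpow_pos_of_pos two_pos _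
  have : p * ((1:ℝ)/2) ^ (p - 1) ≤ 1 := by
    rw [hhalf, ← div_eq_mul_inv, div_le_one h2pos]
    exact hple
  linarith [h12]

lemma elem {p c : ℝ} (hp : 2 ≤ p)
    (hc : ∀ t ∈ Ioc (0:ℝ) (1/2:ℝ), c ≤ (1-t)^p - t^p + p*t^(p-1)) (a b : ℝ) :
    |b| ^ p + p * |b| ^ (p-2) * b * a + c * |a| ^ p ≤ |b + a| ^ p := by
  have hp0 : (0:ℝ) < p := by linarith
  rcases eq_or_ne a 0 with ha | ha
  · simp [ha, Real.zero_rpow hp0.ne']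
  · have haa : (0:ℝ) < |a| := abs_pos.2 ha
    have hap : (0:ℝ) < |a| ^ p := rpow_pos_of_pos haa p
    set τ := b / a with hτd
    have key := key1_s16 hp hc (cle1 hp hc) τ
    have h := mul_le_mul_of_nonneg_right key hap.le
    have e1 : |1 + τ| ^ p * |a| ^ p = |b + a| ^ p := by
      rw [← mul_rpow (abs_nonneg _) (abs_nonneg _), ← abs_mul]
      congr 2
      rw [hτd, add_mul, div_mul_cancel₀ b ha]
      ring
    have e2 : |τ| ^ p * |a| ^ p = |b| ^ p := by
      rw [← mul_rpow (abs_nonneg _) (abs_nonneg _), ← abs_mul]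
      congr 2
      rw [hτd, div_mul_cancel₀ b ha]
    have e3 : |τ| ^ (p-2) * τ * |a| ^ p = |b| ^ (p-2) * b * a := by
      have hap2 : |a| ^ p = |a| ^ (p-2) * a ^ 2 := by
        have h1 : |a| ^ p = |a| ^ (p-2) * |a| ^ (2:ℝ) := by
          rw [← Real.rpow_add haa]; norm_num
        rw [h1, show |a| ^ (2:ℝ) = |a| ^ (2:ℕ) from Real.rpow_natCast |a| 2, sq_abs]
      rw [hap2, ← mul_assoc]
      have : |τ| ^ (p-2) * τ * |a| ^ (p-2) = |b| ^ (p-2) * τ := by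
        rw [mul_comm (|τ| ^ (p-2)) τ, mul_assoc, ← mul_rpow (abs_nonneg _) (abs_nonneg _), ← abs_mul]
        have : τ * a = b := by rw [hτd, div_mul_cancel₀ b ha]
        rw [this]
        ring
      rw [this, hτd]
      field_simp
    nlinarith [h, e1, e2, e3]

variable {E : Type*} [NormedAddCommGroup E] [InnerProductSpace ℝ E]

lemma hasFDerivAt_norm' {x : E} (hx : x ≠ 0) :
    HasFDerivAt (fun y : E => ‖y‖) (innerSL ℝ ((‖x‖⁻¹ : ℝ) • x)) x := by
  have hx0 : (0:ℝ) < ‖x‖ := norm_pos_iff.2 hx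
  have h2 : HasFDerivAt (fun y : E => ‖y‖ ^ 2) (2 • innerSL ℝ x) x :=
    (hasStrictFDerivAt_norm_sq x).hasFDerivAt
  have hsq : HasDerivAt Real.sqrt (1 / (2 * Real.sqrt (‖x‖ ^ 2))) (‖x‖ ^ 2) :=
    Real.hasDerivAt_sqrt (by positivity)
  have hcomp := hsq.comp_hasFDerivAt x h2
  have heq : Real.sqrt ∘ (fun y : E => ‖y‖ ^ 2) = fun y : E => ‖y‖ :=
    funext fun y => Real.sqrt_sq (norm_nonneg y)
  rw [heq] at hcomp
  refine hcomp.congr_fderiv ?_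
  ext y
  simp only [ContinuousLinearMap.coe_smul', Pi.smul_apply, innerSL_apply_apply, smul_eq_mul,
    real_inner_smul_left, Real.sqrt_sq (norm_nonneg x), ContinuousLinearMap.smul_apply,
    nsmul_eq_mul, Nat.cast_ofNat]
  field_simp

lemma integrableOn_Ioi_of_zero_outside {u : ℝ → ℝ} {A B : ℝ} (hA : 0 < A)
    (hcont : ContinuousOn u (Ioi 0))
    (hz : ∀ r ∈ Ioi (0:ℝ), r ∉ Icc A B → u r = 0) :
    IntegrableOn u (Ioi 0) := by
  have hsub : Icc A B ⊆ Ioi 0 := fun r hr => lt_of_lt_of_le hA hr.1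
  have h1 : IntegrableOn u (Icc A B) := (hcont.mono hsub).integrableOn_compact isCompact_Icc
  have h2 : IntegrableOn u (Ioi 0 \ Icc A B) := by
    have heq : EqOn u (fun _ => (0:ℝ)) (Ioi 0 \ Icc A B) := fun r hr => hz r hr.1 hr.2
    rw [integrableOn_congr_fun heq (measurableSet_Ioi.diff measurableSet_Icc)]
    exact integrableOn_zero
  have hsub2 : Ioi (0:ℝ) ⊆ Icc A B ∪ (Ioi 0 \ Icc A B) := by
    intro r hr; by_cases h : r ∈ Icc A B
    · exact mem_union_left _ h
    · exact mem_union_right _ ⟨hr, h⟩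
  exact (h1.union h2).mono_set hsub2

set_option maxHeartbeats 1000000 in
theorem stmt_16 (n : ℕ) (hn : 3 ≤ n) (p α : ℝ) (hp2 : 2 ≤ p) (hpn : p < n)
    (hα : α < ((n : ℝ) - p) / p)
    (f : EuclideanSpace ℝ (Fin n) → ℝ) (hf : ContDiff ℝ (⊤ : ℕ∞) f) (hsupp : HasCompactSupport f)
    (h0 : ∃ ε > (0 : ℝ), ∀ x : EuclideanSpace ℝ (Fin n), ‖x‖ < ε → f x = 0)
    (ftilde : ℝ → ℝ) (hrad : ∀ x : EuclideanSpace ℝ (Fin n), f x = ftilde ‖x‖) :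
    (∫ x : EuclideanSpace ℝ (Fin n), ‖fderiv ℝ f x‖ ^ p * ‖x‖ ^ (-(α * p))) -
        (((n : ℝ) - p - α * p) / p) ^ p *
          ∫ x : EuclideanSpace ℝ (Fin n), |f x| ^ p * ‖x‖ ^ (-((α + 1) * p)) ≥
      sInf ((fun t : ℝ => (1 - t) ^ p - t ^ p + p * t ^ (p - 1)) '' Ioc (0 : ℝ) (1 / 2)) *
        ∫ x : EuclideanSpace ℝ (Fin n),
          |fderiv ℝ (fun y : EuclideanSpace ℝ (Fin n) =>
              ‖y‖ ^ (((n : ℝ) - p - α * p) / p) * ftilde ‖y‖) x (‖x‖⁻¹ • x)| ^ p *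
            ‖x‖ ^ (p - (n : ℝ)) := by
  haveI : Nonempty (Fin n) := ⟨⟨0, by omega⟩⟩
  have hp0 : (0:ℝ) < p := by linarith
  have hn1 : 1 ≤ n := by omega
  set β : ℝ := ((n : ℝ) - p - α * p) / p with hβdef
  set c : ℝ := sInf ((fun t : ℝ => (1 - t) ^ p - t ^ p + p * t ^ (p - 1)) '' Ioc (0 : ℝ) (1 / 2)) with hcdef
  have hβ : 0 < β := by
    apply div_pos _ hp0
    have h := (lt_div_iff₀ hp0).1 hα
    linarith
  have hβp : β * p = (n:ℝ) - p - α * p := by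
    rw [hβdef]; field_simp
  -- radial profile
  obtain ⟨ε, hε, hfε⟩ := h0
  obtain ⟨R, hRsub⟩ := hsupp.isBounded.subset_closedBall 0
  have hfR : ∀ x : EuclideanSpace ℝ (Fin n), R < ‖x‖ → f x = 0 := by
    intro x hx
    apply image_eq_zero_of_notMem_tsupport
    intro hmem
    have := hRsub hmem
    rw [Metric.mem_closedBall, dist_zero_right] at this
    linarith
  set v : EuclideanSpace ℝ (Fin n) := EuclideanSpace.single (⟨0, by omega⟩ : Fin n) (1:ℝ) with hvdef
  have hv : ‖v‖ = 1 := by rw [hvdef, EuclideanSpace.norm_single]; norm_num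
  set φ : ℝ → ℝ := fun r => f (r • v) with hφdef
  have hrv : ∀ r : ℝ, ‖r • v‖ = |r| := by
    intro r; rw [norm_smul, hv, Real.norm_eq_abs, mul_one]
  have hφft : ∀ r : ℝ, 0 ≤ r → φ r = ftilde r := by
    intro r hr
    rw [hφdef]
    simp only
    rw [hrad (r • v), hrv, abs_of_nonneg hr]
  have hfφ : ∀ x : EuclideanSpace ℝ (Fin n), f x = φ ‖x‖ := by
    intro x; rw [hrad x, hφft ‖x‖ (norm_nonneg x)]
  have hφsm : ContDiff ℝ (⊤ : ℕ∞) φ := hf.comp (contDiff_id.smul contDiff_const)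
  have hφdiff : Differentiable ℝ φ := hφsm.differentiable (by simp)
  have hφdc : Continuous (deriv φ) := hφsm.continuous_deriv (by simp)
  have hφ0 : ∀ r : ℝ, |r| < ε → φ r = 0 := by
    intro r hr; exact hfε _ (by rw [hrv]; exact hr)
  have hφR : ∀ r : ℝ, R < |r| → φ r = 0 := by
    intro r hr; exact hfR _ (by rw [hrv]; exact hr)
  have hdφ0 : ∀ r : ℝ, |r| < ε → deriv φ r = 0 := by
    intro r hr
    have hopen : IsOpen {s : ℝ | |s| < ε} := isOpen_lt continuous_abs continuous_const
    have hev : φ =ᶠ[nhds r] (fun _ => 0) := by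
      filter_upwards [hopen.mem_nhds hr] with s hs using hφ0 s hs
    rw [hev.deriv_eq, deriv_const]
  have hdφR : ∀ r : ℝ, R < |r| → deriv φ r = 0 := by
    intro r hr
    have hopen : IsOpen {s : ℝ | R < |s|} := isOpen_lt continuous_const continuous_abs
    have hev : φ =ᶠ[nhds r] (fun _ => 0) := by
      filter_upwards [hopen.mem_nhds hr] with s hs using hφR s hs
    rw [hev.deriv_eq, deriv_const]
  -- fderiv of f
  have hfd : ∀ x : EuclideanSpace ℝ (Fin n), x ≠ 0 →
      fderiv ℝ f x = (deriv φ ‖x‖) • innerSL ℝ ((‖x‖⁻¹:ℝ) • x) := by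
    intro x hx
    have h := ((hφdiff ‖x‖).hasDerivAt).comp_hasFDerivAt x (hasFDerivAt_norm' hx)
    have hfun : f = φ ∘ (fun y : EuclideanSpace ℝ (Fin n) => ‖y‖) := funext fun y => hfφ y
    rw [hfun]
    exact h.fderiv
  -- the function g and its derivative
  set w : ℝ → ℝ := fun r => β * r ^ (β - 1) * φ r + r ^ β * deriv φ r with hwdef
  set ψ : ℝ → ℝ := fun r => r ^ β * φ r with hψdef
  have hψd : ∀ r : ℝ, 0 < r → HasDerivAt ψ (w r) r := by
    intro r hr
    have h1 : HasDerivAt (fun s : ℝ => s ^ β) (β * r ^ (β-1)) r :=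
      Real.hasDerivAt_rpow_const (Or.inl hr.ne')
    exact h1.mul ((hφdiff r).hasDerivAt)
  have hgψ : (fun y : EuclideanSpace ℝ (Fin n) => ‖y‖ ^ β * ftilde ‖y‖)
      = ψ ∘ (fun y : EuclideanSpace ℝ (Fin n) => ‖y‖) := by
    funext y
    simp only [Function.comp_apply, hψdef]
    rw [hφft ‖y‖ (norm_nonneg y)]
  have hgd : ∀ x : EuclideanSpace ℝ (Fin n), x ≠ 0 →
      fderiv ℝ (fun y : EuclideanSpace ℝ (Fin n) => ‖y‖ ^ β * ftilde ‖y‖) x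
        = (w ‖x‖) • innerSL ℝ ((‖x‖⁻¹:ℝ) • x) := by
    intro x hx
    have h := (hψd ‖x‖ (norm_pos_iff.2 hx)).comp_hasFDerivAt x (hasFDerivAt_norm' hx)
    rw [hgψ]
    exact h.fderiv
  have hnu : ∀ x : EuclideanSpace ℝ (Fin n), x ≠ 0 → ‖(‖x‖⁻¹:ℝ) • x‖ = 1 := by
    intro x hx
    rw [norm_smul, Real.norm_eq_abs, abs_of_nonneg (inv_nonneg.2 (norm_nonneg x)),
      inv_mul_cancel₀ (norm_ne_zero_iff.2 hx)]
  -- a.e. nonzero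
  have h0ae : ∀ᵐ x : EuclideanSpace ℝ (Fin n) ∂volume, x ≠ 0 := by
    refine MeasureTheory.ae_iff.2 ?_
    have : {x : EuclideanSpace ℝ (Fin n) | ¬ x ≠ 0} = {0} := by
      ext y; simp
    rw [this, measure_singleton]
  -- one–dimensional integrands
  set F1 : ℝ → ℝ := fun r => |deriv φ r| ^ p * r ^ (-(α * p)) with hF1
  set F2 : ℝ → ℝ := fun r => |φ r| ^ p * r ^ (-((α + 1) * p)) with hF2
  set F3 : ℝ → ℝ := fun r => |w r| ^ p * r ^ (p - (n:ℝ)) with hF3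
  have hI1 : (∫ x : EuclideanSpace ℝ (Fin n), ‖fderiv ℝ f x‖ ^ p * ‖x‖ ^ (-(α * p)))
      = ∫ x : EuclideanSpace ℝ (Fin n), F1 ‖x‖ := by
    apply integral_congr_ae
    filter_upwards [h0ae] with x hx
    rw [hF1]
    simp only
    rw [hfd x hx, norm_smul, Real.norm_eq_abs, innerSL_apply_norm, hnu x hx, mul_one]
  have hI2 : (∫ x : EuclideanSpace ℝ (Fin n), |f x| ^ p * ‖x‖ ^ (-((α + 1) * p)))
      = ∫ x : EuclideanSpace ℝ (Fin n), F2 ‖x‖ := by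
    apply integral_congr_ae
    filter_upwards [] with x
    rw [hF2]
    simp only
    rw [hfφ x]
  have hI3 : (∫ x : EuclideanSpace ℝ (Fin n),
        |fderiv ℝ (fun y : EuclideanSpace ℝ (Fin n) => ‖y‖ ^ β * ftilde ‖y‖) x ((‖x‖⁻¹:ℝ) • x)| ^ p
          * ‖x‖ ^ (p - (n:ℝ)))
      = ∫ x : EuclideanSpace ℝ (Fin n), F3 ‖x‖ := by
    apply integral_congr_ae
    filter_upwards [h0ae] with x hx
    rw [hF3]
    simp only
    rw [hgd x hx]
    congr 2
    have hxu := hnu x hx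
    rw [ContinuousLinearMap.smul_apply, innerSL_apply_apply, real_inner_self_eq_norm_mul_norm, hxu]
    simp
  -- pass to one dimension
  set κ : ℝ := (volume (Metric.ball (0:EuclideanSpace ℝ (Fin n)) 1)).toReal with hκdef
  have hκ : 0 ≤ κ := ENNReal.toReal_nonneg
  have hconv : ∀ F : ℝ → ℝ, (∫ x : EuclideanSpace ℝ (Fin n), F ‖x‖)
      = (n:ℝ) * κ * ∫ r in Ioi (0:ℝ), r ^ (n-1 : ℕ) * F r := by
    intro F
    rw [MeasureTheory.integral_fun_norm_addHaar (volume : Measure (EuclideanSpace ℝ (Fin n))) F]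
    rw [finrank_euclideanSpace_fin, nsmul_eq_mul, smul_eq_mul]
    rw [show (∫ r in Ioi (0:ℝ), r ^ (n-1:ℕ) • F r) = ∫ r in Ioi (0:ℝ), r ^ (n-1:ℕ) * F r by
      simp only [smul_eq_mul]]
    rw [measureReal_def, ← hκdef]
    ring
  set J1 : ℝ := ∫ r in Ioi (0:ℝ), r ^ (n-1 : ℕ) * F1 r with hJ1
  set J2 : ℝ := ∫ r in Ioi (0:ℝ), r ^ (n-1 : ℕ) * F2 r with hJ2
  set J3 : ℝ := ∫ r in Ioi (0:ℝ), r ^ (n-1 : ℕ) * F3 r with hJ3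
  have hmain : c * J3 ≤ J1 - β ^ p * J2 := by
    have hbdd : BddBelow ((fun t : ℝ => (1 - t) ^ p - t ^ p + p * t ^ (p - 1)) '' Ioc (0:ℝ) (1/2)) := by
      refine ⟨-1, ?_⟩
      rintro s ⟨t, ht, rfl⟩
      have h1 : (0:ℝ) ≤ (1 - t) ^ p := rpow_nonneg (by linarith [ht.2] : (0:ℝ) ≤ 1 - t) p
      have h2 : t ^ p ≤ 1 := rpow_le_one ht.1.le (by linarith [ht.2]) hp0.le
      have h3 : (0:ℝ) ≤ p * t ^ (p-1) := mul_nonneg hp0.le (rpow_nonneg ht.1.le _)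
      simp only
      linarith
    have hcle : ∀ t ∈ Ioc (0:ℝ) (1/2:ℝ), c ≤ (1-t)^p - t^p + p*t^(p-1) := fun t ht =>
      csInf_le hbdd (mem_image_of_mem _ ht)
    set A : ℝ := ε/2 with hAdef
    set B : ℝ := R + 1 with hBdef
    have hA0 : 0 < A := by rw [hAdef]; linarith
    have hout : ∀ r ∈ Ioi (0:ℝ), r ∉ Icc A B → φ r = 0 ∧ deriv φ r = 0 ∧ w r = 0 := by
      intro r hr hIc
      have hr0 : (0:ℝ) < r := hr
      have habs : |r| = r := abs_of_pos hr0
      have hcase : |r| < ε ∨ R < |r| := by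
        rw [habs]
        have hIc' : ¬(A ≤ r ∧ r ≤ B) := fun h => hIc (mem_Icc.2 h)
        rcases not_and_or.1 hIc' with h | h
        · push_neg at h
          rw [hAdef] at h
          left; linarith
        · push_neg at h
          rw [hBdef] at h
          right; linarith
      have hφr : φ r = 0 := by rcases hcase with h | h; exacts [hφ0 r h, hφR r h]
      have hdφr : deriv φ r = 0 := by rcases hcase with h | h; exacts [hdφ0 r h, hdφR r h]
      exact ⟨hφr, hdφr, by rw [hwdef]; simp [hφr, hdφr]⟩
    have hψcont : Continuous ψ := by
      rw [hψdef]
      apply Continuous.mul ?_ hφsm.continuous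
      rw [continuous_iff_continuousAt]; intro r
      rcases eq_or_ne r 0 with h | h
      · exact h ▸ Real.continuousAt_rpow_const 0 β (Or.inr hβ.le)
      · exact Real.continuousAt_rpow_const r β (Or.inl h)
    have hwcont : ContinuousOn w (Ioi 0) := by
      intro r hr
      have hr0 : (0:ℝ) < r := hr
      apply ContinuousAt.continuousWithinAt
      have c1 : ContinuousAt (fun s : ℝ => s ^ (β-1)) r := Real.continuousAt_rpow_const r _ (Or.inl hr0.ne')
      have c2 : ContinuousAt (fun s : ℝ => s ^ β) r := Real.continuousAt_rpow_const r _ (Or.inl hr0.ne')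
      exact ((c1.const_mul β).mul hφsm.continuous.continuousAt).add (c2.mul hφdc.continuousAt)
    set Q : ℝ → ℝ := fun r => ((ψ r)^(2:ℕ)) ^ (p/2) with hQdef
    set DQ : ℝ → ℝ := fun r => ((2:ℕ) * ψ r ^ (1:ℕ) * w r) * (p/2) * ((ψ r)^(2:ℕ)) ^ (p/2 - 1) with hDQdef
    have hp21 : (1:ℝ) ≤ p/2 := by linarith
    have hQd : ∀ r ∈ Ioi (0:ℝ), HasDerivAt Q (DQ r) r := by
      intro r hr
      exact ((hψd r hr).pow 2).rpow_const (Or.inr hp21)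
    have hQz : ∀ r : ℝ, 0 < r → R < r → Q r = 0 := by
      intro r h1 h2
      have : φ r = 0 := hφR r (by rw [abs_of_pos h1]; exact h2)
      rw [hQdef]
      simp [hψdef, this, Real.zero_rpow (by positivity : p/2 ≠ 0)]
    have hQtop : Filter.Tendsto Q Filter.atTop (nhds 0) := by
      have hev : ∀ᶠ r in Filter.atTop, Q r = 0 := by
        filter_upwards [Filter.eventually_gt_atTop (max R 0)] with r hr
        exact hQz r (lt_of_le_of_lt (le_max_right R 0) hr) (lt_of_le_of_lt (le_max_left R 0) hr)
      exact tendsto_const_nhds.congr' (by filter_upwards [hev] with r h using h.symm)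
    have hQcont : Continuous Q :=
      (hψcont.pow 2).rpow_const (fun x => Or.inr (by linarith))
    have hQzero : Q 0 = 0 := by
      have hψ0 : ψ 0 = 0 := by
        rw [hψdef]; simp [Real.zero_rpow hβ.ne']
      rw [hQdef]; simp [hψ0, Real.zero_rpow (by positivity : p/2 ≠ 0)]
    have hDQint : IntegrableOn DQ (Ioi 0) := by
      apply integrableOn_Ioi_of_zero_outside (B := B) hA0
      · apply ContinuousOn.mul
        apply ContinuousOn.mul
        · exact ((continuous_const.mul (hψcont.pow 1)).continuousOn.mul hwcont)
        · exact continuousOn_const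
        · exact ((hψcont.pow 2).rpow_const (fun x => Or.inr (by linarith))).continuousOn
      · intro r hr hIc
        rw [hDQdef]
        simp [(hout r hr hIc).2.2]
    have hcross0 : ∫ r in Ioi (0:ℝ), DQ r = 0 := by
      rw [integral_Ioi_of_hasDerivAt_of_tendsto hQcont.continuousWithinAt hQd hDQint hQtop,
        hQzero, sub_zero]
    have hF1cont : Continuous fun r => |deriv φ r| ^ p :=
      hφdc.abs.rpow_const (fun x => Or.inr hp0.le)
    have hF2cont : Continuous fun r => |φ r| ^ p :=
      hφsm.continuous.abs.rpow_const (fun x => Or.inr hp0.le)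
    have hrpowcont : ∀ q : ℝ, ContinuousOn (fun r : ℝ => r ^ q) (Ioi 0) := by
      intro q r hr
      exact (Real.continuousAt_rpow_const r q (Or.inl (ne_of_gt hr))).continuousWithinAt
    have hu1 : IntegrableOn (fun r => r ^ (n-1:ℕ) * F1 r) (Ioi 0) := by
      apply integrableOn_Ioi_of_zero_outside (B := B) hA0
      · exact (continuous_pow _).continuousOn.mul ((hF1cont.continuousOn).mul (hrpowcont _))
      · intro r hr hIc
        rw [hF1]
        simp [(hout r hr hIc).2.1, Real.zero_rpow hp0.ne']
    have hu2 : IntegrableOn (fun r => r ^ (n-1:ℕ) * F2 r) (Ioi 0) := by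
      apply integrableOn_Ioi_of_zero_outside (B := B) hA0
      · exact (continuous_pow _).continuousOn.mul ((hF2cont.continuousOn).mul (hrpowcont _))
      · intro r hr hIc
        rw [hF2]
        simp [(hout r hr hIc).1, Real.zero_rpow hp0.ne']
    have hu3 : IntegrableOn (fun r => r ^ (n-1:ℕ) * F3 r) (Ioi 0) := by
      apply integrableOn_Ioi_of_zero_outside (B := B) hA0
      · apply (continuous_pow _).continuousOn.mul
        apply ContinuousOn.mul ?_ (hrpowcont _)
        intro r hr
        exact ((hwcont r hr).abs.rpow_const (Or.inr hp0.le))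
      · intro r hr hIc
        rw [hF3]
        simp [(hout r hr hIc).2.2, Real.zero_rpow hp0.ne']
    have hpoint : ∀ r ∈ Ioi (0:ℝ), c * (r^(n-1:ℕ) * F3 r) - β^(p-1) * DQ r
        ≤ r^(n-1:ℕ) * F1 r - β^p * (r^(n-1:ℕ) * F2 r) := by
      intro r hr
      have hr0 : (0:ℝ) < r := hr
      set b' : ℝ := -(β * φ r) / r with hb'def
      set a' : ℝ := deriv φ r + β * φ r / r with ha'def
      have hba : b' + a' = deriv φ r := by rw [hb'def, ha'def]; field_simp; ring
      have helem := elem hp2 hcle a' b'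
      rw [hba] at helem
      set Rw : ℝ := r ^ ((n:ℝ) - 1 - α*p) with hRwdef
      have hRw0 : 0 < Rw := rpow_pos_of_pos hr0 _
      have hmul := mul_le_mul_of_nonneg_right helem hRw0.le
      rw [add_mul, add_mul] at hmul
      have hrn : (r:ℝ)^(n-1:ℕ) = r ^ ((n:ℝ) - 1) := by
        rw [← Real.rpow_natCast r (n-1), Nat.cast_sub hn1, Nat.cast_one]
      have habs_b : |b'| = β * |φ r| * r ^ (-(1:ℝ)) := by
        rw [hb'def, abs_div, abs_neg, abs_mul, abs_of_nonneg hβ.le, abs_of_pos hr0,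
          Real.rpow_neg_one]
        ring
      have habs_w : w r = r ^ β * a' := by
        rw [hwdef, ha'def]
        simp only
        have h1 : r ^ (β - 1) = r ^ β * r⁻¹ := by
          rw [Real.rpow_sub hr0, Real.rpow_one, div_eq_mul_inv]
        rw [h1]
        field_simp
        ring
      have hψr : ψ r = r ^ β * φ r := by rw [hψdef]
      -- e1
      have e1 : |deriv φ r| ^ p * Rw = r^(n-1:ℕ) * F1 r := by
        rw [hF1, hRwdef, hrn]
        simp only
        rw [show (n:ℝ) - 1 - α*p = ((n:ℝ)-1) + (-(α*p)) by ring, Real.rpow_add hr0]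
        ring
      -- e2
      have hbp : |b'| ^ p = β^p * |φ r|^p * r ^ ((-(1:ℝ))*p) := by
        rw [habs_b, mul_rpow (by positivity) (rpow_nonneg hr0.le _),
          mul_rpow hβ.le (abs_nonneg _), ← Real.rpow_mul hr0.le]
      have m2s : r ^ ((-(1:ℝ))*p) * r ^ ((n:ℝ)-1-α*p) = r^((n:ℝ)-1) * r^(-((α+1)*p)) := by
        rw [← Real.rpow_add hr0, ← Real.rpow_add hr0]
        congr 1
        ring
      have e2 : |b'| ^ p * Rw = β^p * (r^(n-1:ℕ) * F2 r) := by
        rw [hbp, hF2, hRwdef, hrn]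
        simp only
        linear_combination (β^p * |φ r|^p) * m2s
      -- e3
      have eW : |w r| ^ p = r ^ (β*p) * |a'|^p := by
        have h1 : |w r| = r^β * |a'| := by
          rw [habs_w, abs_mul, abs_of_nonneg (rpow_nonneg hr0.le _)]
        rw [h1, mul_rpow (rpow_nonneg hr0.le _) (abs_nonneg _), ← Real.rpow_mul hr0.le]
      have m3s : r^((n:ℝ)-1) * (r^(β*p) * r^(p-(n:ℝ))) = r ^ ((n:ℝ)-1-α*p) := by
        rw [← Real.rpow_add hr0, ← Real.rpow_add hr0]
        congr 1
        linarith [hβp]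
      have e3 : c * |a'| ^ p * Rw = c * (r^(n-1:ℕ) * F3 r) := by
        rw [hF3, hRwdef, hrn]
        simp only
        rw [eW]
        linear_combination (c * |a'|^p) * m3s.symm
      -- e4
      have habsb2 : |b'| ^ (p-2) = β^(p-2) * |φ r|^(p-2) * r ^ ((-(1:ℝ))*(p-2)) := by
        rw [habs_b, mul_rpow (by positivity) (rpow_nonneg hr0.le _),
          mul_rpow hβ.le (abs_nonneg _), ← Real.rpow_mul hr0.le]
      have hb2 : b' = -(β * φ r) * r ^ (-(1:ℝ)) := by
        rw [hb'def, Real.rpow_neg_one]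
        ring
      have habs2 : ((ψ r)^(2:ℕ))^(p/2-1) = |ψ r|^(p-2) := by
        rw [← sq_abs, ← Real.rpow_natCast |ψ r| 2, ← Real.rpow_mul (abs_nonneg _)]
        congr 1
        ring
      have hψabs : |ψ r| ^ (p-2) = r ^ (β*(p-2)) * |φ r|^(p-2) := by
        have h1 : |ψ r| = r^β * |φ r| := by
          rw [hψr, abs_mul, abs_of_nonneg (rpow_nonneg hr0.le _)]
        rw [h1, mul_rpow (rpow_nonneg hr0.le _) (abs_nonneg _), ← Real.rpow_mul hr0.le]
      have hβ1 : β^(p-2) * β = β^(p-1) := by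
        rw [show p-1 = (p-2)+1 by ring, rpow_add_one hβ.ne']
      have m1s : r ^ ((-(1:ℝ))*(p-2)) * r^(-(1:ℝ)) * r^((n:ℝ)-1-α*p) = r ^ (β*p) := by
        rw [← Real.rpow_add hr0, ← Real.rpow_add hr0]
        congr 1
        linarith [hβp]
      have m2m : r ^ β * (r ^ β * r ^ (β*(p-2))) = r ^ (β*p) := by
        rw [← Real.rpow_add hr0, ← Real.rpow_add hr0]
        congr 1
        ring
      have left_eq : p * |b'|^(p-2) * b' * a' * Rw
          = (-(p) * β^(p-1) * |φ r|^(p-2) * φ r * a') * r^(β*p) := by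
        rw [habsb2, hb2, hRwdef]
        calc p * (β^(p-2) * |φ r|^(p-2) * r ^ ((-(1:ℝ))*(p-2))) * (-(β * φ r) * r ^ (-(1:ℝ))) * a'
              * r^((n:ℝ)-1-α*p)
            = (-(p) * (β^(p-2)*β) * |φ r|^(p-2) * φ r * a')
                * (r ^ ((-(1:ℝ))*(p-2)) * r^(-(1:ℝ)) * r^((n:ℝ)-1-α*p)) := by ring
          _ = (-(p) * β^(p-1) * |φ r|^(p-2) * φ r * a') * r^(β*p) := by rw [m1s, hβ1]
      have right_eq : -(β^(p-1)) * DQ r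
          = (-(p) * β^(p-1) * |φ r|^(p-2) * φ r * a') * r^(β*p) := by
        rw [hDQdef]
        simp only [pow_one]
        rw [habs2, hψabs, habs_w, hψr]
        calc -(β^(p-1)) * ((2:ℕ) * (r ^ β * φ r) * (r ^ β * a') * (p/2) * (r ^ (β*(p-2)) * |φ r|^(p-2)))
            = (-(p) * β^(p-1) * |φ r|^(p-2) * φ r * a') * (r ^ β * (r ^ β * r ^ (β*(p-2)))) := by
              push_cast
              ring
          _ = (-(p) * β^(p-1) * |φ r|^(p-2) * φ r * a') * r^(β*p) := by rw [m2m]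
      have e4 : p * |b'|^(p-2) * b' * a' * Rw = -(β^(p-1)) * DQ r := left_eq.trans right_eq.symm
      linarith [hmul, e1, e2, e3, e4]
    have hLint : IntegrableOn (fun r => c * (r^(n-1:ℕ)*F3 r) - β^(p-1) * DQ r) (Ioi 0) :=
      (hu3.const_mul c).sub (hDQint.const_mul _)
    have hRint : IntegrableOn (fun r => r^(n-1:ℕ)*F1 r - β^p * (r^(n-1:ℕ)*F2 r)) (Ioi 0) :=
      hu1.sub (hu2.const_mul _)
    have hle := setIntegral_mono_on hLint hRint measurableSet_Ioi hpoint
    rw [integral_sub (hu3.const_mul c) (hDQint.const_mul _), integral_sub hu1 (hu2.const_mul _),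
        integral_const_mul, integral_const_mul, integral_const_mul, hcross0, mul_zero, sub_zero] at hle
    exact hle
  rw [ge_iff_le, hI1, hI2, hI3, hconv F1, hconv F2, hconv F3, ← hJ1, ← hJ2, ← hJ3]
  have hnκ : 0 ≤ (n:ℝ) * κ := by positivity
  nlinarith [mul_le_mul_of_nonneg_left hmain hnκ]
end

section
/- Let m ≥ 2 and Q ≥ m + 1 be integers, and let R > 0. For every nonnegative radial function g ∈ C_0^1(B^m(0,R) \ {0}) define the radial function f on the unit ball of ℝ^Q by f(x) = g(s(|x|)), i.e. f takes at x the value of g on the sphere of radius s(|x|), where s(r) = R·exp(1 − r^{−(Q−m)/(m−1)}). Then ∫_{B^Q(0,1)} |∂f/∂r|^m dx − ((Q−m)/m)^m ∫_{B^Q(0,1)} |f|^m/|x|^m dx = (|σ_{Q−1}|/|σ_{m−1}|) · ((Q−m)/(m−1))^{m−1} · [∫_{B^m(0,R)} |∂g/∂s|^m dz − ((m−1)/m)^m ∫_{B^m(0,R)} |g|^m/(|z|^m (log(Re/|z|))^m) dz], where |σ_{Q−1}| and |σ_{m−1}| are the surface measures of the unit spheres in ℝ^Q and ℝ^m. -/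
open Real MeasureTheory Metric

theorem radial_fderiv {E : Type*} [NormedAddCommGroup E] [InnerProductSpace ℝ E]
    (φ : ℝ → ℝ) {x : E} (hx : x ≠ 0) {c : ℝ} (hφ : HasDerivAt φ c ‖x‖) :
    fderiv ℝ (fun y => φ ‖y‖) x (‖x‖⁻¹ • x) = c := by
  have hn : DifferentiableAt ℝ (fun y : E => ‖y‖) x :=
    ((contDiffAt_norm ℝ (n := 1) hx).differentiableAt one_ne_zero)
  have hF : HasFDerivAt (fun y : E => φ ‖y‖) (c • fderiv ℝ (fun y : E => ‖y‖) x) x :=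
    hφ.comp_hasFDerivAt x hn.hasFDerivAt
  rw [hF.fderiv]
  have h2 : fderiv ℝ (fun y : E => ‖y‖) x x = ‖x‖ := hn.fderiv_norm_self
  have hx' : ‖x‖ ≠ 0 := norm_ne_zero_iff.2 hx
  simp [ContinuousLinearMap.map_smul, h2]
  field_simp

theorem polar_euclidean (n : ℕ) (hn : 1 ≤ n) (F : ℝ → ℝ) :
    ∫ x : EuclideanSpace ℝ (Fin n), F ‖x‖ =
      (n : ℝ) * (volume (ball (0 : EuclideanSpace ℝ (Fin n)) 1)).toReal *
        ∫ r in Set.Ioi (0:ℝ), r ^ (n-1) * F r := by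
  haveI : Nontrivial (EuclideanSpace ℝ (Fin n)) :=
    Module.nontrivial_of_finrank_pos (R := ℝ) (by rw [finrank_euclideanSpace_fin]; omega)
  have := MeasureTheory.integral_fun_norm_addHaar
    (volume : Measure (EuclideanSpace ℝ (Fin n))) F
  rw [finrank_euclideanSpace_fin] at this
  rw [this, nsmul_eq_mul, smul_eq_mul, ← mul_assoc]
  simp only [smul_eq_mul]
  rfl

set_option maxHeartbeats 1000000 in
theorem key (m Q : ℕ) (hm : 2 ≤ m) (hQ : m + 1 ≤ Q) (R : ℝ) (hR : 0 < R)
    (gt : ℝ → ℝ)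
    (hg : ContDiff ℝ 1 (fun z : EuclideanSpace ℝ (Fin m) => gt ‖z‖))
    (hgsupp : HasCompactSupport (fun z : EuclideanSpace ℝ (Fin m) => gt ‖z‖))
    (hgball : tsupport (fun z : EuclideanSpace ℝ (Fin m) => gt ‖z‖) ⊆
      ball (0 : EuclideanSpace ℝ (Fin m)) R)
    (α : ℝ) (hα : α = ((Q : ℝ) - m) / ((m : ℝ) - 1))
    (s : ℝ → ℝ) (hs : s = fun r : ℝ => R * Real.exp (1 - r ^ (-α))) :
    (∫ x in ball (0 : EuclideanSpace ℝ (Fin Q)) 1,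
        |fderiv ℝ (fun x : EuclideanSpace ℝ (Fin Q) => gt (s ‖x‖)) x (‖x‖⁻¹ • x)| ^ (m : ℝ)) -
      (((Q : ℝ) - m) / m) ^ (m : ℝ) *
        ∫ x in ball (0 : EuclideanSpace ℝ (Fin Q)) 1,
          |gt (s ‖x‖)| ^ (m : ℝ) / ‖x‖ ^ (m : ℝ) =
    ((Q : ℝ) * (volume (ball (0 : EuclideanSpace ℝ (Fin Q)) 1)).toReal /
        ((m : ℝ) * (volume (ball (0 : EuclideanSpace ℝ (Fin m)) 1)).toReal)) *
      (((Q : ℝ) - m) / ((m : ℝ) - 1)) ^ ((m : ℝ) - 1) *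
      ((∫ z in ball (0 : EuclideanSpace ℝ (Fin m)) R,
          |fderiv ℝ (fun z : EuclideanSpace ℝ (Fin m) => gt ‖z‖) z (‖z‖⁻¹ • z)| ^ (m : ℝ)) -
        (((m : ℝ) - 1) / m) ^ (m : ℝ) *
          ∫ z in ball (0 : EuclideanSpace ℝ (Fin m)) R,
            |gt ‖z‖| ^ (m : ℝ) /
              (‖z‖ ^ (m : ℝ) * (Real.log (R * Real.exp 1 / ‖z‖)) ^ (m : ℝ))) := by
  classical
  have hm0 : 0 < m := by omega
  have hmR : (0:ℝ) < m := by exact_mod_cast hm0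
  have hmne : (m:ℝ) ≠ 0 := hmR.ne'
  have hm2 : (2:ℝ) ≤ (m:ℝ) := by exact_mod_cast hm
  have hm1 : (0:ℝ) < (m:ℝ) - 1 := by linarith
  have hQm : (0:ℝ) < (Q:ℝ) - (m:ℝ) := by
    have : ((m:ℝ) + 1) ≤ (Q:ℝ) := by exact_mod_cast hQ
    linarith
  have hαpos : 0 < α := by rw [hα]; positivity
  have hαm : α * ((m:ℝ) - 1) = (Q:ℝ) - m := by rw [hα]; field_simp
  have hspos : ∀ r : ℝ, 0 < s r := by intro r; rw [hs]; positivity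
  -- the derivative of s
  set s' : ℝ → ℝ := fun r => s r * (α * r ^ (-α - 1)) with hs'def
  have hs'pos : ∀ r : ℝ, 0 < r → 0 < s' r := by
    intro r hr
    have h1 : 0 < s r := hspos r
    have h2 : (0:ℝ) < r ^ (-α - 1) := Real.rpow_pos_of_pos hr _
    positivity
  have hsderiv : ∀ r : ℝ, 0 < r → HasDerivAt s (s' r) r := by
    intro r hr
    have h1 : HasDerivAt (fun u : ℝ => u ^ (-α)) (-α * r ^ (-α - 1)) r :=
      Real.hasDerivAt_rpow_const (Or.inl hr.ne')
    have h2 : HasDerivAt (fun u : ℝ => 1 - u ^ (-α)) (α * r ^ (-α - 1)) r := by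
      simpa using h1.const_sub 1
    have h3 := (Real.hasDerivAt_exp (1 - r ^ (-α))).comp r h2
    have h4 := h3.const_mul R
    rw [hs, hs'def]
    refine h4.congr_deriv ?_
    simp only [hs]
    ring
  -- monotonicity and image
  have hsmono : StrictMonoOn s (Set.Ioi (0:ℝ)) := by
    intro a ha b hb hab
    rw [hs]
    simp only
    have ha' : (0:ℝ) < a := ha
    have hb' : (0:ℝ) < b := hb
    have h1 : a ^ α < b ^ α := Real.rpow_lt_rpow ha'.le hab hαpos
    have h2 : b ^ (-α) < a ^ (-α) := by
      rw [Real.rpow_neg ha'.le, Real.rpow_neg hb'.le]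
      exact inv_strictAnti₀ (Real.rpow_pos_of_pos ha' α) h1
    have := Real.exp_lt_exp.2 (by linarith : 1 - a ^ (-α) < 1 - b ^ (-α))
    nlinarith [Real.exp_pos (1 - a ^ (-α))]
  have himage : s '' Set.Ioi (0:ℝ) = Set.Ioo 0 (R * Real.exp 1) := by
    apply Set.eq_of_subset_of_subset
    · rintro t ⟨r, hr, rfl⟩
      have hr' : (0:ℝ) < r := hr
      constructor
      · exact hspos r
      · rw [hs]
        simp only
        have h1 : (0:ℝ) < r ^ (-α) := Real.rpow_pos_of_pos hr' _
        have := Real.exp_lt_exp.2 (by linarith : 1 - r ^ (-α) < 1)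
        nlinarith
    · rintro t ⟨ht0, ht1⟩
      have htR : 0 < t / R := by positivity
      have hlog : Real.log (t / R) < 1 := by
        have : t / R < Real.exp 1 := by
          rw [div_lt_iff₀ hR]; linarith [ht1]
        calc Real.log (t / R) < Real.log (Real.exp 1) :=
              Real.log_lt_log htR this
          _ = 1 := Real.log_exp 1
      set β : ℝ := 1 - Real.log (t / R) with hβ
      have hβpos : 0 < β := by simp only [hβ]; linarith
      refine ⟨β ^ (-α⁻¹), Real.rpow_pos_of_pos hβpos _, ?_⟩
      rw [hs]
      simp only
      have hmain : (β ^ (-α⁻¹) : ℝ) ^ (-α) = β := by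
        rw [← Real.rpow_mul hβpos.le]
        rw [show -α⁻¹ * -α = 1 by field_simp, Real.rpow_one]
      rw [hmain]
      simp only [hβ]
      rw [show (1:ℝ) - (1 - Real.log (t/R)) = Real.log (t/R) by ring,
        Real.exp_log htR]
      field_simp
  -- support bound
  obtain ⟨R', hR'0, hR'R, hR'K⟩ :
      ∃ R' : ℝ, 0 ≤ R' ∧ R' < R ∧
        ∀ z : EuclideanSpace ℝ (Fin m), R' < ‖z‖ →
          z ∉ tsupport (fun z : EuclideanSpace ℝ (Fin m) => gt ‖z‖) := by
    by_cases hKe : tsupport (fun z : EuclideanSpace ℝ (Fin m) => gt ‖z‖) = ∅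
    · exact ⟨R / 2, by positivity, half_lt_self hR, fun z _ hz => by rw [hKe] at hz; exact hz⟩
    · obtain ⟨z₀, hz₀K, hmax⟩ := hgsupp.exists_isMaxOn (Set.nonempty_iff_ne_empty.2 hKe)
        (continuous_norm.continuousOn)
      refine ⟨‖z₀‖, norm_nonneg _, ?_, ?_⟩
      · have := hgball hz₀K; rwa [mem_ball, dist_zero_right] at this
      · intro z hz hzK
        exact absurd (hmax hzK) (not_le.2 hz)
  have hm0 : 0 < m := by omega
  set e₀ : EuclideanSpace ℝ (Fin m) := EuclideanSpace.single (⟨0, hm0⟩ : Fin m) (1:ℝ) with he₀def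
  have hnorm_smul : ∀ t : ℝ, 0 ≤ t → ‖t • e₀‖ = t := by
    intro t ht
    rw [norm_smul, he₀def, EuclideanSpace.norm_single, norm_one, mul_one,
      Real.norm_eq_abs, abs_of_nonneg ht]
  have hgt_zero : ∀ t : ℝ, R' < t → gt t = 0 := by
    intro t ht
    have ht0 : 0 ≤ t := le_trans hR'0 ht.le
    have hnm : (t • e₀) ∉ tsupport (fun z : EuclideanSpace ℝ (Fin m) => gt ‖z‖) :=
      hR'K _ (by rw [hnorm_smul t ht0]; exact ht)
    have h0 : gt ‖t • e₀‖ = 0 :=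
      image_eq_zero_of_notMem_tsupport (f := fun z : EuclideanSpace ℝ (Fin m) => gt ‖z‖) hnm
    rwa [hnorm_smul t ht0] at h0
  set d : ℝ → ℝ := deriv gt with hd
  have hgt_diff : ∀ t : ℝ, 0 < t → HasDerivAt gt (d t) t := by
    intro t ht
    have hF : Differentiable ℝ (fun z : EuclideanSpace ℝ (Fin m) => gt ‖z‖) :=
      hg.differentiable one_ne_zero
    have hsm : DifferentiableAt ℝ (fun u : ℝ => u • e₀) t :=
      (differentiable_id.smul_const e₀).differentiableAt
    have h1 : DifferentiableAt ℝ (fun u : ℝ => gt ‖u • e₀‖) t := (hF _).comp t hsm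
    have h2 : (fun u : ℝ => gt ‖u • e₀‖) =ᶠ[nhds t] gt := by
      filter_upwards [lt_mem_nhds ht] with u hu
      rw [hnorm_smul u hu.le]
    have h3 : DifferentiableAt ℝ gt t := (h1.congr_of_eventuallyEq h2.symm)
    exact h3.hasDerivAt
  have hd_zero : ∀ t : ℝ, R' < t → d t = 0 := by
    intro t ht
    have hev : gt =ᶠ[nhds t] (fun _ => (0:ℝ)) := by
      filter_upwards [lt_mem_nhds ht] with u hu
      exact hgt_zero u hu
    rw [hd, hev.deriv_eq, deriv_const]
  -- radial derivative of f
  have hradf : ∀ x : EuclideanSpace ℝ (Fin Q), x ≠ 0 →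
      fderiv ℝ (fun x : EuclideanSpace ℝ (Fin Q) => gt (s ‖x‖)) x (‖x‖⁻¹ • x)
        = d (s ‖x‖) * s' ‖x‖ := by
    intro x hx
    have hx0 : 0 < ‖x‖ := norm_pos_iff.2 hx
    have hcomp : HasDerivAt (fun r : ℝ => gt (s r)) (d (s ‖x‖) * s' ‖x‖) ‖x‖ :=
      (hgt_diff _ (hspos _)).comp _ (hsderiv _ hx0)
    exact radial_fderiv (fun r => gt (s r)) hx hcomp
  have hradF : ∀ z : EuclideanSpace ℝ (Fin m), z ≠ 0 →
      fderiv ℝ (fun z : EuclideanSpace ℝ (Fin m) => gt ‖z‖) z (‖z‖⁻¹ • z) = d ‖z‖ :=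
    fun z hz => radial_fderiv gt hz (hgt_diff _ (norm_pos_iff.2 hz))
  -- s is at least R for r ≥ 1
  have hsR : ∀ r : ℝ, 1 ≤ r → R ≤ s r := by
    intro r hr
    rw [hs]
    simp only
    have h1 : r ^ (-α) ≤ 1 :=
      Real.rpow_le_one_of_one_le_of_nonpos hr (by linarith)
    have h2 : (1:ℝ) ≤ Real.exp (1 - r ^ (-α)) := Real.one_le_exp (by linarith)
    nlinarith
  -- f vanishes (with derivative) outside the unit ball
  have hfz : ∀ x : EuclideanSpace ℝ (Fin Q), 1 ≤ ‖x‖ →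
      fderiv ℝ (fun x : EuclideanSpace ℝ (Fin Q) => gt (s ‖x‖)) x = 0 ∧ gt (s ‖x‖) = 0 := by
    intro x hx1
    have hx0 : (0:ℝ) < ‖x‖ := lt_of_lt_of_le one_pos hx1
    have hgtR : R' < s ‖x‖ := lt_of_lt_of_le hR'R (hsR ‖x‖ hx1)
    have hconts : ContinuousAt s ‖x‖ := by
      rw [hs]
      have hc1 : ContinuousAt (fun r : ℝ => r ^ (-α)) ‖x‖ :=
        Real.continuousAt_rpow_const _ _ (Or.inl hx0.ne')
      exact continuousAt_const.mul
        (Real.continuous_exp.continuousAt.comp (continuousAt_const.sub hc1))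
    have hcont : ContinuousAt (fun y : EuclideanSpace ℝ (Fin Q) => s ‖y‖) x :=
      hconts.comp continuous_norm.continuousAt
    have hev : ∀ᶠ y in nhds x, R' < s ‖y‖ :=
      hcont.eventually_mem (isOpen_Ioi.mem_nhds hgtR)
    have hev2 : (fun x : EuclideanSpace ℝ (Fin Q) => gt (s ‖x‖)) =ᶠ[nhds x]
        (fun _ => (0:ℝ)) := by
      filter_upwards [hev] with y hy
      exact hgt_zero _ hy
    refine ⟨?_, hgt_zero _ hgtR⟩
    rw [hev2.fderiv_eq]
    exact fderiv_const_apply 0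
  -- F vanishes (with derivative) outside ball R
  have hFz : ∀ z : EuclideanSpace ℝ (Fin m), z ∉ ball (0 : EuclideanSpace ℝ (Fin m)) R →
      fderiv ℝ (fun z : EuclideanSpace ℝ (Fin m) => gt ‖z‖) z = 0 ∧ gt ‖z‖ = 0 := by
    intro z hz
    have hzK : z ∉ tsupport (fun z : EuclideanSpace ℝ (Fin m) => gt ‖z‖) :=
      fun h => hz (hgball h)
    have hev : (fun z : EuclideanSpace ℝ (Fin m) => gt ‖z‖) =ᶠ[nhds z]
        (fun _ => (0:ℝ)) := by
      filter_upwards [(isClosed_tsupport _).isOpen_compl.mem_nhds hzK] with y hy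
      exact image_eq_zero_of_notMem_tsupport (f := fun z : EuclideanSpace ℝ (Fin m) => gt ‖z‖) hy
    exact ⟨by rw [hev.fderiv_eq]; exact fderiv_const_apply 0,
      image_eq_zero_of_notMem_tsupport (f := fun z : EuclideanSpace ℝ (Fin m) => gt ‖z‖) hzK⟩
  have he1 : (1:ℝ) < Real.exp 1 := by
    have := Real.exp_one_gt_d9; linarith
  have h0Re : (0:ℝ) < R * Real.exp 1 := by positivity
  have hRRe : R < R * Real.exp 1 := by nlinarith
  -- radial profiles
  set D : ℝ → ℝ := fun r => if r ≤ 0 then 0 else d (s r) * s' r with hD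
  set F₁ : ℝ → ℝ := fun r => |D r| ^ (m:ℝ) with hF₁def
  set F₂ : ℝ → ℝ := fun r => if r ≤ 0 then 0 else |gt (s r)| ^ (m:ℝ) / r ^ (m:ℝ) with hF₂def
  set G₁ : ℝ → ℝ := fun t => if t ≤ 0 then 0 else |d t| ^ (m:ℝ) with hG₁def
  set G₂ : ℝ → ℝ := fun t => if t ≤ 0 then 0 else
    |gt t| ^ (m:ℝ) / (t ^ (m:ℝ) * (Real.log (R * Real.exp 1 / t)) ^ (m:ℝ)) with hG₂def
  set VQ : ℝ := (volume (ball (0 : EuclideanSpace ℝ (Fin Q)) 1)).toReal with hVQdef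
  set Vm : ℝ := (volume (ball (0 : EuclideanSpace ℝ (Fin m)) 1)).toReal with hVmdef
  -- integral conversions
  have hI1 : (∫ x in ball (0 : EuclideanSpace ℝ (Fin Q)) 1,
      |fderiv ℝ (fun x : EuclideanSpace ℝ (Fin Q) => gt (s ‖x‖)) x (‖x‖⁻¹ • x)| ^ (m : ℝ))
      = (Q:ℝ) * VQ * ∫ r in Set.Ioi (0:ℝ), r ^ (Q-1) * F₁ r := by
    have hcompl : ∀ x ∉ ball (0 : EuclideanSpace ℝ (Fin Q)) 1,
        |fderiv ℝ (fun x : EuclideanSpace ℝ (Fin Q) => gt (s ‖x‖)) x (‖x‖⁻¹ • x)| ^ (m : ℝ)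
          = 0 := by
      intro x hx
      have hx1 : 1 ≤ ‖x‖ := not_lt.1 (by simpa [mem_ball_zero_iff] using hx)
      rw [(hfz x hx1).1]
      simp [Real.zero_rpow hmne]
    rw [setIntegral_eq_integral_of_forall_compl_eq_zero hcompl,
      ← polar_euclidean Q (by omega) F₁]
    apply integral_congr_ae
    filter_upwards with x
    by_cases hx : x = 0
    · subst hx
      simp [hF₁def, hD, Real.zero_rpow hmne, zero_pow (show m ≠ 0 by omega)]
    · rw [hradf x hx, hF₁def]
      simp only [hD]
      rw [if_neg (not_le.2 (norm_pos_iff.2 hx))]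
  have hI2 : (∫ x in ball (0 : EuclideanSpace ℝ (Fin Q)) 1,
        |gt (s ‖x‖)| ^ (m : ℝ) / ‖x‖ ^ (m : ℝ))
      = (Q:ℝ) * VQ * ∫ r in Set.Ioi (0:ℝ), r ^ (Q-1) * F₂ r := by
    have hcompl : ∀ x ∉ ball (0 : EuclideanSpace ℝ (Fin Q)) 1,
        |gt (s ‖x‖)| ^ (m : ℝ) / ‖x‖ ^ (m : ℝ) = 0 := by
      intro x hx
      have hx1 : 1 ≤ ‖x‖ := not_lt.1 (by simpa [mem_ball_zero_iff] using hx)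
      rw [(hfz x hx1).2]
      simp [Real.zero_rpow hmne]
    rw [setIntegral_eq_integral_of_forall_compl_eq_zero hcompl,
      ← polar_euclidean Q (by omega) F₂]
    apply integral_congr_ae
    filter_upwards with x
    by_cases hx : x = 0
    · subst hx
      simp [hF₂def, Real.zero_rpow hmne]
    · rw [hF₂def]
      simp only
      rw [if_neg (not_le.2 (norm_pos_iff.2 hx))]
  have hI3 : (∫ z in ball (0 : EuclideanSpace ℝ (Fin m)) R,
        |fderiv ℝ (fun z : EuclideanSpace ℝ (Fin m) => gt ‖z‖) z (‖z‖⁻¹ • z)| ^ (m : ℝ))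
      = (m:ℝ) * Vm * ∫ t in Set.Ioi (0:ℝ), t ^ (m-1) * G₁ t := by
    have hcompl : ∀ z ∉ ball (0 : EuclideanSpace ℝ (Fin m)) R,
        |fderiv ℝ (fun z : EuclideanSpace ℝ (Fin m) => gt ‖z‖) z (‖z‖⁻¹ • z)| ^ (m : ℝ)
          = 0 := by
      intro z hz
      rw [(hFz z hz).1]
      simp [Real.zero_rpow hmne]
    rw [setIntegral_eq_integral_of_forall_compl_eq_zero hcompl,
      ← polar_euclidean m (by omega) G₁]
    apply integral_congr_ae
    filter_upwards with z
    by_cases hz : z = 0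
    · subst hz
      simp [hG₁def, Real.zero_rpow hmne]
    · rw [hradF z hz, hG₁def]
      simp only
      rw [if_neg (not_le.2 (norm_pos_iff.2 hz))]
  have hI4 : (∫ z in ball (0 : EuclideanSpace ℝ (Fin m)) R,
        |gt ‖z‖| ^ (m : ℝ) /
          (‖z‖ ^ (m : ℝ) * (Real.log (R * Real.exp 1 / ‖z‖)) ^ (m : ℝ)))
      = (m:ℝ) * Vm * ∫ t in Set.Ioi (0:ℝ), t ^ (m-1) * G₂ t := by
    have hcompl : ∀ z ∉ ball (0 : EuclideanSpace ℝ (Fin m)) R,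
        |gt ‖z‖| ^ (m : ℝ) /
          (‖z‖ ^ (m : ℝ) * (Real.log (R * Real.exp 1 / ‖z‖)) ^ (m : ℝ)) = 0 := by
      intro z hz
      rw [(hFz z hz).2]
      simp [Real.zero_rpow hmne]
    rw [setIntegral_eq_integral_of_forall_compl_eq_zero hcompl,
      ← polar_euclidean m (by omega) G₂]
    apply integral_congr_ae
    filter_upwards with z
    by_cases hz : z = 0
    · subst hz
      simp [hG₂def, Real.zero_rpow hmne]
    · rw [hG₂def]
      simp only
      rw [if_neg (not_le.2 (norm_pos_iff.2 hz))]
  -- substitution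
  have hsub : ∀ H : ℝ → ℝ, (∀ t : ℝ, R * Real.exp 1 ≤ t → H t = 0) →
      ∫ t in Set.Ioi (0:ℝ), H t = ∫ r in Set.Ioi (0:ℝ), |s' r| * H (s r) := by
    intro H hH
    have heq : Set.EqOn H ((Set.Ioo (0:ℝ) (R * Real.exp 1)).indicator H) (Set.Ioi 0) := by
      intro t ht
      by_cases h : t < R * Real.exp 1
      · rw [Set.indicator_of_mem (Set.mem_Ioo.2 ⟨ht, h⟩)]
      · rw [Set.indicator_of_notMem (fun hc => h hc.2), hH t (not_lt.1 h)]
    rw [setIntegral_congr_fun measurableSet_Ioi heq,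
      setIntegral_indicator measurableSet_Ioo,
      Set.inter_eq_self_of_subset_right Set.Ioo_subset_Ioi_self,
      ← himage, integral_image_eq_integral_abs_deriv_smul measurableSet_Ioi
        (fun r hr => (hsderiv r hr).hasDerivWithinAt) (hsmono.injOn) H]
    simp only [smul_eq_mul]
  have hQ1 : (((Q - 1 : ℕ)) : ℝ) = (Q:ℝ) - 1 := by
    have : (1:ℕ) ≤ Q := by omega
    push_cast [this]
    ring
  have hm1' : (((m - 1 : ℕ)) : ℝ) = (m:ℝ) - 1 := by
    have : (1:ℕ) ≤ m := by omega
    push_cast [this]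
    ring
  -- pointwise identity 1
  have hP1 : ∫ r in Set.Ioi (0:ℝ), r ^ (Q-1) * F₁ r
      = α ^ (m-1) * ∫ t in Set.Ioi (0:ℝ), t ^ (m-1) * G₁ t := by
    have hvan : ∀ t : ℝ, R * Real.exp 1 ≤ t → t ^ (m-1) * G₁ t = 0 := by
      intro t ht
      have hRt : R' < t := by linarith
      rw [hG₁def]
      simp only
      rw [if_neg (not_le.2 (lt_of_le_of_lt hR'0 hRt)), hd_zero t hRt]
      simp [Real.zero_rpow hmne]
    rw [hsub _ hvan, ← integral_const_mul]
    apply setIntegral_congr_fun measurableSet_Ioi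
    intro r hr
    have hr0 : (0:ℝ) < r := hr
    have ha : (0:ℝ) < s r := hspos r
    have hb : (0:ℝ) < s' r := hs'pos r hr0
    have hrb : (0:ℝ) < r ^ (-α - 1) := Real.rpow_pos_of_pos hr0 _
    simp only [hF₁def, hD, hG₁def]
    rw [if_neg (not_le.2 hr0), if_neg (not_le.2 ha), abs_of_pos hb, abs_mul,
      abs_of_pos hb, Real.mul_rpow (abs_nonneg _) hb.le]
    -- scalar identity
    have hscalar : (r:ℝ) ^ (Q-1) * (s' r) ^ (m:ℝ) = α ^ (m-1) * s' r * (s r) ^ (m-1) := by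
      have e1 : (s' r) ^ (m:ℝ) = (s r) ^ (m:ℝ) * (α ^ (m:ℝ) * r ^ ((-α-1) * (m:ℝ))) := by
        simp only [hs'def]
        rw [Real.mul_rpow ha.le (by positivity), Real.mul_rpow hαpos.le hrb.le,
          ← Real.rpow_mul hr0.le]
      rw [e1, ← Real.rpow_natCast r (Q-1), ← Real.rpow_natCast (s r) (m-1),
        ← Real.rpow_natCast α (m-1), hQ1, hm1']
      have e2 : r ^ ((Q:ℝ)-1) * r ^ ((-α-1) * (m:ℝ)) = r ^ (-α-1) := by
        rw [← Real.rpow_add hr0]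
        congr 1
        linear_combination (-1:ℝ) * hαm
      have e3 : α ^ ((m:ℝ)-1) * α = α ^ (m:ℝ) := by
        rw [← Real.rpow_add_one hαpos.ne' ((m:ℝ)-1)]; norm_num
      have e4 : (s r) ^ ((m:ℝ)-1) * (s r) = (s r) ^ (m:ℝ) := by
        rw [← Real.rpow_add_one ha.ne' ((m:ℝ)-1)]; norm_num
      simp only [hs'def]
      rw [← e2, ← e3, ← e4]
      ring
    linear_combination (|d (s r)| ^ (m:ℝ)) * hscalar
  -- pointwise identity 2
  have hlog : ∀ r : ℝ, 0 < r → Real.log (R * Real.exp 1 / s r) = r ^ (-α) := by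
    intro r hr
    rw [hs]
    simp only
    rw [mul_div_mul_left _ _ hR.ne', ← Real.exp_sub,
      show (1 : ℝ) - (1 - r ^ (-α)) = r ^ (-α) by ring, Real.log_exp]
  have hP2 : ∫ r in Set.Ioi (0:ℝ), r ^ (Q-1) * F₂ r
      = α⁻¹ * ∫ t in Set.Ioi (0:ℝ), t ^ (m-1) * G₂ t := by
    have hvan : ∀ t : ℝ, R * Real.exp 1 ≤ t → t ^ (m-1) * G₂ t = 0 := by
      intro t ht
      have hRt : R' < t := by linarith
      rw [hG₂def]
      simp only
      rw [if_neg (not_le.2 (lt_of_le_of_lt hR'0 hRt)), hgt_zero t hRt]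
      simp [Real.zero_rpow hmne]
    rw [hsub _ hvan, ← integral_const_mul]
    apply setIntegral_congr_fun measurableSet_Ioi
    intro r hr
    have hr0 : (0:ℝ) < r := hr
    have ha : (0:ℝ) < s r := hspos r
    have hb : (0:ℝ) < s' r := hs'pos r hr0
    have hrb : (0:ℝ) < r ^ (-α - 1) := Real.rpow_pos_of_pos hr0 _
    have hra : (0:ℝ) < r ^ (-α) := Real.rpow_pos_of_pos hr0 _
    simp only [hF₂def, hG₂def]
    rw [if_neg (not_le.2 hr0), if_neg (not_le.2 ha), abs_of_pos hb, hlog r hr0]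
    -- scalar identity
    have hscalar : (r:ℝ) ^ (Q-1) / r ^ (m:ℝ)
        = α⁻¹ * s' r * ((s r) ^ (m-1) / ((s r) ^ (m:ℝ) * (r ^ (-α)) ^ (m:ℝ))) := by
      rw [← Real.rpow_natCast r (Q-1), ← Real.rpow_natCast (s r) (m-1), hQ1, hm1',
        ← Real.rpow_mul hr0.le]
      have hden : (0:ℝ) < (s r) ^ (m:ℝ) * r ^ ((-α) * (m:ℝ)) :=
        mul_pos (Real.rpow_pos_of_pos ha _) (Real.rpow_pos_of_pos hr0 _)
      have hM : (0:ℝ) < r ^ (m:ℝ) := Real.rpow_pos_of_pos hr0 _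
      have hre : α⁻¹ * s' r * ((s r) ^ ((m:ℝ)-1) / ((s r) ^ (m:ℝ) * r ^ ((-α) * (m:ℝ))))
          = (α⁻¹ * s' r * (s r) ^ ((m:ℝ)-1)) / ((s r) ^ (m:ℝ) * r ^ ((-α) * (m:ℝ))) := by
        ring
      rw [hre, div_eq_div_iff hM.ne' hden.ne']
      have eR : r ^ ((Q:ℝ)-1) * r ^ ((-α) * (m:ℝ)) = r ^ (-α-1) * r ^ (m:ℝ) := by
        rw [← Real.rpow_add hr0, ← Real.rpow_add hr0]
        congr 1
        linear_combination (-1:ℝ) * hαm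
      have e4 : (s r) ^ ((m:ℝ)-1) * (s r) = (s r) ^ (m:ℝ) := by
        rw [← Real.rpow_add_one ha.ne' ((m:ℝ)-1)]; norm_num
      have einv : α⁻¹ * α = 1 := inv_mul_cancel₀ hαpos.ne'
      simp only [hs'def]
      linear_combination ((s r) ^ (m:ℝ)) * eR - (r ^ (-α-1) * r ^ (m:ℝ)) * e4
        - (r ^ (-α-1) * r ^ (m:ℝ) * (s r) ^ ((m:ℝ)-1) * (s r)) * einv
    linear_combination (|gt (s r)| ^ (m:ℝ)) * hscalar
  -- assemble
  rw [hI1, hI2, hI3, hI4, hP1, hP2, ← hα]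
  have hVQ : 0 < VQ := by
    rw [hVQdef]
    exact ENNReal.toReal_pos (measure_ball_pos volume _ one_pos).ne' measure_ball_lt_top.ne
  have hVm : 0 < Vm := by
    rw [hVmdef]
    exact ENNReal.toReal_pos (measure_ball_pos volume _ one_pos).ne' measure_ball_lt_top.ne
  have hαm1 : α ^ ((m:ℝ) - 1) = α ^ (m - 1 : ℕ) := by
    rw [← Real.rpow_natCast α (m-1), hm1']
  have hcm : ((Q:ℝ) - m) / m = α * (((m:ℝ)-1)/m) := by
    rw [← hαm]; field_simp
  have hcmp : (((Q:ℝ) - m) / m) ^ (m:ℝ) = α ^ (m:ℝ) * (((m:ℝ)-1)/m) ^ (m:ℝ) := by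
    rw [hcm, Real.mul_rpow hαpos.le (by positivity)]
  have hαα : α ^ (m:ℝ) * α⁻¹ = α ^ ((m:ℝ) - 1) := by
    rw [Real.rpow_sub hαpos, Real.rpow_one, div_eq_mul_inv]
  rw [hcmp, hαm1]
  set J1 := ∫ t in Set.Ioi (0:ℝ), t ^ (m-1) * G₁ t with hJ1
  set J2 := ∫ t in Set.Ioi (0:ℝ), t ^ (m-1) * G₂ t with hJ2
  have hαα' : α ^ (m:ℝ) * α⁻¹ = α ^ (m - 1 : ℕ) := by rw [hαα, hαm1]
  clear_value VQ Vm J1 J2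
  have hmVm : (m:ℝ) * Vm ≠ 0 := by positivity
  have hL : (α ^ (m:ℝ) * (((m:ℝ)-1)/m) ^ (m:ℝ)) * ((Q:ℝ) * VQ * (α⁻¹ * J2))
      = (((m:ℝ)-1)/m) ^ (m:ℝ) * ((Q:ℝ) * VQ * (α ^ (m - 1 : ℕ) * J2)) := by
    linear_combination ((Q:ℝ) * VQ * (((m:ℝ)-1)/m) ^ (m:ℝ) * J2) * hαα'
  rw [hL]
  generalize (((m:ℝ)-1)/m) ^ (m:ℝ) = cmE
  generalize α ^ (m - 1 : ℕ) = A
  field_simp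

theorem stmt_19 (m Q : ℕ) (hm : 2 ≤ m) (hQ : m + 1 ≤ Q) (R : ℝ) (hR : 0 < R)
    (gt : ℝ → ℝ)
    (hg : ContDiff ℝ 1 (fun z : EuclideanSpace ℝ (Fin m) => gt ‖z‖))
    (hgsupp : HasCompactSupport (fun z : EuclideanSpace ℝ (Fin m) => gt ‖z‖))
    (hgball : tsupport (fun z : EuclideanSpace ℝ (Fin m) => gt ‖z‖) ⊆
      ball (0 : EuclideanSpace ℝ (Fin m)) R)
    (hg0 : (0 : EuclideanSpace ℝ (Fin m)) ∉
      tsupport (fun z : EuclideanSpace ℝ (Fin m) => gt ‖z‖))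
    (hgnonneg : ∀ z : EuclideanSpace ℝ (Fin m), 0 ≤ gt ‖z‖) :
    ∃ f : EuclideanSpace ℝ (Fin Q) → ℝ,
      (∀ x, 0 ≤ f x) ∧
      (∀ x : EuclideanSpace ℝ (Fin Q),
        f x = gt (R * Real.exp (1 - ‖x‖ ^ (-(((Q : ℝ) - m) / ((m : ℝ) - 1)))))) ∧
      (∫ x in ball (0 : EuclideanSpace ℝ (Fin Q)) 1,
          |fderiv ℝ f x (‖x‖⁻¹ • x)| ^ (m : ℝ)) -
        (((Q : ℝ) - m) / m) ^ (m : ℝ) *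
          ∫ x in ball (0 : EuclideanSpace ℝ (Fin Q)) 1, |f x| ^ (m : ℝ) / ‖x‖ ^ (m : ℝ) =
      ((Q : ℝ) * (volume (ball (0 : EuclideanSpace ℝ (Fin Q)) 1)).toReal /
          ((m : ℝ) * (volume (ball (0 : EuclideanSpace ℝ (Fin m)) 1)).toReal)) *
        (((Q : ℝ) - m) / ((m : ℝ) - 1)) ^ ((m : ℝ) - 1) *
        ((∫ z in ball (0 : EuclideanSpace ℝ (Fin m)) R,
            |fderiv ℝ (fun z : EuclideanSpace ℝ (Fin m) => gt ‖z‖) z (‖z‖⁻¹ • z)| ^ (m : ℝ)) -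
          (((m : ℝ) - 1) / m) ^ (m : ℝ) *
            ∫ z in ball (0 : EuclideanSpace ℝ (Fin m)) R,
              |gt ‖z‖| ^ (m : ℝ) /
                (‖z‖ ^ (m : ℝ) * (Real.log (R * Real.exp 1 / ‖z‖)) ^ (m : ℝ))) := by
  have hm0 : 0 < m := by omega
  refine ⟨fun x => gt (R * Real.exp (1 - ‖x‖ ^ (-(((Q : ℝ) - m) / ((m : ℝ) - 1))))),
    ?_, fun x => rfl, ?_⟩
  · intro x
    set c : ℝ := R * Real.exp (1 - ‖x‖ ^ (-(((Q : ℝ) - m) / ((m : ℝ) - 1)))) with hc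
    have hc0 : 0 ≤ c := by positivity
    have := hgnonneg (c • EuclideanSpace.single (⟨0, hm0⟩ : Fin m) (1:ℝ))
    rwa [norm_smul, EuclideanSpace.norm_single, norm_one, mul_one, Real.norm_eq_abs,
      abs_of_nonneg hc0] at this
  · exact key m Q hm hQ R hR gt hg hgsupp hgball _ rfl _ rfl
end
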